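/- arXiv:1906.05110 — 10 statements merged into one kernel-verified Lean document; each statement's English description precedes it below -/
import Mathlib

section
/- Let N ≥ 1 and let x_1, x_2, ..., x_N be positive real numbers with x_1 = 1 and x_n ≤ Σ_{i=1}^{n-1} x_i for every 2 ≤ n ≤ N. Then for every real α with 0 < α < 1 one has x_1 + Σ_{n=2}^{N} x_n · (Σ_{i=1}^{n-1} x_i)^{-α} ≤ (2^α / (1 − α)) · (Σ_{n=1}^{N} x_n)^{1−α}. -/
open Real Finset

lemma key_step {a t α : ℝ} (ha : 0 < a) (ht : 0 < t) (hta : t ≤ a)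
    (hα0 : 0 < α) (hα1 : α < 1) :
    t * a ^ (-α) ≤ (2 ^ α / (1 - α)) * ((a + t) ^ (1 - α) - a ^ (1 - α)) := by
  set b := a + t with hbdef
  have hb : 0 < b := by positivity
  have hab : a ≤ b := by linarith
  have h1α : (0:ℝ) < 1 - α := by linarith
  -- Bernoulli: (1 - t/b)^(1-α) ≤ 1 - (1-α) * (t/b)
  have hs : (-1:ℝ) ≤ -(t/b) := by
    have : t / b ≤ 1 := by
      rw [div_le_one hb]; linarith
    linarith
  have hber := rpow_one_add_le_one_add_mul_self hs (le_of_lt h1α) (by linarith)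
  have h1s : 1 + -(t/b) = a / b := by
    rw [hbdef]; field_simp; ring
  rw [h1s] at hber
  -- multiply by b^(1-α)
  have hbpow : (0:ℝ) < b ^ (1 - α) := rpow_pos_of_pos hb _
  have hdiv : (a / b) ^ (1 - α) = a ^ (1 - α) / b ^ (1 - α) :=
    Real.div_rpow ha.le hb.le (1 - α)
  have h2 : a ^ (1 - α) ≤ (1 + (1 - α) * -(t / b)) * b ^ (1 - α) := by
    rw [hdiv] at hber
    calc a ^ (1 - α) = a ^ (1 - α) / b ^ (1 - α) * b ^ (1 - α) := by
          field_simp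
      _ ≤ (1 + (1 - α) * -(t / b)) * b ^ (1 - α) := by
          exact mul_le_mul_of_nonneg_right hber hbpow.le
  have hbneg : b ^ (1 - α) / b = b ^ (-α) := by
    rw [Real.rpow_sub hb, Real.rpow_one, Real.rpow_neg hb.le]
    field_simp
  have h3 : (1 - α) * t * b ^ (-α) ≤ b ^ (1 - α) - a ^ (1 - α) := by
    have : (1 + (1 - α) * -(t / b)) * b ^ (1 - α)
        = b ^ (1 - α) - (1 - α) * t * (b ^ (1 - α) / b) := by
      field_simp; ring
    rw [this, hbneg] at h2
    linarith
  -- b^(−α) ≥ (2a)^(−α) = 2^(−α) a^(−α)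
  have hb2a : b ≤ 2 * a := by linarith
  have h4 : (2 * a) ^ (-α) ≤ b ^ (-α) :=
    Real.rpow_le_rpow_of_nonpos hb hb2a (by linarith)
  have h5 : (2 * a) ^ (-α) = 2 ^ (-α) * a ^ (-α) :=
    Real.mul_rpow (by norm_num) ha.le
  have h6 : (1 - α) * t * (2 ^ (-α) * a ^ (-α)) ≤ b ^ (1 - α) - a ^ (1 - α) := by
    have hapow : (0:ℝ) < a ^ (-α) := rpow_pos_of_pos ha _
    have := mul_le_mul_of_nonneg_left (h5 ▸ h4) (by positivity : (0:ℝ) ≤ (1 - α) * t)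
    linarith [h3]
  have h2α : (0:ℝ) < 2 ^ α := rpow_pos_of_pos (by norm_num) _
  have hprod : (2:ℝ) ^ α * 2 ^ (-α) = 1 := by
    rw [← Real.rpow_add (by norm_num)]; simp
  have heq : 2 ^ α / (1 - α) * ((1 - α) * t * (2 ^ (-α) * a ^ (-α))) = t * a ^ (-α) := by
    field_simp
    linear_combination hprod
  calc t * a ^ (-α) = 2 ^ α / (1 - α) * ((1 - α) * t * (2 ^ (-α) * a ^ (-α))) := heq.symm
    _ ≤ 2 ^ α / (1 - α) * (b ^ (1 - α) - a ^ (1 - α)) :=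
        mul_le_mul_of_nonneg_left h6 (by positivity)

/-- Lemma B.6 of the paper (case `0 < α < 1`): for a sequence of positive reals
`x 1, ..., x N` with `x 1 = 1` and `x n ≤ ∑_{i=1}^{n-1} x i` for `2 ≤ n ≤ N`, we have
`x 1 + ∑_{n=2}^{N} x n * (∑_{i=1}^{n-1} x i)^(-α) ≤ (2^α / (1-α)) * (∑_{n=1}^{N} x n)^(1-α)`. -/
theorem stmt0 (N : ℕ) (hN : 1 ≤ N) (x : ℕ → ℝ)
    (hpos : ∀ n ∈ Finset.Icc 1 N, 0 < x n)
    (hx1 : x 1 = 1)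
    (hdom : ∀ n, 2 ≤ n → n ≤ N → x n ≤ ∑ i ∈ Finset.Icc 1 (n - 1), x i)
    (α : ℝ) (hα0 : 0 < α) (hα1 : α < 1) :
    x 1 + ∑ n ∈ Finset.Icc 2 N, x n * (∑ i ∈ Finset.Icc 1 (n - 1), x i) ^ (-α)
      ≤ (2 ^ α / (1 - α)) * (∑ n ∈ Finset.Icc 1 N, x n) ^ (1 - α) := by
  have h1α : (0:ℝ) < 1 - α := by linarith
  have h2α : (1:ℝ) ≤ 2 ^ α := Real.one_le_rpow (by norm_num) hα0.le
  revert hpos hdom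
  induction N, hN using Nat.le_induction with
  | base =>
    intro hpos hdom
    simp only [show Finset.Icc 2 1 = (∅ : Finset ℕ) by decide, Finset.sum_empty,
      Finset.Icc_self, Finset.sum_singleton, hx1, add_zero, Real.one_rpow, mul_one]
    rw [le_div_iff₀ h1α]
    linarith
  | succ N hN ih =>
    intro hpos hdom
    have hpos' : ∀ n ∈ Finset.Icc 1 N, 0 < x n := fun n hn => by
      apply hpos; simp at hn ⊢; omega
    have hdom' : ∀ n, 2 ≤ n → n ≤ N → x n ≤ ∑ i ∈ Finset.Icc 1 (n - 1), x i :=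
      fun n h2 hn => hdom n h2 (by omega)
    have IH := ih hpos' hdom'
    have hS : (0:ℝ) < ∑ i ∈ Finset.Icc 1 N, x i :=
      Finset.sum_pos hpos' ⟨1, by simp [hN]⟩
    have ht : 0 < x (N + 1) := hpos _ (by simp)
    have hta : x (N + 1) ≤ ∑ i ∈ Finset.Icc 1 N, x i := by
      have := hdom (N + 1) (by omega) le_rfl
      simpa using this
    rw [Finset.sum_Icc_succ_top (by omega : 2 ≤ N + 1),
      Finset.sum_Icc_succ_top (by omega : 1 ≤ N + 1)]
    simp only [Nat.add_sub_cancel]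
    have hkey := key_step hS ht hta hα0 hα1
    linarith
end

section
/- Let N ≥ 1 and let x_1, x_2, ..., x_N be positive real numbers with x_1 = 1 and x_n ≤ Σ_{i=1}^{n-1} x_i for every 2 ≤ n ≤ N. Then x_1 + Σ_{n=2}^{N} x_n · (Σ_{i=1}^{n-1} x_i)^{-1} ≤ 1 + 2·log(Σ_{n=1}^{N} x_n). -/
lemma half_le_log {t : ℝ} (h0 : 0 ≤ t) (h1 : t ≤ 1) : t / 2 ≤ Real.log (1 + t) := by
  rw [Real.le_log_iff_exp_le (by linarith)]
  have hpos : 0 < 1 - t / 2 := by linarith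
  have h2 : 1 - t / 2 ≤ Real.exp (-(t / 2)) := by
    have := Real.add_one_le_exp (-(t / 2)); linarith
  have h3 : Real.exp (t / 2) ≤ (1 - t / 2)⁻¹ := by
    rw [show Real.exp (t / 2) = (Real.exp (-(t / 2)))⁻¹ by rw [Real.exp_neg]; simp]
    exact inv_anti₀ hpos h2
  refine h3.trans ?_
  have h4 : (1 - t / 2) * (1 + t) ≥ 1 := by nlinarith
  calc (1 - t / 2)⁻¹ ≤ (1 - t / 2)⁻¹ * ((1 - t / 2) * (1 + t)) := by
        nlinarith [inv_pos.mpr hpos]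
    _ = 1 + t := inv_mul_cancel_left₀ (ne_of_gt hpos) _

/-- Lemma B.6 of the paper (case `α = 1`): for a sequence of positive reals
`x 1, ..., x N` with `x 1 = 1` and `x n ≤ ∑_{i=1}^{n-1} x i` for `2 ≤ n ≤ N`, we have
`x 1 + ∑_{n=2}^{N} x n * (∑_{i=1}^{n-1} x i)⁻¹ ≤ 1 + 2 * log (∑_{n=1}^{N} x n)`. -/
theorem stmt1 (N : ℕ) (hN : 1 ≤ N) (x : ℕ → ℝ)
    (hpos : ∀ n ∈ Finset.Icc 1 N, 0 < x n)
    (hx1 : x 1 = 1)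
    (hdom : ∀ n, 2 ≤ n → n ≤ N → x n ≤ ∑ i ∈ Finset.Icc 1 (n - 1), x i) :
    x 1 + ∑ n ∈ Finset.Icc 2 N, x n * (∑ i ∈ Finset.Icc 1 (n - 1), x i)⁻¹
      ≤ 1 + 2 * Real.log (∑ n ∈ Finset.Icc 1 N, x n) := by
  induction N, hN using Nat.le_induction with
  | base => simp [hx1]
  | succ N hN ih =>
    have hposN : ∀ n ∈ Finset.Icc 1 N, 0 < x n := by
      intro n hn
      rw [Finset.mem_Icc] at hn
      exact hpos n (Finset.mem_Icc.mpr ⟨hn.1, hn.2.trans (Nat.le_succ N)⟩)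
    have hdomN : ∀ n, 2 ≤ n → n ≤ N → x n ≤ ∑ i ∈ Finset.Icc 1 (n - 1), x i :=
      fun n h2 hn => hdom n h2 (hn.trans (Nat.le_succ N))
    have IH := ih hposN hdomN
    set S := ∑ i ∈ Finset.Icc 1 N, x i with hSdef
    have hS : 0 < S := by
      apply Finset.sum_pos hposN ⟨1, Finset.mem_Icc.mpr ⟨le_refl 1, hN⟩⟩
    have hxN1 : 0 < x (N + 1) :=
      hpos (N + 1) (Finset.mem_Icc.mpr ⟨by omega, le_refl _⟩)
    have hxle : x (N + 1) ≤ S := by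
      have := hdom (N + 1) (by omega) le_rfl
      simpa using this
    have hsplit2 : ∑ n ∈ Finset.Icc 2 (N + 1), x n * (∑ i ∈ Finset.Icc 1 (n - 1), x i)⁻¹
        = (∑ n ∈ Finset.Icc 2 N, x n * (∑ i ∈ Finset.Icc 1 (n - 1), x i)⁻¹)
          + x (N + 1) * S⁻¹ := by
      rw [Finset.sum_Icc_succ_top (by omega : 2 ≤ N + 1)]
      simp
      left; rfl
    have hsplit1 : ∑ n ∈ Finset.Icc 1 (N + 1), x n = S + x (N + 1) :=
      Finset.sum_Icc_succ_top (by omega : 1 ≤ N + 1) x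
    rw [hsplit1, hsplit2]
    set t : ℝ := x (N + 1) / S with htdef
    have ht0 : 0 ≤ t := le_of_lt (div_pos hxN1 hS)
    have ht1 : t ≤ 1 := (div_le_one hS).mpr hxle
    have hlogsplit : Real.log (S + x (N + 1)) = Real.log S + Real.log (1 + t) := by
      have : S + x (N + 1) = S * (1 + t) := by
        rw [htdef, mul_add, mul_one, mul_div_cancel₀ (x (N + 1)) (ne_of_gt hS)]
      rw [this, Real.log_mul (ne_of_gt hS) (by linarith)]
    have hkey : x (N + 1) * S⁻¹ ≤ 2 * Real.log (1 + t) := by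
      have hhl := half_le_log ht0 ht1
      have h2t : t ≤ 2 * Real.log (1 + t) := by linarith
      calc x (N + 1) * S⁻¹ = t := by rw [htdef, div_eq_mul_inv]
        _ ≤ _ := h2t
    rw [hlogsplit]
    linarith
end

section
/- Let m ≥ 1 and, for each j ∈ {1,...,m}, let x_{j,1}, ..., x_{j,N_j} be positive real numbers with x_{j,1} = 1 and x_{j,n} ≤ Σ_{i=1}^{n-1} x_{j,i} for every 2 ≤ n ≤ N_j. Let T = Σ_{j=1}^{m} Σ_{n=1}^{N_j} x_{j,n}. Then Σ_{j=1}^{m} ( x_{j,1} + Σ_{n=2}^{N_j} x_{j,n} · (Σ_{i=1}^{n-1} x_{j,i})^{-1} ) ≤ m + 2m·log(T/m). -/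
open Finset Real

-- key: for 0 < s, 0 < y ≤ s, y/s ≤ 2(log(s+y) - log s)
lemma key_ratio (s y : ℝ) (hs : 0 < s) (hy : 0 < y) (hys : y ≤ s) :
    y * s⁻¹ ≤ 2 * (Real.log (s + y) - Real.log s) := by
  have hsy : (0:ℝ) < s + y := by linarith
  have h1 : Real.log (s + y) - Real.log s = Real.log ((s+y)/s) := by
    rw [Real.log_div (by positivity) (ne_of_gt hs)]
  have h2 : Real.log (s/(s+y)) ≤ s/(s+y) - 1 := Real.log_le_sub_one_of_pos (by positivity)
  have h3 : Real.log (s/(s+y)) = - Real.log ((s+y)/s) := by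
    rw [Real.log_div (ne_of_gt hs) (ne_of_gt hsy), Real.log_div (ne_of_gt hsy) (ne_of_gt hs)]
    ring
  have h4 : 1 - s/(s+y) ≤ Real.log ((s+y)/s) := by linarith [h3 ▸ h2]
  have h5 : 1 - s/(s+y) = y/(s+y) := by field_simp; ring
  have h6 : y * s⁻¹ ≤ 2 * (y/(s+y)) := by
    rw [← div_eq_mul_inv, mul_div_assoc', div_le_div_iff₀ hs hsy]
    nlinarith
  calc y * s⁻¹ ≤ 2 * (y/(s+y)) := h6
    _ ≤ 2 * Real.log ((s+y)/s) := by linarith [h4, h5]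
    _ = 2 * (Real.log (s + y) - Real.log s) := by rw [h1]

lemma single (x : ℕ → ℝ) : ∀ N : ℕ, 1 ≤ N → (∀ n ∈ Finset.Icc 1 N, 0 < x n) → x 1 = 1 →
    (∀ n, 2 ≤ n → n ≤ N → x n ≤ ∑ i ∈ Finset.Icc 1 (n-1), x i) →
    x 1 + ∑ n ∈ Finset.Icc 2 N, x n * (∑ i ∈ Finset.Icc 1 (n-1), x i)⁻¹
      ≤ 1 + 2 * Real.log (∑ n ∈ Finset.Icc 1 N, x n) := by
  intro N
  induction N with
  | zero => omega
  | succ N ih =>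
    intro _ hpos hx1 hdom
    rcases Nat.eq_zero_or_pos N with h0 | h1
    · subst h0
      simp [hx1]
    · have ihap := ih h1 (fun n hn => hpos n (by simp at hn ⊢; omega))
        hx1 (fun n h2 hN => hdom n h2 (by omega))
      have hS : 0 < ∑ n ∈ Finset.Icc 1 N, x n := by
        apply Finset.sum_pos (fun n hn => hpos n (by simp at hn ⊢; omega))
        exact ⟨1, by simp; omega⟩
      have hxN : 0 < x (N+1) := hpos (N+1) (by simp)
      have hd : x (N+1) ≤ ∑ i ∈ Finset.Icc 1 N, x i := by
        have := hdom (N+1) (by omega) (le_refl _)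
        simpa using this
      rw [Finset.sum_Icc_succ_top (by omega : 2 ≤ N + 1),
        Finset.sum_Icc_succ_top (by omega : 1 ≤ N + 1)]
      have hkey := key_ratio (∑ i ∈ Finset.Icc 1 N, x i) (x (N+1)) hS hxN hd
      simp only [Nat.add_sub_cancel]
      linarith



/-- Inequality (4.2) of the paper: combining Lemma B.6 (case `α = 1`) with Jensen's
inequality over `m` sequences, each positive with first term `1` and each term dominated by
the sum of the previous terms, yields
`∑_j (x j 1 + ∑_{n=2}^{N j} x j n * (∑_{i=1}^{n-1} x j i)⁻¹) ≤ m + 2m * log (T/m)`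
where `T` is the total sum. -/
theorem stmt5 (m : ℕ) (hm : 1 ≤ m) (N : ℕ → ℕ) (hN : ∀ j ∈ Finset.Icc 1 m, 1 ≤ N j)
    (x : ℕ → ℕ → ℝ)
    (hpos : ∀ j ∈ Finset.Icc 1 m, ∀ n ∈ Finset.Icc 1 (N j), 0 < x j n)
    (hx1 : ∀ j ∈ Finset.Icc 1 m, x j 1 = 1)
    (hdom : ∀ j ∈ Finset.Icc 1 m, ∀ n, 2 ≤ n → n ≤ N j →
      x j n ≤ ∑ i ∈ Finset.Icc 1 (n - 1), x j i)
    (T : ℝ) (hT : T = ∑ j ∈ Finset.Icc 1 m, ∑ n ∈ Finset.Icc 1 (N j), x j n) :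
    ∑ j ∈ Finset.Icc 1 m,
        (x j 1 + ∑ n ∈ Finset.Icc 2 (N j), x j n * (∑ i ∈ Finset.Icc 1 (n - 1), x j i)⁻¹)
      ≤ m + 2 * m * Real.log (T / m) := by
  set Tj : ℕ → ℝ := fun j => ∑ n ∈ Finset.Icc 1 (N j), x j n with hTj
  have hTj1 : ∀ j ∈ Finset.Icc 1 m, (1:ℝ) ≤ Tj j := by
    intro j hj
    have := Finset.single_le_sum (f := fun n => x j n)
      (fun n hn => (hpos j hj n hn).le) (by simp [hN j hj] : 1 ∈ Finset.Icc 1 (N j))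
    rw [hTj]
    simpa [hx1 j hj] using this
  have hTm : (m:ℝ) ≤ T := by
    rw [hT]
    calc (m:ℝ) = ∑ _j ∈ Finset.Icc 1 m, (1:ℝ) := by simp
      _ ≤ _ := Finset.sum_le_sum hTj1
  have hmpos : (0:ℝ) < m := by exact_mod_cast hm
  have hTpos : 0 < T := lt_of_lt_of_le hmpos hTm
  have hTmpos : 0 < T / m := by positivity
  have step1 : ∑ j ∈ Finset.Icc 1 m,
        (x j 1 + ∑ n ∈ Finset.Icc 2 (N j), x j n * (∑ i ∈ Finset.Icc 1 (n - 1), x j i)⁻¹)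
      ≤ ∑ j ∈ Finset.Icc 1 m, (1 + 2 * Real.log (Tj j)) := by
    apply Finset.sum_le_sum
    intro j hj
    exact single (x j) (N j) (hN j hj) (hpos j hj) (hx1 j hj) (hdom j hj)
  have step2 : ∀ j ∈ Finset.Icc 1 m, Real.log (Tj j) ≤ Real.log (T/m) + (Tj j * (m/T) - 1) := by
    intro j hj
    have hTjpos : 0 < Tj j := lt_of_lt_of_le one_pos (hTj1 j hj)
    have h := Real.log_le_sub_one_of_pos (show 0 < Tj j / (T/m) by positivity)
    rw [Real.log_div (ne_of_gt hTjpos) (ne_of_gt hTmpos)] at h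
    have : Tj j / (T/m) = Tj j * (m/T) := by
      field_simp
    linarith [this ▸ h]
  have step3 : ∑ j ∈ Finset.Icc 1 m, Real.log (Tj j) ≤ m * Real.log (T/m) := by
    calc ∑ j ∈ Finset.Icc 1 m, Real.log (Tj j)
        ≤ ∑ j ∈ Finset.Icc 1 m, (Real.log (T/m) + (Tj j * (m/T) - 1)) :=
          Finset.sum_le_sum step2
      _ = m * Real.log (T/m) + ((∑ j ∈ Finset.Icc 1 m, Tj j) * (m/T) - m) := by
          rw [Finset.sum_add_distrib, Finset.sum_sub_distrib, ← Finset.sum_mul]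
          simp [mul_comm]
      _ = m * Real.log (T/m) := by
          rw [← hT]
          field_simp; ring
  calc _ ≤ ∑ j ∈ Finset.Icc 1 m, (1 + 2 * Real.log (Tj j)) := step1
    _ = m + 2 * ∑ j ∈ Finset.Icc 1 m, Real.log (Tj j) := by
        rw [Finset.sum_add_distrib, ← Finset.mul_sum]
        simp
    _ ≤ m + 2 * (m * Real.log (T/m)) := by linarith
    _ = m + 2 * m * Real.log (T/m) := by ring
end

section
/- Let S ≥ 1 and n ≥ 1 be integers and let X_1, ..., X_n be i.i.d. random variables, each uniformly distributed on the finite set {1,...,S}. For each i ∈ {1,...,S} let p̂_i = (1/n)·|{k ∈ {1,...,n} : X_k = i}| denote the empirical frequency of i. Then E[ Σ_{i=1}^{S} |p̂_i − 1/S| ] ≥ (1 − 1/S)^n. -/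
open MeasureTheory ProbabilityTheory

/-- Appendix A of the paper (refuting Lemma C.2 of Agrawal & Jia 2017): if `X 1, ..., X n`
are i.i.d. uniform on a set with `S` elements and `p̂ i` denotes the empirical frequency of `i`,
then `E[∑ i, |p̂ i - 1/S|] ≥ (1 - 1/S)^n`. -/
theorem stmt6 {Ω : Type*} [MeasurableSpace Ω] (μ : Measure Ω) [IsProbabilityMeasure μ]
    (S n : ℕ) (hS : 1 ≤ S) (hn : 1 ≤ n)
    (X : Fin n → Ω → Fin S)
    (hmeas : ∀ k, Measurable (X k))
    (hindep : iIndepFun X μ)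
    (hunif : ∀ k i, μ {ω | X k ω = i} = (S : ENNReal)⁻¹) :
    (1 - 1 / S : ℝ) ^ n ≤
      ∫ ω, ∑ i : Fin S,
        |((Finset.univ.filter (fun k => X k ω = i)).card : ℝ) / n - 1 / S| ∂μ := by
  haveI : NeZero S := ⟨Nat.one_le_iff_ne_zero.mp hS⟩
  set f : Ω → ℝ := fun ω => ∑ i : Fin S,
    |((Finset.univ.filter (fun k => X k ω = i)).card : ℝ) / n - 1 / S| with hf
  -- events
  set E : Fin S → Set Ω := fun i => ⋂ k, (X k) ⁻¹' ({i}ᶜ) with hE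
  have hSinv_le : (S : ENNReal)⁻¹ ≤ 1 := by
    simp [ENNReal.inv_le_one]
    exact_mod_cast hS
  have hmeasE : ∀ i, MeasurableSet (E i) := fun i =>
    MeasurableSet.iInter fun k => (hmeas k) (MeasurableSet.compl (measurableSet_singleton i))
  have hμE : ∀ i, μ (E i) = (1 - (S : ENNReal)⁻¹) ^ n := by
    intro i
    have := hindep.meas_iInter (s := fun k => (X k) ⁻¹' ({i}ᶜ))
      (fun k => ⟨{i}ᶜ, (measurableSet_singleton i).compl, rfl⟩)
    rw [this]
    have hone : ∀ k : Fin n, μ (((X k) ⁻¹' {i})ᶜ) = 1 - (S : ENNReal)⁻¹ := by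
      intro k
      have h2 : (X k) ⁻¹' {i} = {ω | X k ω = i} := by
        ext ω; simp [Set.mem_preimage]
      rw [h2, measure_compl (by exact (hmeas k) (measurableSet_singleton i)) (measure_ne_top μ _),
        hunif k i]
      simp
    simp only [Set.preimage_compl]
    rw [Finset.prod_congr rfl fun k _ => hone k, Finset.prod_const]
    simp
  have htoReal : ((1 - (S : ENNReal)⁻¹) ^ n).toReal = (1 - 1 / S : ℝ) ^ n := by
    rw [ENNReal.toReal_pow, ENNReal.toReal_sub_of_le hSinv_le ENNReal.one_ne_top]
    simp [one_div]
  -- g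
  set g : Ω → ℝ := fun ω => ∑ i : Fin S, (E i).indicator (fun _ => (1 : ℝ) / S) ω with hg
  have hgle : ∀ ω, g ω ≤ f ω := by
    intro ω
    refine Finset.sum_le_sum fun i _ => ?_
    by_cases h : ω ∈ E i
    · have hcard : (Finset.univ.filter (fun k => X k ω = i)).card = 0 := by
        rw [Finset.card_eq_zero, Finset.filter_eq_empty_iff]
        intro k _
        have := Set.mem_iInter.mp h k
        simpa using this
      rw [Set.indicator_of_mem h, hcard]
      simp [abs_of_nonpos, div_nonneg]
    · rw [Set.indicator_of_notMem h]
      exact abs_nonneg _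
  -- measurability of f
  have hfm : Measurable f := by
    apply Finset.measurable_sum
    intro i _
    apply Measurable.abs
    apply Measurable.sub _ measurable_const
    apply Measurable.div _ measurable_const
    have : (fun ω => ((Finset.univ.filter (fun k => X k ω = i)).card : ℝ)) =
        fun ω => ∑ k : Fin n, if X k ω = i then (1 : ℝ) else 0 := by
      funext ω
      rw [Finset.card_filter]
      push_cast
      rfl
    rw [this]
    exact Finset.measurable_sum _ fun k _ =>
      Measurable.ite ((hmeas k) (measurableSet_singleton i)) measurable_const measurable_const
  have hfint : Integrable f μ := by
    refine ⟨hfm.aestronglyMeasurable, ?_⟩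
    apply HasFiniteIntegral.of_bounded (C := ∑ i : Fin S, (1 + 1 / S : ℝ))
    filter_upwards with ω
    rw [hf]
    refine (norm_sum_le _ _).trans (Finset.sum_le_sum fun i _ => ?_)
    rw [Real.norm_eq_abs, abs_abs]
    refine (abs_sub _ _).trans ?_
    gcongr
    · rw [abs_of_nonneg (by positivity)]
      rw [div_le_one (by exact_mod_cast hn)]
      exact_mod_cast (Finset.card_filter_le _ _).trans (le_of_eq (by simp))
    · rw [abs_of_nonneg (by positivity)]
  -- integral of g
  have hgint : ∫ ω, g ω ∂μ = (1 - 1 / S : ℝ) ^ n := by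
    rw [hg, integral_finset_sum]
    · have : ∀ i : Fin S, ∫ ω, (E i).indicator (fun _ => (1 : ℝ) / S) ω ∂μ
          = (1 / S : ℝ) * (1 - 1 / S : ℝ) ^ n := by
        intro i
        rw [integral_indicator_const _ (hmeasE i), measureReal_def, hμE i, smul_eq_mul, mul_comm, htoReal]
      rw [Finset.sum_congr rfl fun i _ => this i]
      simp [Finset.sum_const]
      field_simp
    · intro i _
      exact (integrable_const _).indicator (hmeasE i)
  calc (1 - 1 / S : ℝ) ^ n = ∫ ω, g ω ∂μ := hgint.symm
    _ ≤ ∫ ω, f ω ∂μ := integral_mono_of_nonneg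
        (Filter.Eventually.of_forall fun ω => Finset.sum_nonneg fun i _ =>
          Set.indicator_nonneg (fun _ _ => by positivity) ω)
        hfint (Filter.Eventually.of_forall hgle)
end

section
/- Let 𝒳 be a finite (or countable) set, let X_1, X_2, ... be identically distributed 𝒳-valued random variables, and let I_1, I_2, ... be {0,1}-valued random variables such that for each n ≥ 1, X_n is independent of the σ-algebra generated by (X_1, ..., X_{n−1}, I_1, ..., I_n). For k ≥ 1 define the random index a_k = min{ i ≥ 1 : Σ_{j=1}^{i} I_j ≥ k }. Fix K ≥ 1 and assume a_K < ∞ almost surely. Then the joint distribution of (X_{a_1}, ..., X_{a_K}) equals the joint distribution of (X_1, ..., X_K); in particular, X_{a_1}, ..., X_{a_K} are i.i.d. with the common law of X_1. -/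
open MeasureTheory ProbabilityTheory

namespace Stmt11Aux

variable {Ω : Type*} {I : ℕ → Ω → ℕ} {a : ℕ → Ω → ℕ}

/-- partial sums of the indicators -/
def S (I : ℕ → Ω → ℕ) (i : ℕ) (ω : Ω) : ℕ := ∑ j ∈ Finset.Icc 1 i, I j ω

lemma S_mono (ω : Ω) : Monotone fun i => S I i ω := fun _ _ h =>
  Finset.sum_le_sum_of_subset (Finset.Icc_subset_Icc_right h)

lemma S_zero (ω : Ω) : S I 0 ω = 0 := by simp [S]

lemma Icc_succ (t : ℕ) : Finset.Icc 1 (t + 1) = insert (t + 1) (Finset.Icc 1 t) := by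
  ext x; simp; omega

lemma S_succ_le (hI01 : ∀ n ω, I n ω = 0 ∨ I n ω = 1) (t : ℕ) (ω : Ω) :
    S I (t + 1) ω ≤ S I t ω + 1 := by
  rw [S, Icc_succ, Finset.sum_insert (by simp)]
  rcases hI01 (t + 1) ω with h | h <;> simp [S, h] <;> omega

section CharLemmas

variable (ha : ∀ k ω, a k ω = sInf {i | 1 ≤ i ∧ k ≤ S I i ω})

include ha

lemma a_eq_iff {k t : ℕ} (hk : 1 ≤ k) (ht : 1 ≤ t) (ω : Ω) :
    a k ω = t ↔ k ≤ S I t ω ∧ S I (t - 1) ω < k := by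
  constructor
  · intro h
    have hne : {i | 1 ≤ i ∧ k ≤ S I i ω}.Nonempty := by
      by_contra hc
      rw [Set.not_nonempty_iff_eq_empty] at hc
      rw [ha, hc, Nat.sInf_empty] at h; omega
    have hmem := Nat.sInf_mem hne
    rw [← ha] at hmem
    rw [h] at hmem
    refine ⟨hmem.2, ?_⟩
    by_contra hc
    push_neg at hc
    have h1t : 1 ≤ t - 1 := by
      rcases Nat.eq_or_lt_of_le ht with h' | h'
      · exfalso; rw [← h'] at hc; rw [S_zero] at hc; omega
      · omega
    have : t ≤ t - 1 := by
      rw [ha] at h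
      have := Nat.sInf_le (s := {i | 1 ≤ i ∧ k ≤ S I i ω}) ⟨h1t, hc⟩
      omega
    omega
  · rintro ⟨h1, h2⟩
    rw [ha]
    have hmem : t ∈ {i | 1 ≤ i ∧ k ≤ S I i ω} := ⟨ht, h1⟩
    refine le_antisymm (Nat.sInf_le hmem) ?_
    have hlb : ∀ s ∈ {i | 1 ≤ i ∧ k ≤ S I i ω}, t ≤ s := by
      rintro s ⟨hs1, hs2⟩
      by_contra hc
      push_neg at hc
      have : S I s ω ≤ S I (t - 1) ω := S_mono ω (by omega)
      omega
    exact hlb _ (Nat.sInf_mem ⟨t, hmem⟩)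

lemma a_eq_zero_iff {k : ℕ} (hk : 1 ≤ k) (ω : Ω) :
    a k ω = 0 ↔ ∀ i, S I i ω < k := by
  constructor
  · intro h i
    by_contra hc
    push_neg at hc
    have hi1 : 1 ≤ i := by
      rcases Nat.eq_zero_or_pos i with h' | h'
      · rw [h', S_zero] at hc; omega
      · exact h'
    have := Nat.sInf_mem (s := {i | 1 ≤ i ∧ k ≤ S I i ω}) ⟨i, hi1, hc⟩
    rw [← ha, h] at this
    exact absurd this.1 (by omega)
  · intro h
    rw [ha]
    convert Nat.sInf_empty
    rw [Set.eq_empty_iff_forall_notMem]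
    rintro i ⟨_, h2⟩
    exact absurd h2 (by have := h i; omega)

lemma a_mem {k : ℕ} {ω : Ω} (hne : ∃ i, 1 ≤ i ∧ k ≤ S I i ω) :
    1 ≤ a k ω ∧ k ≤ S I (a k ω) ω := by
  have := Nat.sInf_mem (s := {i | 1 ≤ i ∧ k ≤ S I i ω}) hne
  rw [← ha] at this
  exact this

lemma a_lt_succ (hI01 : ∀ n ω, I n ω = 0 ∨ I n ω = 1) {k : ℕ} {ω : Ω} (hk : 1 ≤ k)
    (hne : ∃ i, 1 ≤ i ∧ k + 1 ≤ S I i ω) : a k ω < a (k + 1) ω := by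
  obtain ⟨ht1, ht2⟩ := a_mem ha hne
  set t := a (k + 1) ω with htdef
  have hchar := a_eq_iff ha hk ht1 ω (k := k) (t := t)
  have hle : a k ω ≤ t := by
    rw [ha]
    exact Nat.sInf_le ⟨ht1, by omega⟩
  rcases Nat.lt_or_ge (a k ω) t with h | h
  · exact h
  · exfalso
    have heq : a k ω = t := le_antisymm hle h
    obtain ⟨_, h2⟩ := hchar.mp heq
    have : S I t ω ≤ S I (t - 1) ω + 1 := by
      have := S_succ_le hI01 (t - 1) ω (I := I)
      have ht' : t - 1 + 1 = t := by omega
      rwa [ht'] at this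
    omega

lemma a_lt_of_lt (hI01 : ∀ n ω, I n ω = 0 ∨ I n ω = 1) {k l : ℕ} {ω : Ω} (hk : 1 ≤ k)
    (hkl : k < l) (hne : ∃ i, 1 ≤ i ∧ l ≤ S I i ω) : a k ω < a l ω := by
  induction l with
  | zero => omega
  | succ m ih =>
    have hnem : ∃ i, 1 ≤ i ∧ m ≤ S I i ω := by
      obtain ⟨i, h1, h2⟩ := hne; exact ⟨i, h1, by omega⟩
    rcases Nat.lt_or_ge k m with h | h
    · exact lt_trans (ih h hnem) (a_lt_succ ha hI01 (by omega) hne)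
    · have : k = m := by omega
      subst this
      exact a_lt_succ ha hI01 hk hne

end CharLemmas

section MeasLemmas

variable [MeasurableSpace Ω]

lemma S_measurable_of {m : MeasurableSpace Ω} {t : ℕ}
    (hm : ∀ j ∈ Finset.Icc 1 t, MeasurableSpace.comap (I j) inferInstance ≤ m) :
    Measurable[m] (fun ω => S I t ω) := by
  unfold S
  apply Finset.measurable_sum
  intro j hj
  exact Measurable.of_comap_le (hm j hj)

lemma aset_measurable_of (ha : ∀ k ω, a k ω = sInf {i | 1 ≤ i ∧ k ≤ S I i ω})
    {m : MeasurableSpace Ω} {k s : ℕ} (hk : 1 ≤ k) (hs : 1 ≤ s)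
    (hm : ∀ j ∈ Finset.Icc 1 s, MeasurableSpace.comap (I j) inferInstance ≤ m) :
    MeasurableSet[m] {ω | a k ω = s} := by
  have heq : {ω | a k ω = s} = (fun ω => S I s ω) ⁻¹' (Set.Ici k) ∩
      (fun ω => S I (s - 1) ω) ⁻¹' (Set.Iio k) := by
    ext ω
    simp only [Set.mem_setOf_eq, Set.mem_inter_iff, Set.mem_preimage, Set.mem_Ici, Set.mem_Iio]
    exact a_eq_iff ha hk hs ω
  rw [heq]
  have h1 : Measurable[m] (fun ω => S I s ω) := S_measurable_of hm
  have h2 : Measurable[m] (fun ω => S I (s - 1) ω) :=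
    S_measurable_of (fun j hj => hm j (by simp at hj ⊢; omega))
  exact (h1 .of_discrete).inter (h2 .of_discrete)

lemma a_measurable (ha : ∀ k ω, a k ω = sInf {i | 1 ≤ i ∧ k ≤ S I i ω})
    (hImeas : ∀ n, Measurable (I n)) {k : ℕ} (hk : 1 ≤ k) : Measurable (a k) := by
  apply measurable_to_countable'
  intro t
  have hpre : a k ⁻¹' {t} = {ω | a k ω = t} := by ext ω; simp
  rw [hpre]
  rcases Nat.eq_zero_or_pos t with rfl | ht
  · have : {ω | a k ω = 0} = ⋂ i, {ω | S I i ω < k} := by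
      ext ω
      simp only [Set.mem_setOf_eq, Set.mem_iInter]
      exact a_eq_zero_iff ha hk ω
    rw [this]
    refine MeasurableSet.iInter fun i => ?_
    have hmeas : Measurable (fun ω => S I i ω) :=
      S_measurable_of (fun j _ => (hImeas j).comap_le)
    have : {ω | S I i ω < k} = (fun ω => S I i ω) ⁻¹' (Set.Iio k) := rfl
    rw [this]
    exact hmeas .of_discrete
  · exact aset_measurable_of ha hk ht (fun j _ => (hImeas j).comap_le)

lemma Xa_measurable {𝒳 : Type*} [MeasurableSpace 𝒳] [Countable 𝒳] [MeasurableSingletonClass 𝒳]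
    {X : ℕ → Ω → 𝒳} (ha : ∀ k ω, a k ω = sInf {i | 1 ≤ i ∧ k ≤ S I i ω})
    (hImeas : ∀ n, Measurable (I n)) (hXmeas : ∀ n, Measurable (X n)) {k : ℕ} (hk : 1 ≤ k) :
    Measurable (fun ω => X (a k ω) ω) := by
  apply measurable_to_countable'
  intro x
  have : (fun ω => X (a k ω) ω) ⁻¹' {x} = ⋃ t, ({ω | a k ω = t} ∩ X t ⁻¹' {x}) := by
    ext ω
    simp only [Set.mem_preimage, Set.mem_singleton_iff, Set.mem_iUnion, Set.mem_inter_iff,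
      Set.mem_setOf_eq]
    constructor
    · intro h; exact ⟨a k ω, rfl, h⟩
    · rintro ⟨t, h1, h2⟩; rw [h1]; exact h2
  rw [this]
  refine MeasurableSet.iUnion fun t => MeasurableSet.inter ?_ ((hXmeas t) (measurableSet_singleton x))
  exact (a_measurable ha hImeas hk) (measurableSet_singleton t)

end MeasLemmas

end Stmt11Aux

section Key
variable {Ω 𝒳 : Type*} [MeasurableSpace Ω] [MeasurableSpace 𝒳] [Countable 𝒳]
    [MeasurableSingletonClass 𝒳]

lemma key2 (μ : Measure Ω) [IsProbabilityMeasure μ]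
    (X : ℕ → Ω → 𝒳) (hXmeas : ∀ n, Measurable (X n))
    (I : ℕ → Ω → ℕ)
    (hident : ∀ n, Measure.map (X n) μ = Measure.map (X 1) μ)
    (hindep : ∀ n, 1 ≤ n →
      Indep (MeasurableSpace.comap (X n) inferInstance)
        ((⨆ j ∈ Finset.Icc 1 (n - 1), MeasurableSpace.comap (X j) inferInstance) ⊔
          ⨆ j ∈ Finset.Icc 1 n, MeasurableSpace.comap (I j) inferInstance) μ) :
    ∀ (K : ℕ) (y : Fin K → 𝒳),
      μ (⋂ k : Fin K, X (k.1 + 1) ⁻¹' {y k}) = ∏ k : Fin K, μ (X 1 ⁻¹' {y k}) := by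
  intro K
  induction K with
  | zero => intro y; simp
  | succ K ih =>
    intro y
    have hsplit : (⋂ k : Fin (K+1), X (k.1 + 1) ⁻¹' {y k}) =
        (X (K+1) ⁻¹' {y (Fin.last K)}) ∩ ⋂ k : Fin K, X (k.1 + 1) ⁻¹' {y k.castSucc} := by
      ext ω
      simp only [Set.mem_iInter, Set.mem_inter_iff, Set.mem_preimage, Set.mem_singleton_iff]
      constructor
      · intro h
        exact ⟨h (Fin.last K), fun k => h k.castSucc⟩
      · rintro ⟨h1, h2⟩ k
        induction k using Fin.lastCases with
        | last => exact h1
        | cast k => exact h2 k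
    have hF : MeasurableSet[(⨆ j ∈ Finset.Icc 1 ((K+1) - 1),
          MeasurableSpace.comap (X j) inferInstance) ⊔
          ⨆ j ∈ Finset.Icc 1 (K+1), MeasurableSpace.comap (I j) inferInstance]
        (⋂ k : Fin K, X (k.1 + 1) ⁻¹' {y k.castSucc}) := by
      refine MeasurableSet.iInter fun k => ?_
      have hle : MeasurableSpace.comap (X (k.1 + 1)) inferInstance ≤
          (⨆ j ∈ Finset.Icc 1 ((K+1) - 1), MeasurableSpace.comap (X j) inferInstance) ⊔
          ⨆ j ∈ Finset.Icc 1 (K+1), MeasurableSpace.comap (I j) inferInstance :=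
        le_trans (le_iSup₂ (f := fun j (_ : j ∈ Finset.Icc 1 ((K+1) - 1)) =>
          MeasurableSpace.comap (X j) inferInstance) (k.1 + 1)
          (Finset.mem_Icc.mpr (by omega))) le_sup_left
      exact hle _ ⟨{y k.castSucc}, measurableSet_singleton _, rfl⟩
    have hind := (Indep_iff _ _ μ).mp (hindep (K+1) (by omega)) _ _
      ⟨{y (Fin.last K)}, measurableSet_singleton _, rfl⟩ hF
    rw [hsplit, hind, ih (fun k => y k.castSucc)]
    have hXK : μ (X (K+1) ⁻¹' {y (Fin.last K)}) = μ (X 1 ⁻¹' {y (Fin.last K)}) := by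
      rw [← Measure.map_apply (hXmeas (K+1)) (measurableSet_singleton _), hident (K+1),
        Measure.map_apply (hXmeas 1) (measurableSet_singleton _)]
    rw [hXK, Fin.prod_univ_castSucc]
    ring

variable {Ω 𝒳 : Type*} [MeasurableSpace Ω] [MeasurableSpace 𝒳] [Countable 𝒳]
    [MeasurableSingletonClass 𝒳]

open Stmt11Aux in
lemma key (μ : Measure Ω) [IsProbabilityMeasure μ]
    (X : ℕ → Ω → 𝒳) (hXmeas : ∀ n, Measurable (X n))
    (I : ℕ → Ω → ℕ) (hImeas : ∀ n, Measurable (I n))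
    (hI01 : ∀ n ω, I n ω = 0 ∨ I n ω = 1)
    (hident : ∀ n, Measure.map (X n) μ = Measure.map (X 1) μ)
    (hindep : ∀ n, 1 ≤ n →
      Indep (MeasurableSpace.comap (X n) inferInstance)
        ((⨆ j ∈ Finset.Icc 1 (n - 1), MeasurableSpace.comap (X j) inferInstance) ⊔
          ⨆ j ∈ Finset.Icc 1 n, MeasurableSpace.comap (I j) inferInstance) μ)
    (a : ℕ → Ω → ℕ)
    (ha : ∀ k ω, a k ω = sInf {i | 1 ≤ i ∧ k ≤ S I i ω}) :
    ∀ K : ℕ, (∀ᵐ ω ∂μ, ∃ i, 1 ≤ i ∧ K ≤ S I i ω) → ∀ y : Fin K → 𝒳,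
      μ (⋂ k : Fin K, {ω | X (a (k.1 + 1) ω) ω = y k}) = ∏ k : Fin K, μ (X 1 ⁻¹' {y k}) := by
  intro K
  induction K with
  | zero => intro _ y; simp
  | succ K ih =>
    intro hfin y
    have hfin' : ∀ᵐ ω ∂μ, ∃ i, 1 ≤ i ∧ K ≤ S I i ω :=
      hfin.mono (by rintro ω ⟨i, h1, h2⟩; exact ⟨i, h1, by omega⟩)
    have hnull : μ {ω | 1 ≤ a (K + 1) ω}ᶜ = 0 := by
      have hae : ∀ᵐ ω ∂μ, 1 ≤ a (K + 1) ω :=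
        hfin.mono (fun ω h => (a_mem ha h).1)
      rw [Set.compl_setOf]
      simpa using ae_iff.mp hae
    -- the decomposition of the full event according to the value of a (K+1)
    have hcover : (⋂ k : Fin (K + 1), {ω | X (a (k.1 + 1) ω) ω = y k}) ∩
        {ω | 1 ≤ a (K + 1) ω} =
        ⋃ t : ℕ, (({ω | a (K + 1) ω = t + 1} ∩
          ⋂ k : Fin K, {ω | X (a (k.1 + 1) ω) ω = y k.castSucc}) ∩
          X (t + 1) ⁻¹' {y (Fin.last K)}) := by
      ext ω
      simp only [Set.mem_inter_iff, Set.mem_iInter, Set.mem_iUnion, Set.mem_setOf_eq,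
        Set.mem_preimage, Set.mem_singleton_iff]
      constructor
      · rintro ⟨hE, h1⟩
        refine ⟨a (K + 1) ω - 1, ⟨by omega, fun k => hE k.castSucc⟩, ?_⟩
        have hlast := hE (Fin.last K)
        simp only [Fin.val_last] at hlast
        rw [show a (K + 1) ω - 1 + 1 = a (K + 1) ω by omega]
        exact hlast
      · rintro ⟨t, ⟨hat, hEk⟩, hXt⟩
        refine ⟨fun k => ?_, by omega⟩
        induction k using Fin.lastCases with
        | last => simp only [Fin.val_last]; rw [hat]; exact hXt
        | cast k => exact hEk k
    -- measurability of the "B" part w.r.t. the σ-algebra in hindep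
    have hBmeas : ∀ t : ℕ,
        MeasurableSet[(⨆ j ∈ Finset.Icc 1 (t + 1 - 1),
            MeasurableSpace.comap (X j) inferInstance) ⊔
          ⨆ j ∈ Finset.Icc 1 (t + 1), MeasurableSpace.comap (I j) inferInstance]
        ({ω | a (K + 1) ω = t + 1} ∩
          ⋂ k : Fin K, {ω | X (a (k.1 + 1) ω) ω = y k.castSucc}) := by
      intro t
      have hrep : {ω | a (K + 1) ω = t + 1} ∩
          (⋂ k : Fin K, {ω | X (a (k.1 + 1) ω) ω = y k.castSucc}) =
          {ω | a (K + 1) ω = t + 1} ∩ ⋂ k : Fin K, ⋃ s ∈ Finset.Icc 1 t,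
            ({ω | a (k.1 + 1) ω = s} ∩ X s ⁻¹' {y k.castSucc}) := by
        ext ω
        simp only [Set.mem_inter_iff, Set.mem_iInter, Set.mem_iUnion, Set.mem_setOf_eq,
          Set.mem_preimage, Set.mem_singleton_iff, Finset.mem_Icc]
        constructor
        · rintro ⟨hat, hk⟩
          refine ⟨hat, fun k => ?_⟩
          have hne : ∃ i, 1 ≤ i ∧ K + 1 ≤ S I i ω :=
            ⟨t + 1, by omega, ((a_eq_iff ha (by omega) (by omega) ω).mp hat).1⟩
          have hnek : ∃ i, 1 ≤ i ∧ k.1 + 1 ≤ S I i ω := by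
            obtain ⟨i, h1, h2⟩ := hne; exact ⟨i, h1, by have := k.2; omega⟩
          have hlt : a (k.1 + 1) ω < a (K + 1) ω :=
            a_lt_of_lt ha hI01 (by omega) (by have := k.2; omega) hne
          have hge := (a_mem ha hnek).1
          exact ⟨a (k.1 + 1) ω, ⟨hge, by omega⟩, rfl, hk k⟩
        · rintro ⟨hat, hk⟩
          refine ⟨hat, fun k => ?_⟩
          obtain ⟨s, _, has, hXs⟩ := hk k
          rw [has]; exact hXs
      rw [hrep]
      refine MeasurableSet.inter ?_ (MeasurableSet.iInter fun k => MeasurableSet.iUnion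
        fun s => MeasurableSet.iUnion fun hs => MeasurableSet.inter ?_ ?_)
      · refine aset_measurable_of ha (by omega) (by omega) (fun j hj => ?_)
        exact le_trans (le_iSup₂ (f := fun j (_ : j ∈ Finset.Icc 1 (t + 1)) =>
          MeasurableSpace.comap (I j) inferInstance) j hj) le_sup_right
      · have hs' := Finset.mem_Icc.mp hs
        refine aset_measurable_of ha (by omega) hs'.1 (fun j hj => ?_)
        have hj' := Finset.mem_Icc.mp hj
        exact le_trans (le_iSup₂ (f := fun j (_ : j ∈ Finset.Icc 1 (t + 1)) =>
          MeasurableSpace.comap (I j) inferInstance) j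
          (Finset.mem_Icc.mpr (by omega))) le_sup_right
      · have hs' := Finset.mem_Icc.mp hs
        have hle : MeasurableSpace.comap (X s) inferInstance ≤
            (⨆ j ∈ Finset.Icc 1 (t + 1 - 1), MeasurableSpace.comap (X j) inferInstance) ⊔
            ⨆ j ∈ Finset.Icc 1 (t + 1), MeasurableSpace.comap (I j) inferInstance :=
          le_trans (le_iSup₂ (f := fun j (_ : j ∈ Finset.Icc 1 (t + 1 - 1)) =>
            MeasurableSpace.comap (X j) inferInstance) s
            (Finset.mem_Icc.mpr (by omega))) le_sup_left
        exact hle _ ⟨{y k.castSucc}, measurableSet_singleton _, rfl⟩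
    -- the σ-algebras are coarser than the ambient one
    have hmle : ∀ t : ℕ,
        ((⨆ j ∈ Finset.Icc 1 (t + 1 - 1), MeasurableSpace.comap (X j) inferInstance) ⊔
          ⨆ j ∈ Finset.Icc 1 (t + 1), MeasurableSpace.comap (I j) inferInstance) ≤
          (inferInstance : MeasurableSpace Ω) :=
      fun t => sup_le (iSup₂_le fun j _ => (hXmeas j).comap_le)
        (iSup₂_le fun j _ => (hImeas j).comap_le)
    have hBamb : ∀ t : ℕ, MeasurableSet ({ω | a (K + 1) ω = t + 1} ∩
        ⋂ k : Fin K, {ω | X (a (k.1 + 1) ω) ω = y k.castSucc}) :=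
      fun t => hmle t _ (hBmeas t)
    have hDamb : ∀ t : ℕ, MeasurableSet (({ω | a (K + 1) ω = t + 1} ∩
        ⋂ k : Fin K, {ω | X (a (k.1 + 1) ω) ω = y k.castSucc}) ∩
        X (t + 1) ⁻¹' {y (Fin.last K)}) :=
      fun t => (hBamb t).inter (hXmeas (t + 1) (measurableSet_singleton _))
    -- independence step
    have hDt : ∀ t : ℕ, μ (({ω | a (K + 1) ω = t + 1} ∩
        ⋂ k : Fin K, {ω | X (a (k.1 + 1) ω) ω = y k.castSucc}) ∩
        X (t + 1) ⁻¹' {y (Fin.last K)}) =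
        μ ({ω | a (K + 1) ω = t + 1} ∩
          ⋂ k : Fin K, {ω | X (a (k.1 + 1) ω) ω = y k.castSucc}) *
          μ (X 1 ⁻¹' {y (Fin.last K)}) := by
      intro t
      have hind := (Indep_iff _ _ μ).mp (hindep (t + 1) (by omega)) _ _
        (⟨{y (Fin.last K)}, measurableSet_singleton _, rfl⟩ :
          MeasurableSet[MeasurableSpace.comap (X (t + 1)) inferInstance]
            (X (t + 1) ⁻¹' {y (Fin.last K)})) (hBmeas t)
      have hXt : μ (X (t + 1) ⁻¹' {y (Fin.last K)}) = μ (X 1 ⁻¹' {y (Fin.last K)}) := by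
        rw [← Measure.map_apply (hXmeas (t + 1)) (measurableSet_singleton _), hident (t + 1),
          Measure.map_apply (hXmeas 1) (measurableSet_singleton _)]
      rw [Set.inter_comm, hind, hXt, mul_comm]
    -- disjointness
    have hdisjB : Pairwise (Function.onFun Disjoint (fun t : ℕ =>
        {ω | a (K + 1) ω = t + 1} ∩
        ⋂ k : Fin K, {ω | X (a (k.1 + 1) ω) ω = y k.castSucc})) := by
      intro i j hij
      rw [Function.onFun, Set.disjoint_left]
      rintro ω ⟨h1, -⟩ ⟨h2, -⟩
      rw [Set.mem_setOf_eq] at h1 h2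
      omega
    have hdisjD : Pairwise (Function.onFun Disjoint (fun t : ℕ =>
        ({ω | a (K + 1) ω = t + 1} ∩
        ⋂ k : Fin K, {ω | X (a (k.1 + 1) ω) ω = y k.castSucc}) ∩
        X (t + 1) ⁻¹' {y (Fin.last K)})) := by
      intro i j hij
      exact Set.disjoint_of_subset Set.inter_subset_left Set.inter_subset_left (hdisjB hij)
    -- union of the B's
    have hBunion : (⋃ t : ℕ, ({ω | a (K + 1) ω = t + 1} ∩
        ⋂ k : Fin K, {ω | X (a (k.1 + 1) ω) ω = y k.castSucc})) =
        (⋂ k : Fin K, {ω | X (a (k.1 + 1) ω) ω = y k.castSucc}) ∩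
        {ω | 1 ≤ a (K + 1) ω} := by
      ext ω
      simp only [Set.mem_iUnion, Set.mem_inter_iff, Set.mem_setOf_eq]
      constructor
      · rintro ⟨t, h1, h2⟩; exact ⟨h2, by omega⟩
      · rintro ⟨h1, h2⟩; exact ⟨a (K + 1) ω - 1, by omega, h1⟩
    calc μ (⋂ k : Fin (K + 1), {ω | X (a (k.1 + 1) ω) ω = y k})
        = μ ((⋂ k : Fin (K + 1), {ω | X (a (k.1 + 1) ω) ω = y k}) ∩
            {ω | 1 ≤ a (K + 1) ω}) := (measure_inter_conull hnull).symm
      _ = μ (⋃ t : ℕ, (({ω | a (K + 1) ω = t + 1} ∩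
            ⋂ k : Fin K, {ω | X (a (k.1 + 1) ω) ω = y k.castSucc}) ∩
            X (t + 1) ⁻¹' {y (Fin.last K)})) := by rw [hcover]
      _ = ∑' t : ℕ, μ (({ω | a (K + 1) ω = t + 1} ∩
            ⋂ k : Fin K, {ω | X (a (k.1 + 1) ω) ω = y k.castSucc}) ∩
            X (t + 1) ⁻¹' {y (Fin.last K)}) := measure_iUnion hdisjD hDamb
      _ = ∑' t : ℕ, μ ({ω | a (K + 1) ω = t + 1} ∩
            ⋂ k : Fin K, {ω | X (a (k.1 + 1) ω) ω = y k.castSucc}) *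
            μ (X 1 ⁻¹' {y (Fin.last K)}) := tsum_congr hDt
      _ = (∑' t : ℕ, μ ({ω | a (K + 1) ω = t + 1} ∩
            ⋂ k : Fin K, {ω | X (a (k.1 + 1) ω) ω = y k.castSucc})) *
            μ (X 1 ⁻¹' {y (Fin.last K)}) := ENNReal.tsum_mul_right
      _ = μ (⋃ t : ℕ, ({ω | a (K + 1) ω = t + 1} ∩
            ⋂ k : Fin K, {ω | X (a (k.1 + 1) ω) ω = y k.castSucc})) *
            μ (X 1 ⁻¹' {y (Fin.last K)}) := by rw [measure_iUnion hdisjB hBamb]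
      _ = μ (⋂ k : Fin K, {ω | X (a (k.1 + 1) ω) ω = y k.castSucc}) *
            μ (X 1 ⁻¹' {y (Fin.last K)}) := by rw [hBunion, measure_inter_conull hnull]
      _ = (∏ k : Fin K, μ (X 1 ⁻¹' {y k.castSucc})) * μ (X 1 ⁻¹' {y (Fin.last K)}) := by
            rw [ih hfin' (fun k => y k.castSucc)]
      _ = ∏ k : Fin (K + 1), μ (X 1 ⁻¹' {y k}) := by
            rw [Fin.prod_univ_castSucc (f := fun k : Fin (K + 1) => μ (X 1 ⁻¹' {y k}))]
end Key

/-- Lemma D.1 of the paper: let `X 1, X 2, ...` be identically distributed random variables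
with values in a countable set, and `I 1, I 2, ...` be `{0,1}`-valued random variables such
that `X n` is independent of the σ-algebra generated by `X 1, ..., X (n-1), I 1, ..., I n`.
Let `a k` be the `k`-th index `i ≥ 1` at which `∑_{j=1}^{i} I j ≥ k`. If `a K < ∞` a.s.
(i.e. the defining set is a.s. nonempty), then `(X (a 1), ..., X (a K))` has the same joint
distribution as `(X 1, ..., X K)`. -/
theorem stmt11 {Ω 𝒳 : Type*} [MeasurableSpace Ω] [MeasurableSpace 𝒳] [Countable 𝒳]
    [MeasurableSingletonClass 𝒳]
    (μ : Measure Ω) [IsProbabilityMeasure μ]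
    (X : ℕ → Ω → 𝒳) (hXmeas : ∀ n, Measurable (X n))
    (I : ℕ → Ω → ℕ) (hImeas : ∀ n, Measurable (I n))
    (hI01 : ∀ n ω, I n ω = 0 ∨ I n ω = 1)
    (hident : ∀ n, Measure.map (X n) μ = Measure.map (X 1) μ)
    (hindep : ∀ n, 1 ≤ n →
      Indep (MeasurableSpace.comap (X n) inferInstance)
        ((⨆ j ∈ Finset.Icc 1 (n - 1), MeasurableSpace.comap (X j) inferInstance) ⊔
          ⨆ j ∈ Finset.Icc 1 n, MeasurableSpace.comap (I j) inferInstance) μ)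
    (a : ℕ → Ω → ℕ)
    (ha : ∀ k ω, a k ω = sInf {i | 1 ≤ i ∧ k ≤ ∑ j ∈ Finset.Icc 1 i, I j ω})
    (K : ℕ) (hK : 1 ≤ K)
    (hfin : ∀ᵐ ω ∂μ, ∃ i, 1 ≤ i ∧ K ≤ ∑ j ∈ Finset.Icc 1 i, I j ω) :
    Measure.map (fun ω => fun k : Fin K => X (a (k.val + 1) ω) ω) μ =
      Measure.map (fun ω => fun k : Fin K => X (k.val + 1) ω) μ := by
  have haS : ∀ k ω, a k ω = sInf {i | 1 ≤ i ∧ k ≤ Stmt11Aux.S I i ω} := ha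
  have hfinS : ∀ᵐ ω ∂μ, ∃ i, 1 ≤ i ∧ K ≤ Stmt11Aux.S I i ω := hfin
  apply MeasureTheory.Measure.ext_of_singleton
  intro y
  have hfmeas : Measurable (fun ω => fun k : Fin K => X (a (k.val + 1) ω) ω) :=
    measurable_pi_lambda _ (fun k => Stmt11Aux.Xa_measurable haS hImeas hXmeas (by omega))
  have hgmeas : Measurable (fun ω => fun k : Fin K => X (k.val + 1) ω) :=
    measurable_pi_lambda _ (fun k => hXmeas _)
  rw [Measure.map_apply hfmeas (measurableSet_singleton y),
      Measure.map_apply hgmeas (measurableSet_singleton y)]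
  have h1 : (fun ω => fun k : Fin K => X (a (k.val + 1) ω) ω) ⁻¹' {y} =
      ⋂ k : Fin K, {ω | X (a (k.1 + 1) ω) ω = y k} := by
    ext ω
    simp only [Set.mem_preimage, Set.mem_singleton_iff, Set.mem_iInter, Set.mem_setOf_eq,
      funext_iff]
  have h2 : (fun ω => fun k : Fin K => X (k.val + 1) ω) ⁻¹' {y} =
      ⋂ k : Fin K, X (k.1 + 1) ⁻¹' {y k} := by
    ext ω
    simp only [Set.mem_preimage, Set.mem_singleton_iff, Set.mem_iInter, funext_iff]
  rw [h1, h2, key μ X hXmeas I hImeas hI01 hident hindep a haS K hfinS y,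
      key2 μ X hXmeas I hident hindep K y]
end

section
/- Let γ > 0 and n ≥ 1 be real numbers, and let p, p̂ ∈ [0,1] satisfy |p̂ − p| ≤ 2·√(p·γ/n) + γ/n. Then |p̂ − p| ≤ 2·√(p̂·γ/n) + 3·γ/n + 4·γ^{3/4}/n^{3/4}. -/
/-!
With `t = √(γ/n)` the hypothesis reads `|p̂ - p| ≤ 2√p·t + t²`. Since `√p ≤ 1` it gives
`p ≤ p̂ + 2t + t² ≤ (√p̂ + 2√t + t)²`, so `√p ≤ √p̂ + 2√t + t`; substituting this back into
`2√p·t` yields `2√p̂·t + 3t² + 4t^{3/2}`, and `t^{3/2} = (γ/n)^{3/4}`.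
-/

open Real

lemma Real.rpow_three_fourths_eq_sqrt_mul_sqrt_sqrt {x : ℝ} (hx : 0 ≤ x) :
    x ^ ((3 : ℝ) / 4) = √x * √(√x) := by
  rw [sqrt_eq_rpow, sqrt_eq_rpow, ← rpow_mul hx, ← rpow_add' hx] <;> norm_num

lemma Real.sqrt_le_sqrt_add_two_mul_sqrt_add {p a t : ℝ} (ha : 0 ≤ a) (ht : 0 ≤ t)
    (h : p ≤ a + 2 * t + t ^ 2) : √p ≤ √a + 2 * √t + t := by
  have hsa := sq_sqrt ha
  have hst := sq_sqrt ht
  rw [sqrt_le_iff]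
  constructor
  · positivity
  · nlinarith [sqrt_nonneg a, sqrt_nonneg t]

lemma abs_sub_le_of_abs_sub_le_sqrt_mul {p phat t : ℝ} (hp : p ≤ 1) (hphat : 0 ≤ phat)
    (ht : 0 ≤ t) (h : |phat - p| ≤ 2 * √p * t + t ^ 2) :
    |phat - p| ≤ 2 * √phat * t + 3 * t ^ 2 + 4 * (t * √t) := by
  have hsqrt_p : √p ≤ 1 := sqrt_le_one.mpr hp
  have hp_le : p ≤ phat + 2 * t + t ^ 2 := by
    have := (abs_sub_comm phat p ▸ le_abs_self (p - phat)).trans h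
    nlinarith
  have hsqrt_le := sqrt_le_sqrt_add_two_mul_sqrt_add hphat ht hp_le
  calc |phat - p| ≤ 2 * √p * t + t ^ 2 := h
    _ ≤ 2 * (√phat + 2 * √t + t) * t + t ^ 2 := by gcongr
    _ = 2 * √phat * t + 3 * t ^ 2 + 4 * (t * √t) := by ring

theorem stmt12_general (γ n p phat : ℝ) (hγ : 0 < γ) (hn : 1 ≤ n)
    (hp1 : p ≤ 1) (hphat0 : 0 ≤ phat)
    (h : |phat - p| ≤ 2 * Real.sqrt (p * γ / n) + γ / n) :
    |phat - p| ≤ 2 * Real.sqrt (phat * γ / n) + 3 * γ / n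
      + 4 * γ ^ ((3 : ℝ) / 4) / n ^ ((3 : ℝ) / 4) := by
  have hn0 : 0 ≤ n := zero_le_one.trans hn
  have hq : 0 ≤ γ / n := div_nonneg hγ.le hn0
  have hsqrt_mul (x : ℝ) : √(x * γ / n) = √x * √(γ / n) := by
    rw [mul_div_assoc, sqrt_mul' x hq]
  have hrpow : γ ^ ((3 : ℝ) / 4) / n ^ ((3 : ℝ) / 4) = √(γ / n) * √(√(γ / n)) := by
    rw [← div_rpow hγ.le hn0, rpow_three_fourths_eq_sqrt_mul_sqrt_sqrt hq]
  have h' : |phat - p| ≤ 2 * √p * √(γ / n) + √(γ / n) ^ 2 := by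
    rwa [mul_assoc, ← hsqrt_mul, sq_sqrt hq]
  calc |phat - p|
      ≤ 2 * √phat * √(γ / n) + 3 * √(γ / n) ^ 2 + 4 * (√(γ / n) * √(√(γ / n))) :=
        abs_sub_le_of_abs_sub_le_sqrt_mul hp1 hphat0 (sqrt_nonneg _) h'
    _ = _ := by rw [mul_assoc 2, ← hsqrt_mul, sq_sqrt hq, ← hrpow]; ring

/-- The deterministic conversion inside Lemma 2 of the paper: a confidence interval for an
empirical frequency expressed in terms of the true probability `p` implies one expressed in
terms of the empirical probability `p̂`. -/
theorem stmt12 (γ n p phat : ℝ) (hγ : 0 < γ) (hn : 1 ≤ n)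
    (hp0 : 0 ≤ p) (hp1 : p ≤ 1) (hphat0 : 0 ≤ phat) (hphat1 : phat ≤ 1)
    (h : |phat - p| ≤ 2 * Real.sqrt (p * γ / n) + γ / n) :
    |phat - p| ≤ 2 * Real.sqrt (phat * γ / n) + 3 * γ / n
      + 4 * γ ^ ((3 : ℝ) / 4) / n ^ ((3 : ℝ) / 4) :=
  stmt12_general γ n p phat hγ hn hp1 hphat0 h
end

section
/- Let m ≥ 1, let γ > 0, n ≥ 1 and H > 0 be real numbers, let p and q be probability mass functions on {1,...,m}, and let h : {1,...,m} → ℝ take values in [0,H]. Assume (i) |Σ_i (p_i − q_i)·h_i| ≤ 2·√(V(p,h)·γ/n) + 2·H·γ/n, and (ii) |V(p,h) − V(q,h)| ≤ H²·(2·√(γ/n) + 2·γ/n). Then |Σ_i (p_i − q_i)·h_i| ≤ 2·√(V(q,h)·γ/n) + 12·H·γ/n + 10·H·γ^{3/4}/n^{3/4}. -/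
/-!
Since `√` is subadditive, `√V(p,h) ≤ √V(q,h) + √|V(p,h) - V(q,h)|`, and with `t = γ/n` the
hypothesis on the variances gives `|V(p,h) - V(q,h)| * t ≤ 2H²(t^{3/2} + t²) ≤ (2H(t^{3/4} + t))²`.
Substituting into the Bernstein bound leaves `2√(V(q,h) t) + 6Ht + 4Ht^{3/4}`.
-/

lemma Real.sqrt_le_sqrt_add_sqrt_abs_sub (x y : ℝ) : √x ≤ √y + √|x - y| := by
  rw [Real.sqrt_le_iff]
  refine ⟨by positivity, ?_⟩
  have hy : y ≤ √y ^ 2 := by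
    rcases le_total 0 y with hy | hy
    · rw [Real.sq_sqrt hy]
    · exact hy.trans (sq_nonneg _)
  nlinarith [Real.sq_sqrt (abs_nonneg (x - y)), le_abs_self (x - y),
    mul_nonneg (Real.sqrt_nonneg y) (Real.sqrt_nonneg |x - y|)]

lemma Real.rpow_three_fourths_sq {t : ℝ} (ht : 0 ≤ t) : (t ^ (3 / 4 : ℝ)) ^ 2 = √t * t := by
  rw [← Real.rpow_mul_natCast ht, Real.sqrt_eq_rpow, ← Real.rpow_add_one' ht (by norm_num)]
  norm_num

lemma sqrt_mul_le_of_abs_sub_le {x y H t : ℝ} (hH : 0 ≤ H) (ht : 0 ≤ t)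
    (hxy : |x - y| ≤ H ^ 2 * (2 * √t + 2 * t)) :
    √(x * t) ≤ √(y * t) + 2 * H * (t ^ (3 / 4 : ℝ) + t) := by
  have herr : |x * t - y * t| ≤ (2 * H * (t ^ (3 / 4 : ℝ) + t)) ^ 2 := by
    have hu := Real.rpow_three_fourths_sq ht
    have hu0 : 0 ≤ t ^ (3 / 4 : ℝ) := Real.rpow_nonneg ht _
    rw [← sub_mul, abs_mul, abs_of_nonneg ht]
    calc |x - y| * t ≤ H ^ 2 * (2 * √t + 2 * t) * t := by gcongr
      _ ≤ _ := by nlinarith [mul_nonneg (mul_nonneg (sq_nonneg H) hu0) ht, sq_nonneg H]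
  calc √(x * t) ≤ √(y * t) + √|x * t - y * t| := Real.sqrt_le_sqrt_add_sqrt_abs_sub _ _
    _ ≤ √(y * t) + 2 * H * (t ^ (3 / 4 : ℝ) + t) := by
      gcongr
      exact Real.sqrt_le_iff.mpr ⟨by positivity, herr⟩

lemma abs_le_of_abs_le_sqrt_mul_of_abs_sub_le {D x y H t : ℝ} (hH : 0 ≤ H) (ht : 0 ≤ t)
    (hD : |D| ≤ 2 * √(x * t) + 2 * H * t) (hxy : |x - y| ≤ H ^ 2 * (2 * √t + 2 * t)) :
    |D| ≤ 2 * √(y * t) + 12 * H * t + 10 * H * t ^ (3 / 4 : ℝ) := by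
  have := sqrt_mul_le_of_abs_sub_le hH ht hxy
  nlinarith [mul_nonneg hH ht, mul_nonneg hH (Real.rpow_nonneg ht (3 / 4 : ℝ))]

theorem stmt15_general {ι : Type*} [Fintype ι]
    (γ n H : ℝ) (hγ : 0 < γ) (hn : 1 ≤ n) (hH : 0 < H)
    (p q : ι → ℝ)
    (h : ι → ℝ)
    (hdev : |∑ i, (p i - q i) * h i|
      ≤ 2 * Real.sqrt ((∑ i, p i * h i ^ 2 - (∑ i, p i * h i) ^ 2) * γ / n) + 2 * H * γ / n)
    (hvar : |(∑ i, p i * h i ^ 2 - (∑ i, p i * h i) ^ 2)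
        - (∑ i, q i * h i ^ 2 - (∑ i, q i * h i) ^ 2)|
      ≤ H ^ 2 * (2 * Real.sqrt (γ / n) + 2 * γ / n)) :
    |∑ i, (p i - q i) * h i|
      ≤ 2 * Real.sqrt ((∑ i, q i * h i ^ 2 - (∑ i, q i * h i) ^ 2) * γ / n)
        + 12 * H * γ / n + 10 * H * γ ^ ((3 : ℝ) / 4) / n ^ ((3 : ℝ) / 4) := by
  have hn0 : 0 ≤ n := zero_le_one.trans hn
  simp only [mul_div_assoc] at hdev hvar ⊢
  rw [← Real.div_rpow hγ.le hn0]
  exact abs_le_of_abs_le_sqrt_mul_of_abs_sub_le hH.le (div_nonneg hγ.le hn0) hdev hvar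

/-- The deterministic conversion inside Lemma 2 of the paper (verifying constraint (7) of
Algorithm 2): a Bernstein-type deviation bound with the variance under the true distribution
`p` implies one with the variance under the empirical distribution `q`. Here
`V(p,h) = ∑ i, p i * (h i)^2 - (∑ i, p i * h i)^2`. -/
theorem stmt15 {ι : Type*} [Fintype ι] [Nonempty ι]
    (γ n H : ℝ) (hγ : 0 < γ) (hn : 1 ≤ n) (hH : 0 < H)
    (p q : ι → ℝ) (hp0 : ∀ i, 0 ≤ p i) (hp1 : ∑ i, p i = 1)
    (hq0 : ∀ i, 0 ≤ q i) (hq1 : ∑ i, q i = 1)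
    (h : ι → ℝ) (hh0 : ∀ i, 0 ≤ h i) (hhH : ∀ i, h i ≤ H)
    (hdev : |∑ i, (p i - q i) * h i|
      ≤ 2 * Real.sqrt ((∑ i, p i * h i ^ 2 - (∑ i, p i * h i) ^ 2) * γ / n) + 2 * H * γ / n)
    (hvar : |(∑ i, p i * h i ^ 2 - (∑ i, p i * h i) ^ 2)
        - (∑ i, q i * h i ^ 2 - (∑ i, q i * h i) ^ 2)|
      ≤ H ^ 2 * (2 * Real.sqrt (γ / n) + 2 * γ / n)) :
    |∑ i, (p i - q i) * h i|
      ≤ 2 * Real.sqrt ((∑ i, q i * h i ^ 2 - (∑ i, q i * h i) ^ 2) * γ / n)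
        + 12 * H * γ / n + 10 * H * γ ^ ((3 : ℝ) / 4) / n ^ ((3 : ℝ) / 4) :=
  stmt15_general γ n H hγ hn hH p q h hdev hvar
end

section
/- In the flat-MDP trajectory setup, fix an integer n ≥ 1 and δ ∈ (0,1), and set γ = log(2/δ). Then with probability at least 1 − δ, | Σ_{i=1}^{n} ( r(s_i, a_i) − ρ ) | ≤ (2·√(n·γ) + 1)·sp(h). -/
open MeasureTheory ProbabilityTheory

lemma exp_convex_bound {c x t : ℝ} (hc : 0 < c) (hx : |x| ≤ c) :
    Real.exp (t * x) ≤ ((c + x) / (2 * c)) * Real.exp (t * c)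
      + ((c - x) / (2 * c)) * Real.exp (-(t * c)) := by
  have hxc : -c ≤ x ∧ x ≤ c := abs_le.mp hx
  have hcne : c ≠ 0 := ne_of_gt hc
  have hθ0 : 0 ≤ (c + x) / (2 * c) := by
    apply div_nonneg <;> nlinarith [hxc.1, hxc.2]
  have hθ0' : 0 ≤ (c - x) / (2 * c) := by
    apply div_nonneg <;> nlinarith [hxc.1, hxc.2]
  have hθ1 : (c + x) / (2 * c) + (c - x) / (2 * c) = 1 := by
    field_simp
    ring
  have := convexOn_exp.2 (Set.mem_univ (t * c)) (Set.mem_univ (-(t * c))) hθ0 hθ0' hθ1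
  simp only [smul_eq_mul] at this
  have hcomb : (c + x) / (2 * c) * (t * c) + (c - x) / (2 * c) * (-(t * c)) = t * x := by
    field_simp
    ring
  rw [hcomb] at this
  exact this

lemma cosh_quad_bound {t : ℝ} (ht : |t| ≤ 1) :
    (Real.exp t + Real.exp (-t)) / 2 ≤ 1 + t ^ 2 := by
  have h1 := Real.exp_bound ht (n := 2) (by norm_num)
  have h2 := Real.exp_bound (x := -t) (by simpa using ht) (n := 2) (by norm_num)
  norm_num [Nat.factorial, Finset.sum_range_succ] at h1 h2
  have b1 := (abs_le.mp h1).2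
  have b2 := (abs_le.mp h2).2
  have habs : |t| ^ 2 = t ^ 2 := sq_abs t
  have habs' : |(-t)| ^ 2 = t ^ 2 := by rw [abs_neg, sq_abs]
  nlinarith [sq_nonneg t]

lemma sum_exp_bound {S : Type*} [Fintype S] (p x : S → ℝ)
    (hp0 : ∀ s, 0 ≤ p s) (hp1 : ∑ s, p s = 1) (hx0 : ∑ s, p s * x s = 0)
    {c t : ℝ} (hc : 0 < c) (hxc : ∀ s, |x s| ≤ c) (htc : |t * c| ≤ 1) :
    ∑ s, p s * Real.exp (t * x s) ≤ 1 + (t * c) ^ 2 := by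
  have hcne : c ≠ 0 := ne_of_gt hc
  have step : ∑ s, p s * Real.exp (t * x s)
      ≤ ∑ s, p s * (((c + x s) / (2 * c)) * Real.exp (t * c)
          + ((c - x s) / (2 * c)) * Real.exp (-(t * c))) := by
    apply Finset.sum_le_sum
    intro s _
    exact mul_le_mul_of_nonneg_left (exp_convex_bound hc (hxc s)) (hp0 s)
  have hpc : ∑ s, p s * c = c := by rw [← Finset.sum_mul, hp1, one_mul]
  have expand : ∑ s, p s * (((c + x s) / (2 * c)) * Real.exp (t * c)
          + ((c - x s) / (2 * c)) * Real.exp (-(t * c)))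
      = (Real.exp (t * c) + Real.exp (-(t * c))) / 2 := by
    have key : ∀ s, p s * (((c + x s) / (2 * c)) * Real.exp (t * c)
          + ((c - x s) / (2 * c)) * Real.exp (-(t * c)))
        = (Real.exp (t * c) / (2 * c)) * (p s * c + p s * x s)
          + (Real.exp (-(t * c)) / (2 * c)) * (p s * c - p s * x s) := by
      intro s; field_simp
    rw [Finset.sum_congr rfl (fun s _ => key s), Finset.sum_add_distrib,
      ← Finset.mul_sum, ← Finset.mul_sum, Finset.sum_add_distrib,
      Finset.sum_sub_distrib, hpc, hx0]
    field_simp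
    ring
  calc ∑ s, p s * Real.exp (t * x s) ≤ _ := step
    _ = (Real.exp (t * c) + Real.exp (-(t * c))) / 2 := expand
    _ ≤ 1 + (t * c) ^ 2 := cosh_quad_bound htc

set_option maxHeartbeats 1000000 in
lemma exp_moment_key {Ω S A : Type*} {mΩ : MeasurableSpace Ω}
    [Fintype S] [Nonempty S] [Fintype A] [Nonempty A]
    [MeasurableSpace S] [MeasurableSingletonClass S]
    [MeasurableSpace A] [MeasurableSingletonClass A]
    (μ : Measure Ω) [IsProbabilityMeasure μ]
    (F : Filtration ℕ mΩ)
    (P : S → A → S → ℝ) (hP0 : ∀ s a s', 0 ≤ P s a s') (hP1 : ∀ s a, ∑ s', P s a s' = 1)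
    (r : S → A → ℝ) (h : S → ℝ) (ρ : ℝ)
    (hflat : ∀ s a, h s + ρ = r s a + ∑ s', P s a s' * h s')
    (st : ℕ → Ω → S) (ac : ℕ → Ω → A)
    (hst : ∀ t, Measurable[F t] (st t)) (hac : ∀ t, Measurable[F t] (ac t))
    (hmarkov : ∀ (f : S → ℝ) (t : ℕ),
      μ[(fun ω => f (st (t + 1) ω)) | F t] =ᵐ[μ]
        fun ω => ∑ s', P (st t ω) (ac t ω) s' * f s')
    (m M sp : ℝ) (hhm : ∀ s, m ≤ h s) (hhM : ∀ s, h s ≤ M) (hsp : sp = M - m)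
    (hsppos : 0 < sp)
    (t : ℝ) (htsp : |t| * sp ≤ 1) (k : ℕ) :
    ∫ ω, Real.exp (t * ∑ i ∈ Finset.Icc 1 k,
        (h (st (i+1) ω) - (h (st i ω) + ρ - r (st i ω) (ac i ω)))) ∂μ
      ≤ (1 + (t * sp) ^ 2) ^ k := by
  classical
  have hsp0 : 0 ≤ sp := hsppos.le
  have hmean_mem : ∀ s a, m ≤ (∑ s', P s a s' * h s') ∧ (∑ s', P s a s' * h s') ≤ M := by
    intro s a
    constructor
    · calc m = ∑ s', P s a s' * m := by rw [← Finset.sum_mul, hP1, one_mul]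
        _ ≤ ∑ s', P s a s' * h s' :=
          Finset.sum_le_sum fun s' _ => mul_le_mul_of_nonneg_left (hhm s') (hP0 s a s')
    · calc (∑ s', P s a s' * h s') ≤ ∑ s', P s a s' * M :=
          Finset.sum_le_sum fun s' _ => mul_le_mul_of_nonneg_left (hhM s') (hP0 s a s')
        _ = M := by rw [← Finset.sum_mul, hP1, one_mul]
  set Y : ℕ → Ω → ℝ := fun i ω =>
    h (st (i + 1) ω) - (h (st i ω) + ρ - r (st i ω) (ac i ω)) with hY
  set Sn : ℕ → Ω → ℝ := fun k ω => ∑ i ∈ Finset.Icc 1 k, Y i ω with hSn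
  show ∫ ω, Real.exp (t * Sn k ω) ∂μ ≤ (1 + (t * sp) ^ 2) ^ k
  have hYbd : ∀ i ω, |Y i ω| ≤ sp := by
    intro i ω
    have halt : Y i ω = h (st (i + 1) ω) - ∑ s', P (st i ω) (ac i ω) s' * h s' := by
      have := hflat (st i ω) (ac i ω)
      simp only [hY]
      linarith
    rw [halt, abs_le, hsp]
    obtain ⟨h1, h2⟩ := hmean_mem (st i ω) (ac i ω)
    constructor <;> [linarith [hhm (st (i+1) ω)]; linarith [hhM (st (i+1) ω)]]
  have hSnbd : ∀ k ω, |Sn k ω| ≤ k * sp := by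
    intro k ω
    calc |Sn k ω| ≤ ∑ i ∈ Finset.Icc 1 k, |Y i ω| := Finset.abs_sum_le_sum_abs _ _
      _ ≤ ∑ _i ∈ Finset.Icc 1 k, sp := Finset.sum_le_sum fun i _ => hYbd i ω
      _ = k * sp := by rw [Finset.sum_const, Nat.card_Icc]; simp [nsmul_eq_mul]
  have hstm : ∀ i, Measurable (st i) := fun i => (hst i).mono (F.le i) le_rfl
  have hacm : ∀ i, Measurable (ac i) := fun i => (hac i).mono (F.le i) le_rfl
  have hYmeasF : ∀ i k : ℕ, i + 1 ≤ k → Measurable[F k] (Y i) := by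
    intro i k hik
    have h1 : Measurable[F k] (fun ω => h (st (i+1) ω)) :=
      (measurable_of_countable h).comp ((hst (i+1)).mono (F.mono hik) le_rfl)
    have h2 : Measurable[F k] ((fun q : S × A => h q.1 + ρ - r q.1 q.2) ∘
        (fun ω => (st i ω, ac i ω))) :=
      (measurable_of_countable _).comp
        (((hst i).mono (F.mono (by omega)) le_rfl).prodMk
          ((hac i).mono (F.mono (by omega)) le_rfl))
    exact h1.sub h2
  have hYmeas : ∀ i, Measurable (Y i) := fun i =>
    (hYmeasF i (i+1) le_rfl).mono (F.le _) le_rfl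
  have hSnmeasF : ∀ k : ℕ, Measurable[F (k+1)] (Sn k) := by
    intro k
    apply Finset.measurable_sum
    intro i hi
    exact hYmeasF i (k+1) (by have := (Finset.mem_Icc.mp hi).2; omega)
  have hSnmeas : ∀ k, Measurable (Sn k) := fun k =>
    (hSnmeasF k).mono (F.le _) le_rfl
  have hbd_int : ∀ (G : Ω → ℝ) (C : ℝ), Measurable G → (∀ ω, |G ω| ≤ C) →
      Integrable G μ := by
    intro G C hGm hGC
    exact (integrable_const C).mono' hGm.aestronglyMeasurable
      (Filter.Eventually.of_forall (fun ω => by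
        simpa [Real.norm_eq_abs] using hGC ω))
  have hexpSn_int : ∀ (t : ℝ) (k : ℕ),
      Integrable (fun ω => Real.exp (t * Sn k ω)) μ := by
    intro t k
    apply hbd_int _ (Real.exp (|t| * (k * sp)))
    · exact Real.measurable_exp.comp ((hSnmeas k).const_mul t)
    · intro ω
      rw [abs_of_pos (Real.exp_pos _)]
      apply Real.exp_le_exp.2
      calc t * Sn k ω ≤ |t * Sn k ω| := le_abs_self _
        _ = |t| * |Sn k ω| := abs_mul _ _
        _ ≤ |t| * (k * sp) := mul_le_mul_of_nonneg_left (hSnbd k ω) (abs_nonneg t)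
  have hK0 : (0:ℝ) ≤ 1 + (t * sp) ^ 2 := by positivity
  induction k with
  | zero =>
    have h0 : (fun ω => Real.exp (t * Sn 0 ω)) = fun _ => (1:ℝ) := by
      funext ω
      have : Sn 0 ω = 0 := by simp [hSn]
      rw [this, mul_zero, Real.exp_zero]
    rw [h0]
    simp
  | succ k ih =>
    have hsplit : ∀ ω, Sn (k+1) ω = Sn k ω + Y (k+1) ω := by
      intro ω
      simp only [hSn]
      rw [Finset.sum_Icc_succ_top (by omega)]
    set f : Ω → ℝ := fun ω => Real.exp (t * Sn k ω) with hf
    set g : Ω → ℝ := fun ω => Real.exp (t * Y (k+1) ω) with hg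
    have hfg : (fun ω => Real.exp (t * Sn (k+1) ω)) = f * g := by
      funext ω
      rw [Pi.mul_apply, hf, hg]
      rw [hsplit, mul_add, Real.exp_add]
    have hfF : StronglyMeasurable[F (k+1)] f :=
      (Real.measurable_exp.comp ((hSnmeasF k).const_mul t)).stronglyMeasurable
    have hgm : Measurable g := Real.measurable_exp.comp ((hYmeas (k+1)).const_mul t)
    have hf_int : Integrable f μ := hexpSn_int t k
    have hfg_int : Integrable (f * g) μ := by
      rw [← hfg]; exact hexpSn_int t (k+1)
    have hg_int : Integrable g μ := by
      apply hbd_int _ (Real.exp (|t| * sp)) hgm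
      intro ω
      rw [hg, abs_of_pos (Real.exp_pos _)]
      apply Real.exp_le_exp.2
      calc t * Y (k+1) ω ≤ |t * Y (k+1) ω| := le_abs_self _
        _ = |t| * |Y (k+1) ω| := abs_mul _ _
        _ ≤ |t| * sp := mul_le_mul_of_nonneg_left (hYbd (k+1) ω) (abs_nonneg t)
    have hcond1 : μ[f * g | F (k+1)] =ᵐ[μ] f * μ[g | F (k+1)] :=
      condExp_mul_of_stronglyMeasurable_left hfF hfg_int hg_int
    set B : Ω → ℝ := fun ω =>
      Real.exp (-(t * (h (st (k+1) ω) + ρ - r (st (k+1) ω) (ac (k+1) ω)))) with hB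
    set u : S → ℝ := fun s => Real.exp (t * h s) with hu
    have hgBu : g = fun ω => B ω * u (st (k+1+1) ω) := by
      funext ω
      show Real.exp (t * Y (k+1) ω)
          = Real.exp (-(t * (h (st (k+1) ω) + ρ - r (st (k+1) ω) (ac (k+1) ω))))
            * Real.exp (t * h (st (k+1+1) ω))
      rw [← Real.exp_add]
      congr 1
      simp only [hY]
      ring
    have hBmF : Measurable[F (k+1)] B := by
      have : Measurable[F (k+1)]
          ((fun q : S × A => Real.exp (-(t * (h q.1 + ρ - r q.1 q.2)))) ∘
            (fun ω => (st (k+1) ω, ac (k+1) ω))) :=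
        (measurable_of_countable _).comp ((hst (k+1)).prodMk (hac (k+1)))
      exact this
    have hu_int : Integrable (fun ω => u (st (k+1+1) ω)) μ := by
      apply hbd_int _ (Real.exp (|t| * (|m| + |M|)))
      · exact (measurable_of_countable u).comp (hstm (k+1+1))
      · intro ω
        rw [hu, abs_of_pos (Real.exp_pos _)]
        apply Real.exp_le_exp.2
        have h1 : |h (st (k+1+1) ω)| ≤ |m| + |M| := by
          rw [abs_le]
          constructor
          · have := hhm (st (k+1+1) ω); linarith [neg_abs_le m, le_abs_self M, abs_nonneg M]
          · have := hhM (st (k+1+1) ω); linarith [le_abs_self M, abs_nonneg m]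
        calc t * h (st (k+1+1) ω) ≤ |t * h (st (k+1+1) ω)| := le_abs_self _
          _ = |t| * |h (st (k+1+1) ω)| := abs_mul _ _
          _ ≤ |t| * (|m| + |M|) := mul_le_mul_of_nonneg_left h1 (abs_nonneg t)
    have hcond2 : μ[g | F (k+1)] =ᵐ[μ]
        B * μ[(fun ω => u (st (k+1+1) ω)) | F (k+1)] := by
      have heq : g = B * (fun ω => u (st (k+1+1) ω)) := hgBu
      rw [heq]
      exact condExp_mul_of_stronglyMeasurable_left hBmF.stronglyMeasurable
        (by rw [← heq]; exact hg_int) hu_int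
    have hcond3 : μ[(fun ω => u (st (k+1+1) ω)) | F (k+1)] =ᵐ[μ]
        fun ω => ∑ s', P (st (k+1) ω) (ac (k+1) ω) s' * u s' := hmarkov u (k+1)
    have hpt : ∀ ω, B ω * (∑ s', P (st (k+1) ω) (ac (k+1) ω) s' * u s')
        ≤ 1 + (t * sp) ^ 2 := by
      intro ω
      have hmean : h (st (k+1) ω) + ρ - r (st (k+1) ω) (ac (k+1) ω)
          = ∑ s', P (st (k+1) ω) (ac (k+1) ω) s' * h s' := by
        linarith [hflat (st (k+1) ω) (ac (k+1) ω)]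
      have hrw : B ω * (∑ s', P (st (k+1) ω) (ac (k+1) ω) s' * u s')
          = ∑ s', P (st (k+1) ω) (ac (k+1) ω) s' *
              Real.exp (t * (h s' - ∑ s'', P (st (k+1) ω) (ac (k+1) ω) s'' * h s'')) := by
        show Real.exp (-(t * (h (st (k+1) ω) + ρ - r (st (k+1) ω) (ac (k+1) ω))))
            * (∑ s', P (st (k+1) ω) (ac (k+1) ω) s' * Real.exp (t * h s')) = _
        rw [hmean, Finset.mul_sum]
        apply Finset.sum_congr rfl
        intro s' _
        rw [mul_left_comm, ← Real.exp_add]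
        congr 2
        ring
      rw [hrw]
      apply sum_exp_bound _ _ (hP0 _ _) (hP1 _ _) _ hsppos _ _
      · have hexp : ∀ s', P (st (k+1) ω) (ac (k+1) ω) s' *
            (h s' - ∑ s'', P (st (k+1) ω) (ac (k+1) ω) s'' * h s'')
            = P (st (k+1) ω) (ac (k+1) ω) s' * h s'
              - P (st (k+1) ω) (ac (k+1) ω) s' *
                ∑ s'', P (st (k+1) ω) (ac (k+1) ω) s'' * h s'' := by
          intro s'; ring
        rw [Finset.sum_congr rfl (fun s' _ => hexp s'), Finset.sum_sub_distrib,
          ← Finset.sum_mul, hP1, one_mul, sub_self]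
      · intro s'
        rw [abs_le, hsp]
        obtain ⟨hl, hr⟩ := hmean_mem (st (k+1) ω) (ac (k+1) ω)
        constructor
        · linarith [hhm s']
        · linarith [hhM s']
      · rw [abs_mul, abs_of_nonneg hsp0]
        exact htsp
    have hgK : μ[g | F (k+1)] ≤ᵐ[μ] fun _ => 1 + (t * sp) ^ 2 := by
      filter_upwards [hcond2, hcond3] with ω h2 h3
      rw [h2, Pi.mul_apply, h3]
      exact hpt ω
    have hfpos : ∀ ω, 0 ≤ f ω := fun ω => (Real.exp_pos _).le
    calc ∫ ω, Real.exp (t * Sn (k+1) ω) ∂μ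
        = ∫ ω, (f * g) ω ∂μ := by rw [hfg]
      _ = ∫ ω, (μ[f * g | F (k+1)]) ω ∂μ :=
          (integral_condExp (F.le (k+1))).symm
      _ = ∫ ω, (f * μ[g | F (k+1)]) ω ∂μ := integral_congr_ae hcond1
      _ ≤ ∫ ω, (1 + (t * sp) ^ 2) * f ω ∂μ := by
          apply integral_mono_ae
          · exact integrable_condExp.congr hcond1
          · exact hf_int.const_mul _
          · filter_upwards [hgK] with ω hKω
            rw [Pi.mul_apply]
            calc f ω * (μ[g | F (k+1)]) ω ≤ f ω * (1 + (t * sp) ^ 2) :=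
                mul_le_mul_of_nonneg_left hKω (hfpos ω)
              _ = (1 + (t * sp) ^ 2) * f ω := mul_comm _ _
      _ = (1 + (t * sp) ^ 2) * ∫ ω, f ω ∂μ := integral_const_mul _ _
      _ ≤ (1 + (t * sp) ^ 2) * (1 + (t * sp) ^ 2) ^ k :=
          mul_le_mul_of_nonneg_left ih hK0
      _ = (1 + (t * sp) ^ 2) ^ (k + 1) := by ring


set_option maxHeartbeats 1000000 in
/-- Inequality (3.1) of Lemma B.5 of the paper: in the flat-MDP trajectory setup (all actions
optimal, i.e. `h s + ρ = r s a + ∑ s', P s a s' * h s'` for all `s, a`), for any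
history-dependent algorithm, with probability at least `1 - δ`,
`|∑_{i=1}^{n} (r (s_i) (a_i) - ρ)| ≤ (2√(nγ) + 1) * sp(h)` where `γ = log (2/δ)`. -/
theorem stmt16 {Ω S A : Type*} {mΩ : MeasurableSpace Ω}
    [Fintype S] [Nonempty S] [Fintype A] [Nonempty A]
    [MeasurableSpace S] [MeasurableSingletonClass S]
    [MeasurableSpace A] [MeasurableSingletonClass A]
    (μ : Measure Ω) [IsProbabilityMeasure μ]
    (F : Filtration ℕ mΩ)
    (P : S → A → S → ℝ) (hP0 : ∀ s a s', 0 ≤ P s a s') (hP1 : ∀ s a, ∑ s', P s a s' = 1)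
    (r : S → A → ℝ) (h : S → ℝ) (ρ : ℝ)
    (hflat : ∀ s a, h s + ρ = r s a + ∑ s', P s a s' * h s')
    (st : ℕ → Ω → S) (ac : ℕ → Ω → A)
    (hst : ∀ t, Measurable[F t] (st t)) (hac : ∀ t, Measurable[F t] (ac t))
    (hmarkov : ∀ (f : S → ℝ) (t : ℕ),
      μ[(fun ω => f (st (t + 1) ω)) | F t] =ᵐ[μ]
        fun ω => ∑ s', P (st t ω) (ac t ω) s' * f s')
    (sp : ℝ)
    (hsp : sp = Finset.univ.sup' Finset.univ_nonempty h
                - Finset.univ.inf' Finset.univ_nonempty h)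
    (n : ℕ) (hn : 1 ≤ n)
    (δ : ℝ) (hδ0 : 0 < δ) (hδ1 : δ < 1) (γ : ℝ) (hγ : γ = Real.log (2 / δ)) :
    ENNReal.ofReal (1 - δ) ≤
      μ {ω | |∑ i ∈ Finset.Icc 1 n, (r (st i ω) (ac i ω) - ρ)|
             ≤ (2 * Real.sqrt (n * γ) + 1) * sp} := by
  classical
  -- basic facts about h and sp
  set M : ℝ := Finset.univ.sup' Finset.univ_nonempty h with hM
  set m : ℝ := Finset.univ.inf' Finset.univ_nonempty h with hm
  have hhM : ∀ s : S, h s ≤ M := fun s => Finset.le_sup' h (Finset.mem_univ s)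
  have hhm : ∀ s : S, m ≤ h s := fun s => Finset.inf'_le h (Finset.mem_univ s)
  have hsp0 : 0 ≤ sp := by
    obtain ⟨s⟩ := ‹Nonempty S›
    rw [hsp]; linarith [hhM s, hhm s]
  -- mean of h under a transition lies in [m, M]
  have hmean_mem : ∀ s a, m ≤ (∑ s', P s a s' * h s') ∧ (∑ s', P s a s' * h s') ≤ M := by
    intro s a
    constructor
    · calc m = ∑ s', P s a s' * m := by rw [← Finset.sum_mul, hP1, one_mul]
        _ ≤ ∑ s', P s a s' * h s' :=
          Finset.sum_le_sum fun s' _ => mul_le_mul_of_nonneg_left (hhm s') (hP0 s a s')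
    · calc (∑ s', P s a s' * h s') ≤ ∑ s', P s a s' * M :=
          Finset.sum_le_sum fun s' _ => mul_le_mul_of_nonneg_left (hhM s') (hP0 s a s')
        _ = M := by rw [← Finset.sum_mul, hP1, one_mul]
  -- the martingale differences
  set Y : ℕ → Ω → ℝ := fun i ω =>
    h (st (i + 1) ω) - (h (st i ω) + ρ - r (st i ω) (ac i ω)) with hY
  set Sn : ℕ → Ω → ℝ := fun k ω => ∑ i ∈ Finset.Icc 1 k, Y i ω with hSn
  have hYalt : ∀ i ω, Y i ω = h (st (i + 1) ω) - ∑ s', P (st i ω) (ac i ω) s' * h s' := by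
    intro i ω
    have := hflat (st i ω) (ac i ω)
    simp only [hY]
    linarith
  have hYbd : ∀ i ω, |Y i ω| ≤ sp := by
    intro i ω
    rw [hYalt, abs_le, hsp]
    obtain ⟨h1, h2⟩ := hmean_mem (st i ω) (ac i ω)
    constructor <;> [linarith [hhm (st (i+1) ω)]; linarith [hhM (st (i+1) ω)]]
  have hSnbd : ∀ k ω, |Sn k ω| ≤ k * sp := by
    intro k ω
    calc |Sn k ω| ≤ ∑ i ∈ Finset.Icc 1 k, |Y i ω| := Finset.abs_sum_le_sum_abs _ _
      _ ≤ ∑ _i ∈ Finset.Icc 1 k, sp := Finset.sum_le_sum fun i _ => hYbd i ω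
      _ = k * sp := by rw [Finset.sum_const, Nat.card_Icc]; simp [nsmul_eq_mul]
  -- key identity
  have hident : ∀ ω, ∑ i ∈ Finset.Icc 1 n, (r (st i ω) (ac i ω) - ρ)
      = h (st 1 ω) - h (st (n + 1) ω) + Sn n ω := by
    intro ω
    have : ∀ k : ℕ, ∑ i ∈ Finset.Icc 1 k, (r (st i ω) (ac i ω) - ρ)
        = h (st 1 ω) - h (st (k + 1) ω) + Sn k ω := by
      intro k
      induction k with
      | zero => simp [hSn]
      | succ k ih =>
        rw [Finset.sum_Icc_succ_top (by omega), ih]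
        have : Sn (k+1) ω = Sn k ω + Y (k+1) ω := by
          simp only [hSn]
          rw [Finset.sum_Icc_succ_top (by omega)]
        rw [this]
        simp only [hY]
        ring
    exact this n
  -- pointwise bound on the target quantity
  have hptbd : ∀ ω, |∑ i ∈ Finset.Icc 1 n, (r (st i ω) (ac i ω) - ρ)|
      ≤ sp + |Sn n ω| := by
    intro ω
    rw [hident]
    have h1 : |h (st 1 ω) - h (st (n+1) ω)| ≤ sp := by
      rw [abs_le, hsp]
      constructor <;> [linarith [hhm (st 1 ω), hhM (st (n+1) ω)];
        linarith [hhM (st 1 ω), hhm (st (n+1) ω)]]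
    calc |h (st 1 ω) - h (st (n + 1) ω) + Sn n ω|
        ≤ |h (st 1 ω) - h (st (n+1) ω)| + |Sn n ω| := abs_add_le _ _
      _ ≤ sp + |Sn n ω| := by linarith
  have hγpos : 0 < γ := by
    rw [hγ]
    apply Real.log_pos
    rw [lt_div_iff₀ hδ0]; linarith
  -- case split: deterministic case
  rcases le_or_gt (n : ℝ) (4 * γ) with hcase | hcase
  · -- deterministic: n ≤ 2√(nγ)
    have hdet : ∀ ω, |∑ i ∈ Finset.Icc 1 n, (r (st i ω) (ac i ω) - ρ)|
        ≤ (2 * Real.sqrt (n * γ) + 1) * sp := by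
      intro ω
      have h1 : (n : ℝ) ≤ 2 * Real.sqrt (n * γ) := by
        have hn0 : (0:ℝ) ≤ n := Nat.cast_nonneg n
        have : Real.sqrt ((n:ℝ) * n) ≤ Real.sqrt (n * (4 * γ)) :=
          Real.sqrt_le_sqrt (by nlinarith)
        rw [Real.sqrt_mul_self hn0] at this
        calc (n:ℝ) ≤ Real.sqrt ((n:ℝ) * (4 * γ)) := this
          _ = 2 * Real.sqrt ((n:ℝ) * γ) := by
            rw [show (n:ℝ) * (4 * γ) = 4 * ((n:ℝ) * γ) by ring, show (4:ℝ) = 2^2 by norm_num,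
              Real.sqrt_mul (by positivity), Real.sqrt_sq (by norm_num)]
      calc |∑ i ∈ Finset.Icc 1 n, (r (st i ω) (ac i ω) - ρ)| ≤ sp + |Sn n ω| := hptbd ω
        _ ≤ sp + n * sp := by linarith [hSnbd n ω]
        _ ≤ (2 * Real.sqrt (n * γ) + 1) * sp := by nlinarith
    have : {ω | |∑ i ∈ Finset.Icc 1 n, (r (st i ω) (ac i ω) - ρ)|
        ≤ (2 * Real.sqrt (n * γ) + 1) * sp} = Set.univ := by
      ext ω; simpa using hdet ω
    rw [this]
    simp only [measure_univ]
    calc ENNReal.ofReal (1 - δ) ≤ ENNReal.ofReal 1 := ENNReal.ofReal_le_ofReal (by linarith)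
      _ = 1 := ENNReal.ofReal_one
  · -- probabilistic case
    rcases hsp0.eq_or_lt with hspz | hsppos
    · -- sp = 0 : deterministic again
      have hdet : ∀ ω, |∑ i ∈ Finset.Icc 1 n, (r (st i ω) (ac i ω) - ρ)|
          ≤ (2 * Real.sqrt (n * γ) + 1) * sp := by
        intro ω
        have h1 := hptbd ω
        have h2 := hSnbd n ω
        have h3 : 0 ≤ 2 * Real.sqrt ((n:ℝ) * γ) + 1 := by positivity
        nlinarith [abs_nonneg (Sn n ω),
          abs_nonneg (∑ i ∈ Finset.Icc 1 n, (r (st i ω) (ac i ω) - ρ))]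
      have hset : {ω | |∑ i ∈ Finset.Icc 1 n, (r (st i ω) (ac i ω) - ρ)|
          ≤ (2 * Real.sqrt (n * γ) + 1) * sp} = Set.univ := by
        ext ω; simpa using hdet ω
      rw [hset]
      simp only [measure_univ]
      calc ENNReal.ofReal (1 - δ) ≤ ENNReal.ofReal 1 := ENNReal.ofReal_le_ofReal (by linarith)
        _ = 1 := ENNReal.ofReal_one
    -- now sp > 0 and 4γ < n
    have hstm : ∀ i, Measurable (st i) := fun i => (hst i).mono (F.le i) le_rfl
    have hacm : ∀ i, Measurable (ac i) := fun i => (hac i).mono (F.le i) le_rfl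
    have hYmeasF : ∀ i k : ℕ, i + 1 ≤ k → Measurable[F k] (Y i) := by
      intro i k hik
      have h1 : Measurable[F k] (fun ω => h (st (i+1) ω)) :=
        (measurable_of_countable h).comp ((hst (i+1)).mono (F.mono hik) le_rfl)
      have h2 : Measurable[F k] ((fun q : S × A => h q.1 + ρ - r q.1 q.2) ∘
          (fun ω => (st i ω, ac i ω))) :=
        (measurable_of_countable _).comp
          (((hst i).mono (F.mono (by omega)) le_rfl).prodMk
            ((hac i).mono (F.mono (by omega)) le_rfl))
      exact h1.sub h2
    have hYmeas : ∀ i, Measurable (Y i) := fun i =>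
      (hYmeasF i (i+1) le_rfl).mono (F.le _) le_rfl
    have hSnmeasF : ∀ k : ℕ, Measurable[F (k+1)] (Sn k) := by
      intro k
      apply Finset.measurable_sum
      intro i hi
      exact hYmeasF i (k+1) (by have := (Finset.mem_Icc.mp hi).2; omega)
    have hSnmeas : ∀ k, Measurable (Sn k) := fun k =>
      (hSnmeasF k).mono (F.le _) le_rfl
    have hbd_int : ∀ (G : Ω → ℝ) (C : ℝ), Measurable G → (∀ ω, |G ω| ≤ C) →
        Integrable G μ := by
      intro G C hGm hGC
      exact (integrable_const C).mono' hGm.aestronglyMeasurable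
        (Filter.Eventually.of_forall (fun ω => by
          simpa [Real.norm_eq_abs] using hGC ω))
    have hexpSn_int : ∀ (t : ℝ) (k : ℕ),
        Integrable (fun ω => Real.exp (t * Sn k ω)) μ := by
      intro t k
      apply hbd_int _ (Real.exp (|t| * (k * sp)))
      · exact Real.measurable_exp.comp ((hSnmeas k).const_mul t)
      · intro ω
        rw [abs_of_pos (Real.exp_pos _)]
        apply Real.exp_le_exp.2
        calc t * Sn k ω ≤ |t * Sn k ω| := le_abs_self _
          _ = |t| * |Sn k ω| := abs_mul _ _
          _ ≤ |t| * (k * sp) := mul_le_mul_of_nonneg_left (hSnbd k ω) (abs_nonneg t)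
    have key : ∀ t : ℝ, |t| * sp ≤ 1 → ∀ k : ℕ,
        ∫ ω, Real.exp (t * Sn k ω) ∂μ ≤ (1 + (t * sp) ^ 2) ^ k := by
      intro t ht k
      have := exp_moment_key μ F P hP0 hP1 r h ρ hflat st ac hst hac hmarkov
        m M sp hhm hhM hsp hsppos t ht k
      exact this
    -- Chernoff
    have hn0 : (0:ℝ) < n := by exact_mod_cast Nat.pos_of_ne_zero (by omega)
    set t0 : ℝ := Real.sqrt (γ / n) / sp with ht0def
    have ht00 : 0 ≤ t0 := div_nonneg (Real.sqrt_nonneg _) hsp0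
    have ht0sp : t0 * sp = Real.sqrt (γ / n) := by
      rw [ht0def]; field_simp
    have hsq : (t0 * sp) ^ 2 = γ / n := by
      rw [ht0sp, Real.sq_sqrt (by positivity)]
    have ht0le : |t0| * sp ≤ 1 := by
      rw [abs_of_nonneg ht00, ht0sp]
      rw [show (1:ℝ) = Real.sqrt 1 from Real.sqrt_one.symm]
      apply Real.sqrt_le_sqrt
      rw [div_le_one hn0]
      linarith
    have hKpow : (1 + (t0 * sp) ^ 2) ^ n ≤ Real.exp γ := by
      calc (1 + (t0 * sp) ^ 2) ^ n ≤ (Real.exp ((t0 * sp) ^ 2)) ^ n := by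
            apply pow_le_pow_left₀ (by positivity)
            rw [add_comm]
            exact Real.add_one_le_exp _
        _ = Real.exp (n * (t0 * sp) ^ 2) := by rw [← Real.exp_nat_mul]
        _ = Real.exp γ := by rw [hsq]; congr 1; field_simp
    have hKpow' : (1 + (-t0 * sp) ^ 2) ^ n ≤ Real.exp γ := by
      rw [show (-t0 * sp) ^ 2 = (t0 * sp) ^ 2 by ring]
      exact hKpow
    set ε : ℝ := 2 * Real.sqrt (n * γ) * sp with hεdef
    have hsqrtmul : Real.sqrt ((n:ℝ) * γ) * Real.sqrt (γ / (n:ℝ)) = γ := by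
      rw [← Real.sqrt_mul (by positivity)]
      rw [show (n:ℝ) * γ * (γ / (n:ℝ)) = γ ^ 2 by field_simp]
      exact Real.sqrt_sq hγpos.le
    have ht0ε : t0 * ε = 2 * γ := by
      have hspne : sp ≠ 0 := ne_of_gt hsppos
      have hre : t0 * ε
          = 2 * (Real.sqrt ((n:ℝ) * γ) * Real.sqrt (γ / (n:ℝ))) * (sp / sp) := by
        rw [ht0def, hεdef]; ring
      rw [hre, div_self hspne, hsqrtmul, mul_one]
    have hexp_half : Real.exp (-γ) = δ / 2 := by
      rw [hγ, Real.exp_neg, Real.exp_log (by positivity), inv_div]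
    have hchern : ∀ X : Ω → ℝ,
        Integrable (fun ω => Real.exp (t0 * X ω)) μ →
        (∫ ω, Real.exp (t0 * X ω) ∂μ ≤ Real.exp γ) →
        (μ {ω | ε ≤ X ω}).toReal ≤ δ / 2 := by
      intro X hint hbound
      have hmgf : mgf X μ t0 = ∫ ω, Real.exp (t0 * X ω) ∂μ := rfl
      calc (μ {ω | ε ≤ X ω}).toReal
          ≤ Real.exp (-t0 * ε) * mgf X μ t0 :=
            measure_ge_le_exp_mul_mgf ε ht00 hint
        _ ≤ Real.exp (-t0 * ε) * Real.exp γ := by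
            apply mul_le_mul_of_nonneg_left _ (Real.exp_pos _).le
            rw [hmgf]; exact hbound
        _ = Real.exp (-(t0 * ε) + γ) := by rw [← Real.exp_add, neg_mul]
        _ = Real.exp (-γ) := by rw [ht0ε]; ring_nf
        _ = δ / 2 := hexp_half
    have h1 : (μ {ω | ε ≤ Sn n ω}).toReal ≤ δ / 2 :=
      hchern (Sn n) (hexpSn_int t0 n) ((key t0 ht0le n).trans hKpow)
    have hneg_eq : (fun ω => Real.exp (t0 * (-(Sn n ω)))) =
        (fun ω => Real.exp ((-t0) * Sn n ω)) := by
      funext ω; ring_nf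
    have h2 : (μ {ω | ε ≤ -(Sn n ω)}).toReal ≤ δ / 2 := by
      apply hchern (fun ω => -(Sn n ω))
      · rw [show (fun ω => Real.exp (t0 * (fun ω => -(Sn n ω)) ω)) =
            (fun ω => Real.exp ((-t0) * Sn n ω)) from hneg_eq]
        exact hexpSn_int (-t0) n
      · rw [show (fun ω => Real.exp (t0 * (fun ω => -(Sn n ω)) ω)) =
            (fun ω => Real.exp ((-t0) * Sn n ω)) from hneg_eq]
        refine (key (-t0) ?_ n).trans hKpow'
        rw [abs_neg]; exact ht0le
    -- assemble
    set E1 : Set Ω := {ω | ε ≤ Sn n ω} with hE1def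
    set E2 : Set Ω := {ω | ε ≤ -(Sn n ω)} with hE2def
    have hE1m : MeasurableSet E1 := measurableSet_le measurable_const (hSnmeas n)
    have hE2m : MeasurableSet E2 := measurableSet_le measurable_const (hSnmeas n).neg
    have hμ1 : μ E1 ≤ ENNReal.ofReal (δ / 2) := by
      rw [← ENNReal.ofReal_toReal (measure_ne_top μ E1)]
      exact ENNReal.ofReal_le_ofReal h1
    have hμ2 : μ E2 ≤ ENNReal.ofReal (δ / 2) := by
      rw [← ENNReal.ofReal_toReal (measure_ne_top μ E2)]
      exact ENNReal.ofReal_le_ofReal h2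
    have hεsp : ε + sp = (2 * Real.sqrt ((n:ℝ) * γ) + 1) * sp := by
      rw [hεdef]; ring
    have hsub : (E1 ∪ E2)ᶜ ⊆ {ω | |∑ i ∈ Finset.Icc 1 n, (r (st i ω) (ac i ω) - ρ)|
        ≤ (2 * Real.sqrt (n * γ) + 1) * sp} := by
      intro ω hω
      simp only [Set.mem_compl_iff, Set.mem_union, hE1def, hE2def,
        Set.mem_setOf_eq, not_or, not_le] at hω
      obtain ⟨hω1, hω2⟩ := hω
      have habs : |Sn n ω| ≤ ε := abs_le.mpr ⟨by linarith, hω1.le⟩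
      show |∑ i ∈ Finset.Icc 1 n, (r (st i ω) (ac i ω) - ρ)|
          ≤ (2 * Real.sqrt ((n:ℝ) * γ) + 1) * sp
      calc |∑ i ∈ Finset.Icc 1 n, (r (st i ω) (ac i ω) - ρ)|
          ≤ sp + |Sn n ω| := hptbd ω
        _ ≤ sp + ε := by linarith
        _ = (2 * Real.sqrt ((n:ℝ) * γ) + 1) * sp := by rw [← hεsp]; ring
    have hμU : μ (E1 ∪ E2) ≤ ENNReal.ofReal δ := by
      calc μ (E1 ∪ E2) ≤ μ E1 + μ E2 := measure_union_le E1 E2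
        _ ≤ ENNReal.ofReal (δ / 2) + ENNReal.ofReal (δ / 2) := add_le_add hμ1 hμ2
        _ = ENNReal.ofReal δ := by
            rw [← ENNReal.ofReal_add (by positivity) (by positivity)]
            norm_num
    calc ENNReal.ofReal (1 - δ) = ENNReal.ofReal 1 - ENNReal.ofReal δ :=
          ENNReal.ofReal_sub 1 hδ0.le
      _ = 1 - ENNReal.ofReal δ := by rw [ENNReal.ofReal_one]
      _ ≤ 1 - μ (E1 ∪ E2) := tsub_le_tsub_left hμU 1
      _ = μ Set.univ - μ (E1 ∪ E2) := by rw [measure_univ]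
      _ = μ ((E1 ∪ E2)ᶜ) := (measure_compl (hE1m.union hE2m) (measure_ne_top _ _)).symm
      _ ≤ _ := measure_mono hsub
end

section
/- In the flat-MDP trajectory setup, assume additionally that r(s,a) ∈ [0,1] for all s ∈ S, a ∈ A. For n ≥ 1 define the accumulated conditional variance V_n = Σ_{k=1}^{n} V(P(s_k,a_k), h), where V(p,h) := Σ_{s'} p(s')·h(s')² − (Σ_{s'} p(s')·h(s'))². Fix δ ∈ (0,1), set γ = log(2/δ), and fix an integer n ≥ 1. Then: (i) with probability at least 1 − δ, V_n ≤ (√(2·n·γ) + 1)·sp(h)² + n·(2·sp(h) + 1); and (ii) if moreover n ≥ 4·γ·sp(h)² and sp(h) ≥ 10, then with probability at least 1 − δ, V_n ≤ 4·n·sp(h). -/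
open MeasureTheory ProbabilityTheory

lemma bdd_integrable {Ω : Type*} {mΩ : MeasurableSpace Ω} (μ : Measure Ω) [IsFiniteMeasure μ]
    {f : Ω → ℝ} (hf : Measurable f) (C : ℝ) (hC : ∀ ω, |f ω| ≤ C) : Integrable f μ :=
  (integrable_const C).mono' hf.aestronglyMeasurable (Filter.Eventually.of_forall fun ω => by
    simpa using hC ω)

lemma hoeff_sum {S : Type*} [Fintype S] (p f : S → ℝ) (B l : ℝ)
    (hp0 : ∀ s, 0 ≤ p s) (hp1 : ∑ s, p s = 1) (hf0 : ∀ s, 0 ≤ f s) (hfB : ∀ s, f s ≤ B) :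
    ∑ s, p s * Real.exp (l * ((∑ s', p s' * f s') - f s)) ≤ Real.exp (l ^ 2 * B ^ 2 / 2) := by
  set m := ∑ s', p s' * f s' with hm
  have hB0 : 0 ≤ B := by
    by_contra hB
    push_neg at hB
    have : (1:ℝ) ≤ 0 := by
      rw [← hp1]
      apply Finset.sum_nonpos
      intro s _
      nlinarith [hf0 s, hfB s, hp0 s]
    linarith
  have hm0 : 0 ≤ m := Finset.sum_nonneg fun s _ => mul_nonneg (hp0 s) (hf0 s)
  have hmB : m ≤ B := by
    calc m ≤ ∑ s', p s' * B := Finset.sum_le_sum fun s _ =>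
            mul_le_mul_of_nonneg_left (hfB s) (hp0 s)
    _ = B := by rw [← Finset.sum_mul, hp1, one_mul]
  rcases eq_or_lt_of_le hB0 with hB | hB
  · -- B = 0
    have hfz : ∀ s, f s = 0 := fun s => le_antisymm (by rw [← hB] at hfB; exact hfB s) (hf0 s)
    have : m = 0 := by simp [hm, hfz]
    simp only [this, hfz, sub_zero, mul_zero, Real.exp_zero, mul_one]
    rw [hp1]
    exact Real.one_le_exp (by positivity)
  · -- 0 < B
    have key : ∀ s, Real.exp (l * (m - f s)) ≤
        ((B - (m - f s)) / (2 * B)) * Real.exp (-(l * B))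
          + ((B + (m - f s)) / (2 * B)) * Real.exp (l * B) := by
      intro s
      have hu1 : m - f s ≤ B := by linarith [hf0 s]
      have hu2 : -B ≤ m - f s := by linarith [hfB s]
      have ha : 0 ≤ (B - (m - f s)) / (2 * B) := by
        apply div_nonneg (by linarith) (by linarith)
      have hb : 0 ≤ (B + (m - f s)) / (2 * B) := by
        apply div_nonneg (by linarith) (by linarith)
      have hab : (B - (m - f s)) / (2 * B) + (B + (m - f s)) / (2 * B) = 1 := by
        field_simp; ring
      have := convexOn_exp.2 (Set.mem_univ (-(l * B))) (Set.mem_univ (l * B)) ha hb hab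
      simp only [smul_eq_mul] at this
      have harg : (B - (m - f s)) / (2 * B) * (-(l * B)) + (B + (m - f s)) / (2 * B) * (l * B)
          = l * (m - f s) := by field_simp; ring
      rwa [harg] at this
    calc ∑ s, p s * Real.exp (l * (m - f s))
        ≤ ∑ s, p s * (((B - (m - f s)) / (2 * B)) * Real.exp (-(l * B))
            + ((B + (m - f s)) / (2 * B)) * Real.exp (l * B)) :=
          Finset.sum_le_sum fun s _ => mul_le_mul_of_nonneg_left (key s) (hp0 s)
      _ = (Real.exp (-(l * B)) + Real.exp (l * B)) / 2 := by
          have hrw : ∀ s, p s * (((B - (m - f s)) / (2 * B)) * Real.exp (-(l * B))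
              + ((B + (m - f s)) / (2 * B)) * Real.exp (l * B))
              = p s * ((Real.exp (-(l * B)) + Real.exp (l * B)) / 2)
                + (p s * (m - f s)) * ((Real.exp (l * B) - Real.exp (-(l * B))) / (2 * B)) := by
            intro s
            field_simp
            ring
          rw [Finset.sum_congr rfl fun s _ => hrw s, Finset.sum_add_distrib,
            ← Finset.sum_mul, hp1, one_mul, ← Finset.sum_mul]
          have hz : ∑ s, p s * (m - f s) = 0 := by
            simp only [mul_sub, Finset.sum_sub_distrib, ← Finset.sum_mul, hp1, one_mul]
            simp [hm]
          rw [hz, zero_mul, add_zero]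
      _ ≤ Real.exp (l ^ 2 * B ^ 2 / 2) := by
          have : (Real.exp (-(l * B)) + Real.exp (l * B)) / 2 = Real.cosh (l * B) := by
            rw [Real.cosh_eq]; ring
          rw [this]
          calc Real.cosh (l * B) ≤ Real.exp ((l * B) ^ 2 / 2) := Real.cosh_le_exp_half_sq _
            _ = Real.exp (l ^ 2 * B ^ 2 / 2) := by ring_nf

set_option maxHeartbeats 1000000 in
/-- The quadratic-variation bound inside the proof of Lemma B.5 (3.2) of the paper: in the
flat-MDP trajectory setup with rewards in `[0,1]`, letting
`V_n(ω) = ∑_{k=1}^{n} V(P (s_k) (a_k), h)` with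
`V(p,h) = ∑ s', p s' * (h s')² - (∑ s', p s' * h s')²`, we have
(i) with probability at least `1 - δ`, `V_n ≤ (√(2nγ) + 1)·sp(h)² + n·(2·sp(h) + 1)`; and
(ii) if moreover `n ≥ 4γ·sp(h)²` and `sp(h) ≥ 10`, with probability at least `1 - δ`,
`V_n ≤ 4·n·sp(h)`. Here `γ = log (2/δ)`. -/
theorem stmt18 {Ω S A : Type*} {mΩ : MeasurableSpace Ω}
    [Fintype S] [Nonempty S] [Fintype A] [Nonempty A]
    [MeasurableSpace S] [MeasurableSingletonClass S]
    [MeasurableSpace A] [MeasurableSingletonClass A]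
    (μ : Measure Ω) [IsProbabilityMeasure μ]
    (F : Filtration ℕ mΩ)
    (P : S → A → S → ℝ) (hP0 : ∀ s a s', 0 ≤ P s a s') (hP1 : ∀ s a, ∑ s', P s a s' = 1)
    (r : S → A → ℝ) (hr0 : ∀ s a, 0 ≤ r s a) (hr1 : ∀ s a, r s a ≤ 1)
    (h : S → ℝ) (ρ : ℝ)
    (hflat : ∀ s a, h s + ρ = r s a + ∑ s', P s a s' * h s')
    (st : ℕ → Ω → S) (ac : ℕ → Ω → A)
    (hst : ∀ t, Measurable[F t] (st t)) (hac : ∀ t, Measurable[F t] (ac t))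
    (hmarkov : ∀ (f : S → ℝ) (t : ℕ),
      μ[(fun ω => f (st (t + 1) ω)) | F t] =ᵐ[μ]
        fun ω => ∑ s', P (st t ω) (ac t ω) s' * f s')
    (sp : ℝ)
    (hsp : sp = Finset.univ.sup' Finset.univ_nonempty h
                - Finset.univ.inf' Finset.univ_nonempty h)
    (δ : ℝ) (hδ0 : 0 < δ) (hδ1 : δ < 1) (γ : ℝ) (hγ : γ = Real.log (2 / δ))
    (n : ℕ) (hn : 1 ≤ n) :
    (ENNReal.ofReal (1 - δ) ≤
      μ {ω | ∑ k ∈ Finset.Icc 1 n,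
              (∑ s', P (st k ω) (ac k ω) s' * h s' ^ 2
                - (∑ s', P (st k ω) (ac k ω) s' * h s') ^ 2)
             ≤ (Real.sqrt (2 * n * γ) + 1) * sp ^ 2 + n * (2 * sp + 1)}) ∧
    (4 * γ * sp ^ 2 ≤ n → 10 ≤ sp →
      ENNReal.ofReal (1 - δ) ≤
        μ {ω | ∑ k ∈ Finset.Icc 1 n,
                (∑ s', P (st k ω) (ac k ω) s' * h s' ^ 2
                  - (∑ s', P (st k ω) (ac k ω) s' * h s') ^ 2)
               ≤ 4 * n * sp}) := by
  classical
  have hn1 : (1:ℝ) ≤ (n:ℝ) := by exact_mod_cast hn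
  obtain ⟨a₀⟩ := ‹Nonempty A›
  set L := Finset.univ.inf' Finset.univ_nonempty h with hL
  set U := Finset.univ.sup' Finset.univ_nonempty h with hU
  set g : S → ℝ := fun s => h s - L with hgdef
  have hLle : ∀ s, L ≤ h s := fun s => Finset.inf'_le _ (Finset.mem_univ s)
  have hleU : ∀ s, h s ≤ U := fun s => Finset.le_sup' _ (Finset.mem_univ s)
  have hg0 : ∀ s, 0 ≤ g s := fun s => by simp only [hgdef]; linarith [hLle s]
  have hgsp : ∀ s, g s ≤ sp := fun s => by simp only [hgdef, hsp]; linarith [hleU s]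
  obtain ⟨s₀, -, hs₀⟩ := Finset.exists_mem_eq_inf' (Finset.univ_nonempty (α := S)) h
  have hsp0 : 0 ≤ sp := le_trans (hg0 s₀) (hgsp s₀)
  have hg2sp : ∀ s, g s ^ 2 ≤ sp ^ 2 := fun s => pow_le_pow_left₀ (hg0 s) (hgsp s) 2
  -- ρ ≥ 0
  have hρ0 : 0 ≤ ρ := by
    have hf := hflat s₀ a₀
    have hLs : L ≤ ∑ s', P s₀ a₀ s' * h s' := by
      calc L = ∑ s' : S, P s₀ a₀ s' * L := by rw [← Finset.sum_mul, hP1, one_mul]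
      _ ≤ _ := Finset.sum_le_sum fun s _ => mul_le_mul_of_nonneg_left (hLle s) (hP0 _ _ _)
    have : h s₀ = L := hs₀.symm
    linarith [hr0 s₀ a₀]
  -- sum identities
  have hsumg : ∀ s a, ∑ s', P s a s' * g s' = (∑ s', P s a s' * h s') - L := by
    intro s a
    simp only [hgdef, mul_sub]
    rw [Finset.sum_sub_distrib, ← Finset.sum_mul, hP1, one_mul]
  have hVid : ∀ s a, (∑ s', P s a s' * h s' ^ 2) - (∑ s', P s a s' * h s') ^ 2
      = (∑ s', P s a s' * g s' ^ 2) - (∑ s', P s a s' * g s') ^ 2 := by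
    intro s a
    have e0 : ∀ s', P s a s' * h s' ^ 2
        = P s a s' * g s' ^ 2 + 2 * L * (P s a s' * g s') + P s a s' * L ^ 2 := by
      intro s'; simp only [hgdef]; ring
    have e1 : ∑ s', P s a s' * h s' ^ 2
        = (∑ s', P s a s' * g s' ^ 2) + 2 * L * (∑ s', P s a s' * g s') + L ^ 2 := by
      rw [Finset.sum_congr rfl fun s' _ => e0 s', Finset.sum_add_distrib,
        Finset.sum_add_distrib, ← Finset.mul_sum, ← Finset.sum_mul, hP1, one_mul]
    have e2 : ∑ s', P s a s' * h s' = (∑ s', P s a s' * g s') + L := by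
      rw [hsumg]; ring
    rw [e1, e2]; ring
  have hmean : ∀ s a, ∑ s', P s a s' * g s' = g s + ρ - r s a := by
    intro s a
    rw [hsumg]
    have := hflat s a
    simp only [hgdef]
    linarith
  have hmg0 : ∀ s a, 0 ≤ ∑ s', P s a s' * g s' :=
    fun s a => Finset.sum_nonneg fun s' _ => mul_nonneg (hP0 _ _ _) (hg0 s')
  have hmgsp : ∀ s a, ∑ s', P s a s' * g s' ≤ sp := by
    intro s a
    calc ∑ s', P s a s' * g s' ≤ ∑ s' : S, P s a s' * sp :=
          Finset.sum_le_sum fun s' _ => mul_le_mul_of_nonneg_left (hgsp s') (hP0 _ _ _)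
    _ = sp := by rw [← Finset.sum_mul, hP1, one_mul]
  have hq0 : ∀ s a, 0 ≤ ∑ s', P s a s' * g s' ^ 2 :=
    fun s a => Finset.sum_nonneg fun s' _ => mul_nonneg (hP0 _ _ _) (sq_nonneg _)
  have hqsp : ∀ s a, ∑ s', P s a s' * g s' ^ 2 ≤ sp ^ 2 := by
    intro s a
    calc ∑ s', P s a s' * g s' ^ 2 ≤ ∑ s' : S, P s a s' * sp ^ 2 :=
          Finset.sum_le_sum fun s' _ => mul_le_mul_of_nonneg_left (hg2sp s') (hP0 _ _ _)
    _ = sp ^ 2 := by rw [← Finset.sum_mul, hP1, one_mul]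
  have hdrift : ∀ s a, g s ^ 2 - (∑ s', P s a s' * g s') ^ 2 ≤ 2 * sp + 1 := by
    intro s a
    have h1 : g s - 1 ≤ ∑ s', P s a s' * g s' := by
      rw [hmean]; linarith [hr1 s a]
    have h2 := hmgsp s a
    have h3 := hmg0 s a
    have h4 := hgsp s
    have h5 := hg0 s
    nlinarith [sq_nonneg (g s - ∑ s', P s a s' * g s')]
  -- the martingale increments
  set X : ℕ → Ω → ℝ := fun k ω =>
    (∑ s', P (st k ω) (ac k ω) s' * g s' ^ 2) - g (st (k + 1) ω) ^ 2 with hXdef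
  set M : Ω → ℝ := fun ω => ∑ i ∈ Finset.range n, X (i + 1) ω with hMdef
  have hXbd : ∀ k ω, |X k ω| ≤ sp ^ 2 := by
    intro k ω
    rw [abs_le]
    constructor
    · simp only [hXdef]; linarith [hq0 (st k ω) (ac k ω), hg2sp (st (k+1) ω)]
    · simp only [hXdef]; linarith [hqsp (st k ω) (ac k ω), sq_nonneg (g (st (k+1) ω))]
  -- deterministic bound
  have hdet : ∀ ω, (∑ k ∈ Finset.Icc 1 n,
      ((∑ s', P (st k ω) (ac k ω) s' * h s' ^ 2)
        - (∑ s', P (st k ω) (ac k ω) s' * h s') ^ 2))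
      ≤ M ω + sp ^ 2 + n * (2 * sp + 1) := by
    intro ω
    have hterm : ∀ k : ℕ, (∑ s', P (st k ω) (ac k ω) s' * h s' ^ 2)
        - (∑ s', P (st k ω) (ac k ω) s' * h s') ^ 2
        ≤ X (k) ω + (g (st (k+1) ω) ^ 2 - g (st k ω) ^ 2) + (2 * sp + 1) := by
      intro k
      rw [hVid]
      have hd := hdrift (st k ω) (ac k ω)
      simp only [hXdef]
      linarith
    calc ∑ k ∈ Finset.Icc 1 n, ((∑ s', P (st k ω) (ac k ω) s' * h s' ^ 2)
          - (∑ s', P (st k ω) (ac k ω) s' * h s') ^ 2)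
        = ∑ i ∈ Finset.range n, ((∑ s', P (st (i+1) ω) (ac (i+1) ω) s' * h s' ^ 2)
            - (∑ s', P (st (i+1) ω) (ac (i+1) ω) s' * h s') ^ 2) := by
          rw [← Finset.Ico_add_one_right_eq_Icc, Finset.sum_Ico_eq_sum_range]
          exact Finset.sum_congr rfl fun i _ => by rw [add_comm 1 i]
      _ ≤ ∑ i ∈ Finset.range n, (X (i+1) ω + (g (st (i+1+1) ω) ^ 2 - g (st (i+1) ω) ^ 2)
            + (2 * sp + 1)) := Finset.sum_le_sum fun i _ => hterm (i+1)
      _ = M ω + (g (st (n+1) ω) ^ 2 - g (st 1 ω) ^ 2) + n * (2 * sp + 1) := by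
          rw [Finset.sum_add_distrib, Finset.sum_add_distrib,
            Finset.sum_range_sub (fun i => g (st (i+1) ω) ^ 2) n, Finset.sum_const,
            Finset.card_range, nsmul_eq_mul, hMdef]
      _ ≤ M ω + sp ^ 2 + (n : ℝ) * (2 * sp + 1) := by
          have h1 := hg2sp (st (n+1) ω)
          have h2 := sq_nonneg (g (st 1 ω))
          linarith
  -- measurability
  have hmeasSA : ∀ (j k : ℕ), k ≤ j → ∀ f : S → A → ℝ,
      Measurable[F j] fun ω => f (st k ω) (ac k ω) := by
    intro j k hk f
    exact (measurable_of_countable fun p : S × A => f p.1 p.2).comp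
      (((hst k).mono (F.mono hk) le_rfl).prodMk ((hac k).mono (F.mono hk) le_rfl))
  have hmeasS : ∀ (j k : ℕ), k ≤ j → ∀ f : S → ℝ, Measurable[F j] fun ω => f (st k ω) := by
    intro j k hk f
    exact (measurable_of_countable f).comp ((hst k).mono (F.mono hk) le_rfl)
  have hmeasSA' : ∀ (k : ℕ) (f : S → A → ℝ), Measurable fun ω => f (st k ω) (ac k ω) :=
    fun k f => (hmeasSA k k le_rfl f).mono (F.le k) le_rfl
  have hXmeas : ∀ k, Measurable[F (k + 1)] (X k) := by
    intro k
    exact (hmeasSA (k+1) k k.le_succ fun s a => ∑ s', P s a s' * g s' ^ 2).sub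
      (hmeasS (k+1) (k+1) le_rfl fun s => g s ^ 2)
  have hXmeas' : ∀ k, Measurable (X k) := fun k => (hXmeas k).mono (F.le (k+1)) le_rfl
  have hMmeas : Measurable M := Finset.measurable_sum _ fun i _ => hXmeas' (i + 1)
  have hVmeas : Measurable fun ω => ∑ k ∈ Finset.Icc 1 n,
      ((∑ s', P (st k ω) (ac k ω) s' * h s' ^ 2)
        - (∑ s', P (st k ω) (ac k ω) s' * h s') ^ 2) :=
    Finset.measurable_sum _ fun k _ => hmeasSA' k fun s a =>
      (∑ s', P s a s' * h s' ^ 2) - (∑ s', P s a s' * h s') ^ 2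
  -- main part (i)
  have main_i : ENNReal.ofReal (1 - δ) ≤
      μ {ω | ∑ k ∈ Finset.Icc 1 n,
              (∑ s', P (st k ω) (ac k ω) s' * h s' ^ 2
                - (∑ s', P (st k ω) (ac k ω) s' * h s') ^ 2)
             ≤ (Real.sqrt (2 * n * γ) + 1) * sp ^ 2 + n * (2 * sp + 1)} := by
    rcases eq_or_lt_of_le hsp0 with hspz | hsppos
    · -- degenerate case sp = 0 : h is constant, all variance terms vanish
      have hhc : ∀ s, h s = L := by
        intro s
        have h1 := hgsp s
        have h2 := hg0 s
        simp only [hgdef] at h1 h2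
        linarith [h1, h2]
      have hset : {ω | ∑ k ∈ Finset.Icc 1 n,
              (∑ s', P (st k ω) (ac k ω) s' * h s' ^ 2
                - (∑ s', P (st k ω) (ac k ω) s' * h s') ^ 2)
             ≤ (Real.sqrt (2 * n * γ) + 1) * sp ^ 2 + n * (2 * sp + 1)} = Set.univ := by
        refine Set.eq_univ_iff_forall.2 fun ω => ?_
        simp only [Set.mem_setOf_eq]
        have hzero : ∀ k, (∑ s', P (st k ω) (ac k ω) s' * h s' ^ 2)
            - (∑ s', P (st k ω) (ac k ω) s' * h s') ^ 2 = 0 := by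
          intro k
          have e1 : ∑ s', P (st k ω) (ac k ω) s' * h s' ^ 2 = L ^ 2 := by
            rw [Finset.sum_congr rfl fun s' _ => by rw [hhc s'], ← Finset.sum_mul, hP1, one_mul]
          have e2 : ∑ s', P (st k ω) (ac k ω) s' * h s' = L := by
            rw [Finset.sum_congr rfl fun s' _ => by rw [hhc s'], ← Finset.sum_mul, hP1, one_mul]
          rw [e1, e2]
          ring
        rw [Finset.sum_congr rfl fun k _ => hzero k, Finset.sum_const, smul_zero]
        have hrhs : (Real.sqrt (2 * n * γ) + 1) * sp ^ 2 + n * (2 * sp + 1) = n := by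
          rw [← hspz]; ring
        rw [hrhs]
        linarith
      rw [hset, measure_univ]
      calc ENNReal.ofReal (1 - δ) ≤ ENNReal.ofReal 1 := ENNReal.ofReal_le_ofReal (by linarith)
        _ = 1 := ENNReal.ofReal_one
    · -- main case sp > 0
      have hγpos : 0 < γ := by
        rw [hγ]
        exact Real.log_pos (by rw [lt_div_iff₀ hδ0]; linarith)
      set t := Real.sqrt (2 * n * γ) * sp ^ 2 with htdef
      have htpos : 0 < t := mul_pos (Real.sqrt_pos.2 (by positivity)) (by positivity)
      set l := t / (n * sp ^ 4) with hldef
      have hlpos : 0 < l := div_pos htpos (by positivity)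
      -- bounds on exp of partial sums
      have hSumBd : ∀ (j : ℕ) (ω : Ω), |∑ i ∈ Finset.range j, X (i + 1) ω| ≤ j * sp ^ 2 := by
        intro j ω
        calc |∑ i ∈ Finset.range j, X (i + 1) ω| ≤ ∑ i ∈ Finset.range j, |X (i + 1) ω| :=
              Finset.abs_sum_le_sum_abs _ _
          _ ≤ ∑ _i ∈ Finset.range j, sp ^ 2 := Finset.sum_le_sum fun i _ => hXbd (i + 1) ω
          _ = j * sp ^ 2 := by rw [Finset.sum_const, Finset.card_range, nsmul_eq_mul]
      have hexpSumBd : ∀ (j : ℕ) (ω : Ω),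
          |Real.exp (l * ∑ i ∈ Finset.range j, X (i + 1) ω)| ≤ Real.exp (|l| * (j * sp ^ 2)) := by
        intro j ω
        rw [abs_of_pos (Real.exp_pos _)]
        apply Real.exp_le_exp.2
        calc l * ∑ i ∈ Finset.range j, X (i + 1) ω
            ≤ |l * ∑ i ∈ Finset.range j, X (i + 1) ω| := le_abs_self _
          _ = |l| * |∑ i ∈ Finset.range j, X (i + 1) ω| := abs_mul _ _
          _ ≤ |l| * (j * sp ^ 2) := mul_le_mul_of_nonneg_left (hSumBd j ω) (abs_nonneg l)
      have hexpSumMeas : ∀ j : ℕ,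
          Measurable fun ω => Real.exp (l * ∑ i ∈ Finset.range j, X (i + 1) ω) := fun j =>
        ((Finset.measurable_sum _ fun i _ => hXmeas' (i + 1)).const_mul l).exp
      have hexpSumInt : ∀ j : ℕ,
          Integrable (fun ω => Real.exp (l * ∑ i ∈ Finset.range j, X (i + 1) ω)) μ := fun j =>
        bdd_integrable μ (hexpSumMeas j) _ (hexpSumBd j)
      -- the MGF induction
      have hMGF : ∀ j : ℕ, ∫ ω, Real.exp (l * ∑ i ∈ Finset.range j, X (i + 1) ω) ∂μ
          ≤ Real.exp (j * (l ^ 2 * sp ^ 4 / 2)) := by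
        intro j
        induction j with
        | zero => simp
        | succ j ih =>
          set Φ : Ω → ℝ := fun ω => Real.exp (l * ∑ i ∈ Finset.range j, X (i + 1) ω)
              * Real.exp (l * ∑ s', P (st (j + 1) ω) (ac (j + 1) ω) s' * g s' ^ 2) with hΦdef
          set Z : Ω → ℝ := fun ω => Real.exp (-(l * g (st (j + 1 + 1) ω) ^ 2)) with hZdef
          have hsplit : (fun ω => Real.exp (l * ∑ i ∈ Finset.range (j + 1), X (i + 1) ω))
              = fun ω => Φ ω * Z ω := by
            funext ω
            rw [Finset.sum_range_succ]
            simp only [hΦdef, hZdef, hXdef]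
            rw [← Real.exp_add, ← Real.exp_add]
            congr 1
            ring
          have hΦm : Measurable[F (j + 1)] Φ := by
            apply Measurable.mul
            · apply Measurable.exp
              apply Measurable.const_mul
              apply Finset.measurable_sum
              intro i hi
              have hii : i + 1 + 1 ≤ j + 1 := by
                have := Finset.mem_range.1 hi; omega
              exact (hXmeas (i + 1)).mono (F.mono hii) le_rfl
            · exact ((hmeasSA (j + 1) (j + 1) le_rfl
                fun s a => ∑ s', P s a s' * g s' ^ 2).const_mul l).exp
          have hΦsm : StronglyMeasurable[F (j + 1)] Φ := hΦm.stronglyMeasurable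
          have hqabs : ∀ ω, l * ∑ s', P (st (j + 1) ω) (ac (j + 1) ω) s' * g s' ^ 2
              ≤ |l| * sp ^ 2 := by
            intro ω
            calc l * ∑ s', P (st (j + 1) ω) (ac (j + 1) ω) s' * g s' ^ 2
                ≤ |l * ∑ s', P (st (j + 1) ω) (ac (j + 1) ω) s' * g s' ^ 2| := le_abs_self _
              _ = |l| * |∑ s', P (st (j + 1) ω) (ac (j + 1) ω) s' * g s' ^ 2| := abs_mul _ _
              _ ≤ |l| * sp ^ 2 := by
                  apply mul_le_mul_of_nonneg_left _ (abs_nonneg l)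
                  rw [abs_of_nonneg (hq0 _ _)]
                  exact hqsp _ _
          have hΦbd : ∀ ω, |Φ ω| ≤ Real.exp (|l| * (j * sp ^ 2)) * Real.exp (|l| * sp ^ 2) := by
            intro ω
            rw [hΦdef, abs_mul]
            apply mul_le_mul (hexpSumBd j ω) _ (abs_nonneg _) (Real.exp_pos _).le
            rw [abs_of_pos (Real.exp_pos _)]
            exact Real.exp_le_exp.2 (hqabs ω)
          have hZbd : ∀ ω, |Z ω| ≤ Real.exp (|l| * sp ^ 2) := by
            intro ω
            rw [hZdef, abs_of_pos (Real.exp_pos _)]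
            apply Real.exp_le_exp.2
            have h1 : -(l * g (st (j + 1 + 1) ω) ^ 2) ≤ |l * g (st (j + 1 + 1) ω) ^ 2| :=
              neg_le_abs _
            rw [abs_mul, abs_of_nonneg (sq_nonneg (g (st (j + 1 + 1) ω)))] at h1
            have h2 := mul_le_mul_of_nonneg_left (hg2sp (st (j + 1 + 1) ω)) (abs_nonneg l)
            linarith
          have hZmeas : Measurable Z :=
            (((hmeasS (j + 1 + 1) (j + 1 + 1) le_rfl fun s => -(l * g s ^ 2)).mono
              (F.le _) le_rfl)).exp
          have hZint : Integrable Z μ := bdd_integrable μ hZmeas _ hZbd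
          have hΦmeas' : Measurable Φ := hΦm.mono (F.le (j + 1)) le_rfl
          have hΦZint : Integrable (Φ * Z) μ := by
            apply bdd_integrable μ (hΦmeas'.mul hZmeas)
              (Real.exp (|l| * (j * sp ^ 2)) * Real.exp (|l| * sp ^ 2) * Real.exp (|l| * sp ^ 2))
            intro ω
            rw [Pi.mul_apply, abs_mul]
            exact mul_le_mul (hΦbd ω) (hZbd ω) (abs_nonneg _) (by positivity)
          have e2 : μ[Φ * Z | F (j + 1)] =ᵐ[μ] Φ * μ[Z | F (j + 1)] :=
            condExp_mul_of_stronglyMeasurable_left hΦsm hΦZint hZint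
          have e3 : μ[Z | F (j + 1)] =ᵐ[μ] fun ω => ∑ s', P (st (j + 1) ω) (ac (j + 1) ω) s'
              * Real.exp (-(l * g s' ^ 2)) := hmarkov (fun s => Real.exp (-(l * g s ^ 2))) (j + 1)
          have hstep : ∫ ω, Φ ω * Z ω ∂μ = ∫ ω, Φ ω *
              (∑ s', P (st (j + 1) ω) (ac (j + 1) ω) s' * Real.exp (-(l * g s' ^ 2))) ∂μ := by
            have e1 : ∫ ω, (Φ * Z) ω ∂μ = ∫ ω, (μ[Φ * Z | F (j + 1)]) ω ∂μ :=
              (integral_condExp (F.le (j + 1))).symm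
            calc ∫ ω, Φ ω * Z ω ∂μ = ∫ ω, (μ[Φ * Z | F (j + 1)]) ω ∂μ := e1
              _ = ∫ ω, Φ ω * (μ[Z | F (j + 1)]) ω ∂μ := by
                  refine integral_congr_ae (e2.mono fun ω hω => ?_)
                  simpa using hω
              _ = ∫ ω, Φ ω * (∑ s', P (st (j + 1) ω) (ac (j + 1) ω) s'
                    * Real.exp (-(l * g s' ^ 2))) ∂μ := by
                  refine integral_congr_ae (e3.mono fun ω hω => ?_)
                  beta_reduce
                  beta_reduce at hω
                  rw [hω]
          have hpt : ∀ ω, Φ ω * (∑ s', P (st (j + 1) ω) (ac (j + 1) ω) s'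
                * Real.exp (-(l * g s' ^ 2)))
              ≤ Real.exp (l * ∑ i ∈ Finset.range j, X (i + 1) ω)
                * Real.exp (l ^ 2 * sp ^ 4 / 2) := by
            intro ω
            have hH := hoeff_sum (P (st (j + 1) ω) (ac (j + 1) ω)) (fun s => g s ^ 2) (sp ^ 2) l
              (fun s => hP0 _ _ s) (hP1 _ _) (fun s => sq_nonneg _) (fun s => hg2sp s)
            rw [show (sp ^ 2) ^ 2 = sp ^ 4 by ring] at hH
            have hcomb : Real.exp (l * ∑ s', P (st (j + 1) ω) (ac (j + 1) ω) s' * g s' ^ 2)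
                * (∑ s', P (st (j + 1) ω) (ac (j + 1) ω) s' * Real.exp (-(l * g s' ^ 2)))
                = ∑ s', P (st (j + 1) ω) (ac (j + 1) ω) s'
                    * Real.exp (l * ((∑ s'', P (st (j + 1) ω) (ac (j + 1) ω) s'' * g s'' ^ 2)
                      - g s' ^ 2)) := by
              rw [Finset.mul_sum]
              refine Finset.sum_congr rfl fun s' _ => ?_
              rw [mul_left_comm]
              congr 1
              rw [← Real.exp_add]
              congr 1
              ring
            calc Φ ω * (∑ s', P (st (j + 1) ω) (ac (j + 1) ω) s' * Real.exp (-(l * g s' ^ 2)))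
                = Real.exp (l * ∑ i ∈ Finset.range j, X (i + 1) ω)
                  * (Real.exp (l * ∑ s', P (st (j + 1) ω) (ac (j + 1) ω) s' * g s' ^ 2)
                    * (∑ s', P (st (j + 1) ω) (ac (j + 1) ω) s'
                      * Real.exp (-(l * g s' ^ 2)))) := by
                  rw [hΦdef]; ring
              _ = Real.exp (l * ∑ i ∈ Finset.range j, X (i + 1) ω)
                  * (∑ s', P (st (j + 1) ω) (ac (j + 1) ω) s'
                    * Real.exp (l * ((∑ s'', P (st (j + 1) ω) (ac (j + 1) ω) s'' * g s'' ^ 2)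
                      - g s' ^ 2))) := by rw [hcomb]
              _ ≤ Real.exp (l * ∑ i ∈ Finset.range j, X (i + 1) ω)
                  * Real.exp (l ^ 2 * sp ^ 4 / 2) :=
                  mul_le_mul_of_nonneg_left hH (Real.exp_pos _).le
          have hint1 : Integrable (fun ω => Φ ω *
              (∑ s', P (st (j + 1) ω) (ac (j + 1) ω) s' * Real.exp (-(l * g s' ^ 2)))) μ := by
            apply bdd_integrable μ (hΦmeas'.mul (hmeasSA' (j + 1)
                fun s a => ∑ s', P s a s' * Real.exp (-(l * g s' ^ 2))))
              ((Real.exp (|l| * (j * sp ^ 2)) * Real.exp (|l| * sp ^ 2))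
                * Real.exp (|l| * sp ^ 2))
            intro ω
            rw [Pi.mul_apply, abs_mul]
            apply mul_le_mul (hΦbd ω) _ (abs_nonneg _) (by positivity)
            rw [abs_of_nonneg (Finset.sum_nonneg fun s' _ =>
              mul_nonneg (hP0 _ _ _) (Real.exp_pos _).le)]
            calc ∑ s', P (st (j + 1) ω) (ac (j + 1) ω) s' * Real.exp (-(l * g s' ^ 2))
                ≤ ∑ s' : S, P (st (j + 1) ω) (ac (j + 1) ω) s' * Real.exp (|l| * sp ^ 2) := by
                  refine Finset.sum_le_sum fun s' _ => mul_le_mul_of_nonneg_left ?_ (hP0 _ _ _)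
                  apply Real.exp_le_exp.2
                  have h1 : -(l * g s' ^ 2) ≤ |l * g s' ^ 2| := neg_le_abs _
                  rw [abs_mul, abs_of_nonneg (sq_nonneg (g s'))] at h1
                  have h2 := mul_le_mul_of_nonneg_left (hg2sp s') (abs_nonneg l)
                  linarith
              _ = Real.exp (|l| * sp ^ 2) := by rw [← Finset.sum_mul, hP1, one_mul]
          have hint2 : Integrable (fun ω => Real.exp (l * ∑ i ∈ Finset.range j, X (i + 1) ω)
              * Real.exp (l ^ 2 * sp ^ 4 / 2)) μ := (hexpSumInt j).mul_const _
          calc ∫ ω, Real.exp (l * ∑ i ∈ Finset.range (j + 1), X (i + 1) ω) ∂μ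
              = ∫ ω, Φ ω * Z ω ∂μ := by rw [hsplit]
            _ = ∫ ω, Φ ω * (∑ s', P (st (j + 1) ω) (ac (j + 1) ω) s'
                  * Real.exp (-(l * g s' ^ 2))) ∂μ := hstep
            _ ≤ ∫ ω, Real.exp (l * ∑ i ∈ Finset.range j, X (i + 1) ω)
                  * Real.exp (l ^ 2 * sp ^ 4 / 2) ∂μ := integral_mono hint1 hint2 hpt
            _ = (∫ ω, Real.exp (l * ∑ i ∈ Finset.range j, X (i + 1) ω) ∂μ)
                  * Real.exp (l ^ 2 * sp ^ 4 / 2) := integral_mul_const _ _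
            _ ≤ Real.exp (j * (l ^ 2 * sp ^ 4 / 2)) * Real.exp (l ^ 2 * sp ^ 4 / 2) :=
                  mul_le_mul_of_nonneg_right ih (Real.exp_pos _).le
            _ = Real.exp ((j + 1 : ℕ) * (l ^ 2 * sp ^ 4 / 2)) := by
                  rw [← Real.exp_add]
                  congr 1
                  push_cast
                  ring
      -- Markov inequality
      have hMint : Integrable (fun ω => Real.exp (l * M ω)) μ := hexpSumInt n
      have hmark := mul_meas_ge_le_integral_of_nonneg
        (Filter.Eventually.of_forall fun ω => (Real.exp_pos (l * M ω)).le) hMint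
        (Real.exp (l * t))
      have hIle : ∫ ω, Real.exp (l * M ω) ∂μ ≤ Real.exp (n * (l ^ 2 * sp ^ 4 / 2)) := hMGF n
      have ht2 : t ^ 2 = 2 * n * γ * sp ^ 4 := by
        rw [htdef, mul_pow, Real.sq_sqrt (by positivity)]
        ring
      have hlt : l * t = 2 * γ := by
        rw [hldef]
        field_simp
        linear_combination ht2
      have hl2 : l ^ 2 * sp ^ 4 * n = 2 * γ := by
        rw [hldef, div_pow]
        field_simp
        have hsq := Real.sq_sqrt (show (0:ℝ) ≤ 2 * n * γ by positivity)
        linear_combination ((n:ℝ) * sp ^ 4) * ht2 + (sp ^ 4 - sp ^ 8 * n) * hsq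
      have hexparith : Real.exp (n * (l ^ 2 * sp ^ 4 / 2)) / Real.exp (l * t)
          = Real.exp (-γ) := by
        rw [← Real.exp_sub]
        congr 1
        rw [hlt]
        linarith [hl2]
      have hprob : μ {ω | t < M ω} ≤ ENNReal.ofReal (δ / 2) := by
        have hss : {ω | t < M ω} ⊆ {ω | Real.exp (l * t) ≤ Real.exp (l * M ω)} :=
          fun ω hω => Real.exp_le_exp.2 (mul_le_mul_of_nonneg_left (le_of_lt hω) hlpos.le)
        refine le_trans (measure_mono hss) ?_
        have htoReal : (μ {ω | Real.exp (l * t) ≤ Real.exp (l * M ω)}).toReal ≤ δ / 2 := by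
          have hd : (μ {ω | Real.exp (l * t) ≤ Real.exp (l * M ω)}).toReal
              ≤ (∫ ω, Real.exp (l * M ω) ∂μ) / Real.exp (l * t) := by
            rw [le_div_iff₀ (Real.exp_pos _)]
            calc (μ {ω | Real.exp (l * t) ≤ Real.exp (l * M ω)}).toReal * Real.exp (l * t)
                = Real.exp (l * t)
                  * (μ {ω | Real.exp (l * t) ≤ Real.exp (l * M ω)}).toReal := mul_comm _ _
              _ ≤ ∫ ω, Real.exp (l * M ω) ∂μ := hmark
          have hd2 : (∫ ω, Real.exp (l * M ω) ∂μ) / Real.exp (l * t)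
              ≤ Real.exp (n * (l ^ 2 * sp ^ 4 / 2)) / Real.exp (l * t) :=
            (div_le_div_iff_of_pos_right (Real.exp_pos _)).2 hIle
          rw [hexparith] at hd2
          have hexpγ : Real.exp (-γ) = δ / 2 := by
            rw [hγ, Real.exp_neg, Real.exp_log (by positivity), inv_div]
          linarith
        exact (ENNReal.le_ofReal_iff_toReal_le (measure_ne_top μ _) (by linarith)).2 htoReal
      -- conclusion
      have hsub : {ω | M ω ≤ t} ⊆ {ω | ∑ k ∈ Finset.Icc 1 n,
              (∑ s', P (st k ω) (ac k ω) s' * h s' ^ 2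
                - (∑ s', P (st k ω) (ac k ω) s' * h s') ^ 2)
             ≤ (Real.sqrt (2 * n * γ) + 1) * sp ^ 2 + n * (2 * sp + 1)} := by
        intro ω hω
        simp only [Set.mem_setOf_eq] at hω ⊢
        refine le_trans (hdet ω) ?_
        have hexp : (Real.sqrt (2 * n * γ) + 1) * sp ^ 2 = t + sp ^ 2 := by
          rw [htdef]; ring
        rw [hexp]
        linarith
      set E := {ω | ∑ k ∈ Finset.Icc 1 n,
              (∑ s', P (st k ω) (ac k ω) s' * h s' ^ 2
                - (∑ s', P (st k ω) (ac k ω) s' * h s') ^ 2)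
             ≤ (Real.sqrt (2 * n * γ) + 1) * sp ^ 2 + n * (2 * sp + 1)} with hEdef
      have hEmeas : MeasurableSet E := measurableSet_le hVmeas measurable_const
      have hcsub : Eᶜ ⊆ {ω | t < M ω} := by
        intro ω hω
        simp only [Set.mem_setOf_eq]
        by_contra hle
        push_neg at hle
        exact hω (hsub hle)
      have hEc : μ Eᶜ ≤ ENNReal.ofReal (δ / 2) := le_trans (measure_mono hcsub) hprob
      have hadd : μ E + μ Eᶜ = 1 := by rw [measure_add_measure_compl hEmeas, measure_univ]
      rw [← ENNReal.add_le_add_iff_right (measure_ne_top μ Eᶜ)]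
      calc ENNReal.ofReal (1 - δ) + μ Eᶜ
          ≤ ENNReal.ofReal (1 - δ) + ENNReal.ofReal (δ / 2) := add_le_add_right hEc _
        _ = ENNReal.ofReal (1 - δ / 2) := by
            rw [← ENNReal.ofReal_add (by linarith) (by linarith)]
            congr 1
            ring
        _ ≤ 1 := ENNReal.ofReal_le_one.2 (by linarith)
        _ = μ E + μ Eᶜ := hadd.symm
  refine ⟨main_i, fun hn4 hsp10 => le_trans main_i (measure_mono fun ω hω => ?_)⟩
  -- part (ii): numeric
  simp only [Set.mem_setOf_eq] at hω ⊢
  refine le_trans hω ?_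
  have hsppos : (0:ℝ) < sp := by linarith
  have hγhalf : 1 / 2 ≤ γ := by
    have h2δ : Real.log 2 ≤ Real.log (2 / δ) := by
      have h1 : Real.log (2 / δ) = Real.log 2 - Real.log δ :=
        Real.log_div (by norm_num) (ne_of_gt hδ0)
      have h2 := Real.log_neg hδ0 hδ1
      linarith
    have hexphalf : Real.exp ((1:ℝ)/2) ≤ 2 := by
      have he := Real.add_one_le_exp (-(1/2) : ℝ)
      have hmul : Real.exp ((1:ℝ)/2) * Real.exp (-(1/2) : ℝ) = 1 := by
        rw [← Real.exp_add]; norm_num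
      nlinarith [Real.exp_pos ((1:ℝ)/2), Real.exp_pos (-(1/2) : ℝ)]
    have hlog2 : (1:ℝ)/2 ≤ Real.log 2 := by
      rw [Real.le_log_iff_exp_le (by norm_num : (0:ℝ) < 2)]
      exact hexphalf
    rw [hγ]; linarith
  have hspsq : sp ^ 2 ≤ (n:ℝ) / 2 := by nlinarith [sq_nonneg sp]
  have hsqrt : Real.sqrt (2 * n * γ) * sp ^ 2 ≤ 3 / 4 * n * sp := by
    have hs1 : Real.sqrt (2 * n * γ) ≤ 3 / 4 * n / sp := by
      rw [show (3:ℝ) / 4 * n / sp = Real.sqrt ((3 / 4 * n / sp) ^ 2) from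
        (Real.sqrt_sq (by positivity)).symm]
      apply Real.sqrt_le_sqrt
      rw [div_pow, le_div_iff₀ (by positivity)]
      nlinarith
    calc Real.sqrt (2 * n * γ) * sp ^ 2 ≤ (3 / 4 * n / sp) * sp ^ 2 :=
          mul_le_mul_of_nonneg_right hs1 (sq_nonneg sp)
    _ = 3 / 4 * n * sp := by field_simp
  nlinarith [mul_le_mul_of_nonneg_left hsp10 (show (0:ℝ) ≤ (n:ℝ) by linarith)]
end

section
/- In the flat-MDP trajectory setup, fix an integer N ≥ 1, δ ∈ (0,1), and set γ = log(2/δ). Run the process for N steps, producing the trajectory L = {(s_t, a_t, s_{t+1}, r(s_t,a_t))}_{1 ≤ t ≤ N}. Fix two distinct states s, s' ∈ S and define recursively: ts_1 = min({t ∈ {1,...,N} : s_t = s} ∪ {N+2}); for k ≥ 1, te_k = min({t : s_t = s', t > ts_k, t ≤ N+1} ∪ {N+2}); for k ≥ 2, ts_k = min({t : s_t = s, t > te_{k−1}, t ≤ N+1} ∪ {N+2}); and let c(s,s',L) = max({k : te_k ≤ N+1} ∪ {0}) be the count of completed passages from s to s'. Then with probability at least 1 − N·δ, for every 1 ≤ c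 ≤ c(s,s',L): | Σ_{k=1}^{c} ( h(s') − h(s) + Σ_{ts_k ≤ t ≤ te_k − 1} ( r(s_t, a_t) − ρ ) ) | ≤ (√(2·N·γ) + 1)·sp(h). -/
set_option linter.unusedSectionVars false

namespace Stmt19Aux

/-- the "mode" process: true iff we are currently inside a passage from `x` to `y`. -/
def mov {S : Type*} [DecidableEq S] (x y : S) (sv : ℕ → S) : ℕ → Bool
  | 0 => false
  | (u+1) => if sv (u+1) = x then true else if sv (u+1) = y then false else mov x y sv u

section Pure

variable {S : Type*} [DecidableEq S] {x y : S} {N : ℕ} {sv : ℕ → S} {tsv tev : ℕ → ℕ}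
variable (hxy : x ≠ y)
variable (Hts1 : tsv 1 = sInf ({t | 1 ≤ t ∧ t ≤ N ∧ sv t = x} ∪ {N + 2}))
variable (Hte : ∀ k, 1 ≤ k → tev k = sInf ({t | sv t = y ∧ tsv k < t ∧ t ≤ N + 1} ∪ {N + 2}))
variable (Hts : ∀ k, 2 ≤ k → tsv k = sInf ({t | sv t = x ∧ tev (k - 1) < t ∧ t ≤ N + 1} ∪ {N + 2}))

lemma sInf_union_mem {A : Set ℕ} {d : ℕ} : sInf (A ∪ {d}) ∈ A ∪ {d} :=
  Nat.sInf_mem (Set.nonempty_of_mem (Set.mem_union_right _ rfl))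

include Hts1 in
lemma ts1_mem : (1 ≤ tsv 1 ∧ tsv 1 ≤ N ∧ sv (tsv 1) = x) ∨ tsv 1 = N + 2 := by
  have := sInf_union_mem (A := {t | 1 ≤ t ∧ t ≤ N ∧ sv t = x}) (d := N + 2)
  rw [← Hts1] at this
  rcases this with h | h
  · exact Or.inl h
  · exact Or.inr h

include Hte in
lemma te_mem (k : ℕ) (hk : 1 ≤ k) :
    (sv (tev k) = y ∧ tsv k < tev k ∧ tev k ≤ N + 1) ∨ tev k = N + 2 := by
  have := sInf_union_mem (A := {t | sv t = y ∧ tsv k < t ∧ t ≤ N + 1}) (d := N + 2)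
  rw [← Hte k hk] at this
  rcases this with h | h
  · exact Or.inl h
  · exact Or.inr h

include Hts in
lemma ts_mem (k : ℕ) (hk : 2 ≤ k) :
    (sv (tsv k) = x ∧ tev (k - 1) < tsv k ∧ tsv k ≤ N + 1) ∨ tsv k = N + 2 := by
  have := sInf_union_mem (A := {t | sv t = x ∧ tev (k - 1) < t ∧ t ≤ N + 1}) (d := N + 2)
  rw [← Hts k hk] at this
  rcases this with h | h
  · exact Or.inl h
  · exact Or.inr h

include Hts1 in
lemma ts1_ge1 : 1 ≤ tsv 1 := by
  rcases ts1_mem Hts1 with ⟨h1, _, _⟩ | h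
  · exact h1
  · omega

include Hts1 Hts in
lemma ts_ge1 (k : ℕ) (hk : 1 ≤ k) : 1 ≤ tsv k := by
  rcases Nat.lt_or_ge k 2 with h2 | h2
  · have hk1 : k = 1 := by omega
    subst hk1; exact ts1_ge1 Hts1
  · rcases ts_mem Hts k h2 with ⟨_, hgt, _⟩ | h <;> omega

include Hts1 Hts in
lemma ts_le (k : ℕ) (hk : 1 ≤ k) : tsv k ≤ N + 2 := by
  rcases Nat.lt_or_ge k 2 with h2 | h2
  · have hk1 : k = 1 := by omega
    subst hk1
    rcases ts1_mem Hts1 with ⟨_, hb, _⟩ | h <;> omega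
  · rcases ts_mem Hts k h2 with ⟨_, _, hb⟩ | h <;> omega

include Hte in
lemma te_le (k : ℕ) (hk : 1 ≤ k) : tev k ≤ N + 2 := by
  rcases te_mem Hte k hk with ⟨_, _, hb⟩ | h <;> omega

include Hte in
lemma ts_lt_te (k : ℕ) (hk : 1 ≤ k) (hle : tsv k ≤ N + 1) : tsv k < tev k := by
  rcases te_mem Hte k hk with ⟨_, hlt, _⟩ | h
  · exact hlt
  · omega

include Hts1 Hte Hts in
lemma ts_le_te (k : ℕ) (hk : 1 ≤ k) : tsv k ≤ tev k := by
  rcases te_mem Hte k hk with ⟨_, hlt, _⟩ | h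
  · omega
  · have := ts_le Hts1 Hts k hk
    omega

include Hts in
lemma te_lt_ts (k : ℕ) (hk : 1 ≤ k) (hle : tev k ≤ N + 1) : tev k < tsv (k + 1) := by
  have h2 : 2 ≤ k + 1 := by omega
  rcases ts_mem Hts (k + 1) h2 with ⟨_, hlt, _⟩ | h
  · simpa using hlt
  · omega

include Hte Hts in
lemma te_le_ts (k : ℕ) (hk : 1 ≤ k) : tev k ≤ tsv (k + 1) := by
  rcases Nat.lt_or_ge (tev k) (N + 2) with hh | hh
  · exact le_of_lt (te_lt_ts Hts k hk (by omega))
  · have h2 : 2 ≤ k + 1 := by omega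
    have hEmpty : {t | sv t = x ∧ tev ((k+1) - 1) < t ∧ t ≤ N + 1} = (∅ : Set ℕ) := by
      ext t; simp only [Set.mem_setOf_eq, Set.mem_empty_iff_false, iff_false]
      rintro ⟨_, hlt, hle⟩
      simp only [Nat.add_sub_cancel] at hlt
      omega
    have hts := Hts (k + 1) h2
    rw [hEmpty, Set.empty_union] at hts
    have hte2 : tev k ≤ N + 2 := te_le Hte k hk
    rw [hts, csInf_singleton]
    omega

include Hts1 Hte Hts in
lemma ts_mono : ∀ j k, 1 ≤ j → j ≤ k → tsv j ≤ tsv k := by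
  intro j k hj hjk
  induction k with
  | zero => omega
  | succ n ih =>
    rcases Nat.lt_or_ge n j with hlt | hge
    · obtain rfl : j = n + 1 := by omega
      exact le_rfl
    · have h1 : 1 ≤ n := by omega
      exact le_trans (ih (by omega))
        (le_trans (ts_le_te Hts1 Hte Hts n h1) (te_le_ts Hte Hts n h1))

include Hts1 Hte Hts in
lemma te_mono : ∀ j k, 1 ≤ j → j ≤ k → tev j ≤ tev k := by
  intro j k hj hjk
  induction k with
  | zero => omega
  | succ n ih =>
    rcases Nat.lt_or_ge n j with hlt | hge
    · obtain rfl : j = n + 1 := by omega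
      exact le_rfl
    · have h1 : 1 ≤ n := by omega
      exact le_trans (ih (by omega))
        (le_trans (te_le_ts Hte Hts n h1) (ts_le_te Hts1 Hte Hts (n+1) (by omega)))

include Hts1 Hte Hts in
lemma te_complete (j k : ℕ) (hj : 1 ≤ j) (hjk : j ≤ k) (hk : tev k ≤ N + 1) :
    tev j ≤ N + 1 := le_trans (te_mono Hts1 Hte Hts j k hj hjk) hk

include Hts1 Hte Hts in
lemma te_ge : ∀ k, 1 ≤ k → tev k ≤ N + 1 → k + 1 ≤ tev k := by
  intro k
  induction k with
  | zero => omega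
  | succ n ih =>
    intro hk hle
    rcases te_mem Hte (n+1) (by omega) with ⟨_, hlt, _⟩ | hh
    · by_cases hn : 1 ≤ n
      · rcases ts_mem Hts (n+1) (by omega) with ⟨_, hlt2, _⟩ | hh2
        · simp only [Nat.add_sub_cancel] at hlt2
          have hten : tev n ≤ N + 1 := by omega
          have := ih hn hten
          omega
        · omega
      · have h1 : (1:ℕ) ≤ tsv 1 := ts1_ge1 Hts1
        obtain rfl : n = 0 := by omega
        simp only [Nat.zero_add] at hlt ⊢
        omega
    · omega


include hxy Hts1 Hte Hts in
lemma invariant : ∀ u, u ≤ N → ∃ mm : ℕ,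
    (∀ k, 1 ≤ k → k ≤ mm → tev k ≤ u) ∧
    (mov x y sv u = true → (tsv (mm+1) ≤ u ∧ u < tev (mm+1))) ∧
    (mov x y sv u = false → u < tsv (mm+1)) := by
  have hyx : ¬ (y = x) := fun hh => hxy hh.symm
  intro u
  induction u with
  | zero =>
    intro _
    refine ⟨0, by omega, ?_, ?_⟩
    · intro hmo; simp [mov] at hmo
    · intro _
      exact lt_of_lt_of_le Nat.zero_lt_one (ts1_ge1 Hts1)
  | succ u ih =>
    intro hu
    obtain ⟨mm, hcomp, hmoT, hmoF⟩ := ih (by omega)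
    by_cases hx : sv (u+1) = x
    · -- state x : mode becomes/stays true
      have hmov : mov x y sv (u+1) = true := by
        simp [mov, hx, hyx]
      rcases Bool.eq_false_or_eq_true (mov x y sv u) with hmT | hmF
      · -- already in a passage: it continues since sv (u+1) = x ≠ y
        obtain ⟨h1, h2⟩ := hmoT hmT
        have hne : tev (mm+1) ≠ u + 1 := by
          intro heq
          rcases te_mem Hte (mm+1) (by omega) with ⟨hy', _, _⟩ | hh
          · rw [heq] at hy'; rw [hy'] at hx; exact hxy hx.symm
          · omega
        refine ⟨mm, fun k hk hkm => le_trans (hcomp k hk hkm) (by omega), ?_, ?_⟩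
        · intro _; exact ⟨by omega, by omega⟩
        · intro hctr; rw [hmov] at hctr; exact absurd hctr (by simp)
      · -- was not in a passage: a new passage starts exactly at u+1
        have hlt : u < tsv (mm+1) := hmoF hmF
        have hle : tsv (mm+1) ≤ u + 1 := by
          by_cases hmm : mm = 0
          · subst hmm
            show tsv 1 ≤ u + 1
            rw [Hts1]
            refine Nat.sInf_le (Set.mem_union_left _ ?_)
            exact ⟨by omega, by omega, hx⟩
          · rw [Hts (mm+1) (by omega)]
            refine Nat.sInf_le (Set.mem_union_left _ ?_)
            have : tev mm ≤ u := hcomp mm (by omega) le_rfl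
            simp only [Nat.add_sub_cancel, Set.mem_setOf_eq]
            exact ⟨hx, by omega, by omega⟩
        have heq : tsv (mm+1) = u + 1 := by omega
        refine ⟨mm, fun k hk hkm => le_trans (hcomp k hk hkm) (by omega), ?_, ?_⟩
        · intro _
          have := ts_lt_te Hte (mm+1) (by omega) (by omega)
          omega
        · intro hctr; rw [hmov] at hctr; exact absurd hctr (by simp)
    · by_cases hy : sv (u+1) = y
      · -- state y : mode becomes/stays false
        have hmov : mov x y sv (u+1) = false := by
          simp [mov, hx, hy, hyx]
        rcases Bool.eq_false_or_eq_true (mov x y sv u) with hmT | hmF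
        · -- passage closes at u+1 : tev (mm+1) = u+1
          obtain ⟨h1, h2⟩ := hmoT hmT
          have hle : tev (mm+1) ≤ u + 1 := by
            rw [Hte (mm+1) (by omega)]
            refine Nat.sInf_le (Set.mem_union_left _ ?_)
            exact ⟨hy, by omega, by omega⟩
          have heq : tev (mm+1) = u + 1 := by omega
          refine ⟨mm + 1, ?_, ?_, ?_⟩
          · intro k hk hkm
            rcases Nat.lt_or_ge k (mm+1) with hlt' | hge'
            · exact le_trans (hcomp k hk (by omega)) (by omega)
            · obtain rfl : k = mm + 1 := by omega
              omega
          · intro hctr; rw [hmov] at hctr; exact absurd hctr (by simp)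
          · intro _
            have := te_lt_ts Hts (mm+1) (by omega) (by omega)
            omega
        · -- not in a passage : stays out; tsv (mm+1) ≠ u+1 since sv (u+1) ≠ x
          have hlt : u < tsv (mm+1) := hmoF hmF
          have hne : tsv (mm+1) ≠ u + 1 := by
            intro heq
            by_cases hmm : mm = 0
            · subst hmm
              have heq1 : tsv 1 = u + 1 := by simpa using heq
              rcases ts1_mem Hts1 with ⟨_, _, hx'⟩ | hh
              · rw [heq1] at hx'; exact hx hx'
              · omega
            · rcases ts_mem Hts (mm+1) (by omega) with ⟨hx', _, _⟩ | hh
              · rw [heq] at hx'; exact hx hx'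
              · omega
          refine ⟨mm, fun k hk hkm => le_trans (hcomp k hk hkm) (by omega), ?_, ?_⟩
          · intro hctr; rw [hmov] at hctr; exact absurd hctr (by simp)
          · intro _; omega
      · -- neither x nor y : mode unchanged
        have hmov : mov x y sv (u+1) = mov x y sv u := by
          simp [mov, hx, hy]
        rcases Bool.eq_false_or_eq_true (mov x y sv u) with hmT | hmF
        · obtain ⟨h1, h2⟩ := hmoT hmT
          have hne : tev (mm+1) ≠ u + 1 := by
            intro heq
            rcases te_mem Hte (mm+1) (by omega) with ⟨hy', _, _⟩ | hh
            · rw [heq] at hy'; exact hy hy'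
            · omega
          refine ⟨mm, fun k hk hkm => le_trans (hcomp k hk hkm) (by omega), ?_, ?_⟩
          · intro _; exact ⟨by omega, by omega⟩
          · intro hctr; rw [hmov, hmT] at hctr; exact absurd hctr (by simp)
        · have hlt : u < tsv (mm+1) := hmoF hmF
          have hne : tsv (mm+1) ≠ u + 1 := by
            intro heq
            by_cases hmm : mm = 0
            · subst hmm
              have heq1 : tsv 1 = u + 1 := by simpa using heq
              rcases ts1_mem Hts1 with ⟨_, _, hx'⟩ | hh
              · rw [heq1] at hx'; exact hx hx'
              · omega
            · rcases ts_mem Hts (mm+1) (by omega) with ⟨hx', _, _⟩ | hh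
              · rw [heq] at hx'; exact hx hx'
              · omega
          refine ⟨mm, fun k hk hkm => le_trans (hcomp k hk hkm) (by omega), ?_, ?_⟩
          · intro hctr; rw [hmov, hmF] at hctr; exact absurd hctr (by simp)
          · intro _; omega

include hxy Hts1 Hte Hts in
lemma mov_iff (u : ℕ) (hu : u ≤ N) :
    mov x y sv u = true ↔ ∃ k, 1 ≤ k ∧ tsv k ≤ u ∧ u < tev k := by
  obtain ⟨mm, hcomp, hmoT, hmoF⟩ := invariant hxy Hts1 Hte Hts u hu
  constructor
  · intro hmo
    obtain ⟨h1, h2⟩ := hmoT hmo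
    exact ⟨mm + 1, by omega, h1, h2⟩
  · rintro ⟨k, hk1, hk2, hk3⟩
    rcases Bool.eq_false_or_eq_true (mov x y sv u) with hmT | hmF
    · exact hmT
    · exfalso
      have hlt : u < tsv (mm+1) := hmoF hmF
      rcases Nat.lt_or_ge mm k with hh | hh
      · -- k ≥ mm + 1 : tsv k ≥ tsv (mm+1) > u
        have := ts_mono Hts1 Hte Hts (mm+1) k (by omega) (by omega)
        omega
      · -- k ≤ mm : tev k ≤ u
        have := hcomp k hk1 hh
        omega


include Hts1 Hte Hts in
lemma sv_ts (k : ℕ) (hk : 1 ≤ k) (hc : tev k ≤ N + 1) : sv (tsv k) = x := by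
  have hmem := te_mem Hte k hk
  rcases hmem with ⟨_, hlt, _⟩ | hh
  · rcases Nat.lt_or_ge k 2 with h2 | h2
    · have hk1 : k = 1 := by omega
      subst hk1
      rcases ts1_mem Hts1 with ⟨_, _, hx'⟩ | hh2
      · exact hx'
      · omega
    · rcases ts_mem Hts k h2 with ⟨hx', _, _⟩ | hh2
      · exact hx'
      · omega
  · omega

include Hte in
lemma sv_te (k : ℕ) (hk : 1 ≤ k) (hc : tev k ≤ N + 1) : sv (tev k) = y := by
  rcases te_mem Hte k hk with ⟨hy', _, _⟩ | hh
  · exact hy'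
  · omega

include Hts1 Hte Hts in
lemma c_complete (cv : ℕ) (Hc : cv = sSup {k | 1 ≤ k ∧ tev k ≤ N + 1}) (hpos : 1 ≤ cv) :
    tev cv ≤ N + 1 := by
  have hbdd : BddAbove {k | 1 ≤ k ∧ tev k ≤ N + 1} := by
    refine ⟨N, fun k hk => ?_⟩
    obtain ⟨hk1, hk2⟩ := hk
    have := te_ge Hts1 Hte Hts k hk1 hk2
    omega
  have hne : {k | 1 ≤ k ∧ tev k ≤ N + 1}.Nonempty := by
    by_contra hcon
    rw [Set.not_nonempty_iff_eq_empty] at hcon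
    rw [hcon, csSup_empty] at Hc
    simp only [Nat.bot_eq_zero] at Hc
    omega
  have := Nat.sSup_mem hne hbdd
  rw [← Hc] at this
  exact this.2

include hxy Hts1 Hte Hts in
lemma sum_partition (cc : ℕ) (hcc : 1 ≤ cc) (hle : tev cc ≤ N + 1) (f : ℕ → ℝ) :
    ∑ u ∈ Finset.Ico 1 (tev cc), (if mov x y sv u then f u else 0)
      = ∑ k ∈ Finset.Icc 1 cc, ∑ u ∈ Finset.Ico (tsv k) (tev k), f u := by
  classical
  rw [← Finset.sum_filter]
  have hbiU : (Finset.Ico 1 (tev cc)).filter (fun u => mov x y sv u = true)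
      = (Finset.Icc 1 cc).biUnion (fun k => Finset.Ico (tsv k) (tev k)) := by
    ext u
    simp only [Finset.mem_filter, Finset.mem_Ico, Finset.mem_biUnion, Finset.mem_Icc]
    constructor
    · rintro ⟨⟨hu1, hu2⟩, hmo⟩
      have huN : u ≤ N := by omega
      obtain ⟨k, hk1, hk2, hk3⟩ := (mov_iff hxy Hts1 Hte Hts u huN).mp hmo
      have hkcc : k ≤ cc := by
        by_contra hcon
        have hmono := ts_mono Hts1 Hte Hts (cc+1) k (by omega) (by omega)
        have := te_lt_ts Hts cc hcc hle
        omega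
      exact ⟨k, ⟨hk1, hkcc⟩, hk2, hk3⟩
    · rintro ⟨k, ⟨hk1, hk2⟩, hu1, hu2⟩
      have hteu : tev k ≤ tev cc := te_mono Hts1 Hte Hts k cc hk1 hk2
      have h1u : 1 ≤ u := le_trans (ts_ge1 Hts1 Hts k hk1) hu1
      have huN : u ≤ N := by omega
      refine ⟨⟨h1u, by omega⟩, (mov_iff hxy Hts1 Hte Hts u huN).mpr ⟨k, hk1, hu1, hu2⟩⟩
  rw [hbiU]
  refine Finset.sum_biUnion ?_
  intro j hj k hk hjk
  simp only [Finset.coe_Icc, Set.mem_Icc] at hj hk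
  have key : ∀ j k, 1 ≤ j → j < k → Disjoint (Finset.Ico (tsv j) (tev j)) (Finset.Ico (tsv k) (tev k)) := by
    intro j k hj1 hjk'
    refine Finset.disjoint_left.mpr fun u hu1 hu2 => ?_
    simp only [Finset.mem_Ico] at hu1 hu2
    have h1 : tev j ≤ tsv (j+1) := te_le_ts Hte Hts j hj1
    have h2 : tsv (j+1) ≤ tsv k := ts_mono Hts1 Hte Hts (j+1) k (by omega) (by omega)
    omega
  rcases Nat.lt_or_ge j k with h | h
  · exact key j k hj.1 h
  · exact (key k j hk.1 (by omega)).symm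

lemma telescope (g : ℕ → ℝ) : ∀ a b : ℕ, a ≤ b →
    ∑ t ∈ Finset.Ico a b, (g t - g (t+1)) = g a - g b := by
  intro a b hab
  induction b, hab using Nat.le_induction with
  | base => simp
  | succ n hn ih =>
    rw [Finset.sum_Ico_succ_top hn, ih]
    ring

section WithActions

variable {A' : Type*} {av : ℕ → A'} {h : S → ℝ} {r : S → A' → ℝ} {ρ : ℝ} {m : S → A' → ℝ}
variable (Hr : ∀ s a, r s a - ρ = h s - m s a)

include hxy Hts1 Hte Hts Hr in
lemma main_identity (cc : ℕ) (hcc1 : 1 ≤ cc) (hle : tev cc ≤ N + 1) :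
    ∑ k ∈ Finset.Icc 1 cc,
        (h y - h x + ∑ t ∈ Finset.Ico (tsv k) (tev k), (r (sv t) (av t) - ρ))
      = ∑ u ∈ Finset.Ico 1 (tev cc),
          (if mov x y sv u then (h (sv (u+1)) - m (sv u) (av u)) else 0) := by
  rw [sum_partition hxy Hts1 Hte Hts cc hcc1 hle]
  refine Finset.sum_congr rfl fun k hk => ?_
  simp only [Finset.mem_Icc] at hk
  obtain ⟨hk1, hk2⟩ := hk
  have htek : tev k ≤ N + 1 := te_complete Hts1 Hte Hts k cc hk1 hk2 hle
  have hsvts : sv (tsv k) = x := sv_ts Hts1 Hte Hts k hk1 htek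
  have hsvte : sv (tev k) = y := sv_te Hte k hk1 htek
  have hab : tsv k ≤ tev k := ts_le_te Hts1 Hte Hts k hk1
  have hsplit : ∀ t, r (sv t) (av t) - ρ
      = (h (sv t) - h (sv (t+1))) + (h (sv (t+1)) - m (sv t) (av t)) := by
    intro t; rw [Hr]; ring
  calc h y - h x + ∑ t ∈ Finset.Ico (tsv k) (tev k), (r (sv t) (av t) - ρ)
      = h y - h x + (∑ t ∈ Finset.Ico (tsv k) (tev k), (h (sv t) - h (sv (t+1)))
          + ∑ t ∈ Finset.Ico (tsv k) (tev k), (h (sv (t+1)) - m (sv t) (av t))) := by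
        rw [← Finset.sum_add_distrib]
        congr 1
        exact Finset.sum_congr rfl fun t _ => hsplit t
    _ = ∑ t ∈ Finset.Ico (tsv k) (tev k), (h (sv (t+1)) - m (sv t) (av t)) := by
        rw [telescope (fun t => h (sv t)) (tsv k) (tev k) hab, hsvts, hsvte]
        ring

end WithActions

end Pure


open Real in
lemma hoeff_piece {S : Type*} [Fintype S] [Nonempty S] (p : S → ℝ) (hp0 : ∀ s, 0 ≤ p s)
    (hp1 : ∑ s, p s = 1) (h : S → ℝ) (sp : ℝ)
    (hsp : sp = Finset.univ.sup' Finset.univ_nonempty h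
      - Finset.univ.inf' Finset.univ_nonempty h)
    (hpos : 0 < sp) (lam : ℝ) :
    ∑ s', p s' * Real.exp (lam * (h s' - ∑ t, p t * h t))
      ≤ Real.exp (lam ^ 2 * sp ^ 2 / 2) := by
  set Hs := Finset.univ.sup' Finset.univ_nonempty h with hHs
  set Hi := Finset.univ.inf' Finset.univ_nonempty h with hHi
  set mu := ∑ t, p t * h t with hmu
  have hble : ∀ s : S, Hi ≤ h s ∧ h s ≤ Hs := fun s =>
    ⟨Finset.inf'_le h (Finset.mem_univ s), Finset.le_sup' h (Finset.mem_univ s)⟩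
  have hmu_le : mu ≤ Hs := by
    calc mu ≤ ∑ t, p t * Hs :=
          Finset.sum_le_sum fun t _ => mul_le_mul_of_nonneg_left (hble t).2 (hp0 t)
    _ = Hs := by rw [← Finset.sum_mul, hp1, one_mul]
  have hmu_ge : Hi ≤ mu := by
    calc (Hi : ℝ) = ∑ t, p t * Hi := by rw [← Finset.sum_mul, hp1, one_mul]
    _ ≤ mu := Finset.sum_le_sum fun t _ => mul_le_mul_of_nonneg_left (hble t).1 (hp0 t)
  set E1 := Real.exp (lam * sp) with hE1
  set E2 := Real.exp (-(lam * sp)) with hE2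
  have hcvx : ∀ z : ℝ, |z| ≤ sp →
      Real.exp (lam * z) ≤ (E1 + E2) / 2 + z * ((E1 - E2) / (2 * sp)) := by
    intro z hz
    rw [abs_le] at hz
    have hsp' : (0:ℝ) < 2 * sp := by linarith
    set a := (sp + z) / (2 * sp) with ha_def
    set b := (sp - z) / (2 * sp) with hb_def
    have ha : 0 ≤ a := by
      apply div_nonneg _ hsp'.le; linarith [hz.1]
    have hb : 0 ≤ b := by
      apply div_nonneg _ hsp'.le; linarith [hz.2]
    have hab : a + b = 1 := by
      rw [ha_def, hb_def]; field_simp; ring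
    have hkey : a * (lam * sp) + b * (-(lam * sp)) = lam * z := by
      rw [ha_def, hb_def]; field_simp; ring
    have hcx := convexOn_exp.2 (Set.mem_univ (lam * sp)) (Set.mem_univ (-(lam * sp))) ha hb hab
    simp only [smul_eq_mul] at hcx
    rw [hkey] at hcx
    refine le_trans hcx (le_of_eq ?_)
    rw [ha_def, hb_def, hE1, hE2]
    field_simp
    ring
  have hzero : ∑ s', p s' * (h s' - mu) = 0 := by
    simp only [mul_sub]
    rw [Finset.sum_sub_distrib, ← hmu, ← Finset.sum_mul, hp1, one_mul, sub_self]
  calc ∑ s', p s' * Real.exp (lam * (h s' - mu))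
      ≤ ∑ s', p s' * ((E1 + E2) / 2 + (h s' - mu) * ((E1 - E2) / (2 * sp))) := by
        refine Finset.sum_le_sum fun s' _ => mul_le_mul_of_nonneg_left ?_ (hp0 s')
        refine hcvx _ (abs_le.mpr ⟨?_, ?_⟩)
        · have := (hble s').1; rw [hsp]; linarith
        · have := (hble s').2; rw [hsp]; linarith
    _ = (E1 + E2) / 2 := by
        simp only [mul_add]
        rw [Finset.sum_add_distrib, ← Finset.sum_mul, hp1, one_mul]
        have : ∑ s', p s' * ((h s' - mu) * ((E1 - E2) / (2 * sp)))
            = (∑ s', p s' * (h s' - mu)) * ((E1 - E2) / (2 * sp)) := by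
          rw [Finset.sum_mul]
          exact Finset.sum_congr rfl fun s' _ => by ring
        rw [this, hzero, zero_mul, add_zero]
    _ = Real.cosh (lam * sp) := (Real.cosh_eq _).symm
    _ ≤ Real.exp ((lam * sp) ^ 2 / 2) := Real.cosh_le_exp_half_sq _
    _ = Real.exp (lam ^ 2 * sp ^ 2 / 2) := by rw [mul_pow]

end Stmt19Aux

open MeasureTheory ProbabilityTheory

set_option maxHeartbeats 2000000 in
/-- Lemma 1 (the Main Lemma) of the paper: in the flat-MDP trajectory setup, run the process
for `N` steps and, for two distinct states `x ≠ y`, define the passage times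
`ts k, te k` and the arrival count `c` as in Definition 4 (minima/maxima over empty sets
being `N+2` and `0` respectively, encoded via `sInf`/`sSup` on `ℕ`). Then with probability at
least `1 - Nδ`, for every `1 ≤ cc ≤ c(ω)`,
`|∑_{k=1}^{cc} (h y - h x + ∑_{ts_k ≤ t ≤ te_k - 1} (r (s_t) (a_t) - ρ))|
  ≤ (√(2Nγ) + 1) * sp(h)` where `γ = log (2/δ)`. -/
theorem stmt19 {Ω S A : Type*} {mΩ : MeasurableSpace Ω}
    [Fintype S] [Nonempty S] [Fintype A] [Nonempty A]
    [MeasurableSpace S] [MeasurableSingletonClass S]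
    [MeasurableSpace A] [MeasurableSingletonClass A]
    (μ : Measure Ω) [IsProbabilityMeasure μ]
    (F : Filtration ℕ mΩ)
    (P : S → A → S → ℝ) (hP0 : ∀ s a s', 0 ≤ P s a s') (hP1 : ∀ s a, ∑ s', P s a s' = 1)
    (r : S → A → ℝ) (h : S → ℝ) (ρ : ℝ)
    (hflat : ∀ s a, h s + ρ = r s a + ∑ s', P s a s' * h s')
    (st : ℕ → Ω → S) (ac : ℕ → Ω → A)
    (hst : ∀ t, Measurable[F t] (st t)) (hac : ∀ t, Measurable[F t] (ac t))
    (hmarkov : ∀ (f : S → ℝ) (t : ℕ),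
      μ[(fun ω => f (st (t + 1) ω)) | F t] =ᵐ[μ]
        fun ω => ∑ s', P (st t ω) (ac t ω) s' * f s')
    (sp : ℝ)
    (hsp : sp = Finset.univ.sup' Finset.univ_nonempty h
                - Finset.univ.inf' Finset.univ_nonempty h)
    (N : ℕ) (hN : 1 ≤ N)
    (δ : ℝ) (hδ0 : 0 < δ) (hδ1 : δ < 1) (γ : ℝ) (hγ : γ = Real.log (2 / δ))
    (x y : S) (hxy : x ≠ y)
    (ts te : ℕ → Ω → ℕ) (c : Ω → ℕ)
    (hts1 : ∀ ω, ts 1 ω = sInf ({t | 1 ≤ t ∧ t ≤ N ∧ st t ω = x} ∪ {N + 2}))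
    (hte : ∀ k, 1 ≤ k → ∀ ω,
      te k ω = sInf ({t | st t ω = y ∧ ts k ω < t ∧ t ≤ N + 1} ∪ {N + 2}))
    (hts : ∀ k, 2 ≤ k → ∀ ω,
      ts k ω = sInf ({t | st t ω = x ∧ te (k - 1) ω < t ∧ t ≤ N + 1} ∪ {N + 2}))
    (hc : ∀ ω, c ω = sSup {k | 1 ≤ k ∧ te k ω ≤ N + 1}) :
    ENNReal.ofReal (1 - N * δ) ≤
      μ {ω | ∀ cc, 1 ≤ cc → cc ≤ c ω →
          |∑ k ∈ Finset.Icc 1 cc,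
              (h y - h x + ∑ t ∈ Finset.Ico (ts k ω) (te k ω), (r (st t ω) (ac t ω) - ρ))|
            ≤ (Real.sqrt (2 * N * γ) + 1) * sp} := by
  classical
  obtain ⟨s0⟩ := (inferInstance : Nonempty S)
  set Hs := Finset.univ.sup' Finset.univ_nonempty h with hHs
  set Hi := Finset.univ.inf' Finset.univ_nonempty h with hHi
  have hble : ∀ s : S, Hi ≤ h s ∧ h s ≤ Hs := fun s =>
    ⟨Finset.inf'_le h (Finset.mem_univ s), Finset.le_sup' h (Finset.mem_univ s)⟩
  have hsp0 : 0 ≤ sp := by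
    rw [hsp]; have := hble s0; linarith [this.1, this.2]
  set m : S → A → ℝ := fun s a => ∑ s', P s a s' * h s' with hm
  have hmble : ∀ s a, Hi ≤ m s a ∧ m s a ≤ Hs := by
    intro s a
    constructor
    · calc (Hi : ℝ) = ∑ s', P s a s' * Hi := by rw [← Finset.sum_mul, hP1, one_mul]
      _ ≤ m s a := Finset.sum_le_sum fun t _ =>
          mul_le_mul_of_nonneg_left (hble t).1 (hP0 s a t)
    · calc m s a ≤ ∑ s', P s a s' * Hs := Finset.sum_le_sum fun t _ =>
          mul_le_mul_of_nonneg_left (hble t).2 (hP0 s a t)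
      _ = Hs := by rw [← Finset.sum_mul, hP1, one_mul]
  have hr : ∀ s a, r s a - ρ = h s - m s a := by
    intro s a; have := hflat s a; rw [hm]; linarith
  set D : ℕ → Ω → ℝ := fun t ω => h (st (t+1) ω) - m (st t ω) (ac t ω) with hD
  have hDb : ∀ u ω, |D u ω| ≤ sp := by
    intro u ω
    have hDval : D u ω = h (st (u+1) ω) - m (st u ω) (ac u ω) := rfl
    rw [hDval, abs_le, hsp]
    constructor
    · have h1 := (hble (st (u+1) ω)).1; have h2 := (hmble (st u ω) (ac u ω)).2
      linarith
    · have h1 := (hble (st (u+1) ω)).2; have h2 := (hmble (st u ω) (ac u ω)).1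
      linarith
  set mo : ℕ → Ω → Bool := fun u ω => Stmt19Aux.mov x y (fun t => st t ω) u with hmo
  set Wf : ℕ → Ω → ℝ := fun T ω => ∑ u ∈ Finset.Ico 1 T, (if mo u ω then D u ω else 0)
    with hWf
  -- the pointwise (per-ω) deterministic facts
  have hkeyid : ∀ ω (cc : ℕ), 1 ≤ cc → cc ≤ c ω →
      (2 ≤ te cc ω ∧ te cc ω ≤ N + 1) ∧
      (∑ k ∈ Finset.Icc 1 cc,
          (h y - h x + ∑ t ∈ Finset.Ico (ts k ω) (te k ω), (r (st t ω) (ac t ω) - ρ))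
        = Wf (te cc ω) ω) := by
    intro ω cc hcc1 hcc2
    have Hts1' : (fun k => ts k ω) 1
        = sInf ({t | 1 ≤ t ∧ t ≤ N ∧ (fun t => st t ω) t = x} ∪ {N + 2}) := hts1 ω
    have Hte' : ∀ k, 1 ≤ k → (fun k => te k ω) k
        = sInf ({t | (fun t => st t ω) t = y ∧ (fun k => ts k ω) k < t ∧ t ≤ N + 1}
            ∪ {N + 2}) := fun k hk => hte k hk ω
    have Hts' : ∀ k, 2 ≤ k → (fun k => ts k ω) k
        = sInf ({t | (fun t => st t ω) t = x ∧ (fun k => te k ω) (k - 1) < t ∧ t ≤ N + 1}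
            ∪ {N + 2}) := fun k hk => hts k hk ω
    have hc1 : 1 ≤ c ω := le_trans hcc1 hcc2
    have hcv : te (c ω) ω ≤ N + 1 :=
      Stmt19Aux.c_complete Hts1' Hte' Hts' (c ω) (hc ω) hc1
    have hte_cc : te cc ω ≤ N + 1 :=
      Stmt19Aux.te_complete Hts1' Hte' Hts' cc (c ω) hcc1 hcc2 hcv
    have hte_ge : cc + 1 ≤ te cc ω := Stmt19Aux.te_ge Hts1' Hte' Hts' cc hcc1 hte_cc
    refine ⟨⟨by omega, hte_cc⟩, ?_⟩
    have hid := Stmt19Aux.main_identity hxy Hts1' Hte' Hts'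
      (av := fun t => ac t ω) (h := h) (r := r) (ρ := ρ) (m := m) hr cc hcc1 hte_cc
    exact hid
  -- case sp = 0 : everything is deterministic
  rcases eq_or_lt_of_le hsp0 with hsp_eq | hsppos
  · have huniv : {ω | ∀ cc, 1 ≤ cc → cc ≤ c ω →
        |∑ k ∈ Finset.Icc 1 cc,
            (h y - h x + ∑ t ∈ Finset.Ico (ts k ω) (te k ω), (r (st t ω) (ac t ω) - ρ))|
          ≤ (Real.sqrt (2 * N * γ) + 1) * sp} = Set.univ := by
      refine Set.eq_univ_of_forall fun ω => ?_
      intro cc hcc1 hcc2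
      rw [(hkeyid ω cc hcc1 hcc2).2]
      have hWz : Wf (te cc ω) ω = 0 := by
        rw [hWf]
        refine Finset.sum_eq_zero fun u _ => ?_
        by_cases hmu : mo u ω
        · simp only [if_pos hmu]
          have := hDb u ω
          rw [← hsp_eq] at this
          have := abs_nonneg (D u ω)
          have : |D u ω| = 0 := le_antisymm (by linarith [hDb u ω, hsp_eq]) (abs_nonneg _)
          exact abs_eq_zero.mp this
        · simp only [if_neg hmu]
      rw [hWz, abs_zero, ← hsp_eq, mul_zero]
    rw [huniv, measure_univ]
    have hnd : (0:ℝ) ≤ (N:ℝ) * δ := by positivity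
    exact ENNReal.ofReal_le_one.mpr (by linarith)
  · -- main case : sp > 0
    -- measurability facts
    have hmoFm : ∀ u, Measurable[F u] (mo u) := by
      intro u
      induction u with
      | zero =>
        have h0 : mo 0 = fun _ => false := rfl
        rw [h0]; exact measurable_const
      | succ n ih =>
        have hx1 : MeasurableSet[F (n+1)] {ω | st (n+1) ω = x} :=
          hst (n+1) (measurableSet_singleton x)
        have hy1 : MeasurableSet[F (n+1)] {ω | st (n+1) ω = y} :=
          hst (n+1) (measurableSet_singleton y)
        have ihm : Measurable[F (n+1)] (mo n) := ih.mono (F.mono (Nat.le_succ n)) le_rfl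
        have hform : mo (n+1) = fun ω =>
            if st (n+1) ω = x then true else if st (n+1) ω = y then false else mo n ω := rfl
        rw [hform]
        exact Measurable.ite hx1 measurable_const
          (Measurable.ite hy1 measurable_const ihm)
    have hmoTm : ∀ u T, u ≤ T → Measurable[F T] (mo u) :=
      fun u T hu => (hmoFm u).mono (F.mono hu) le_rfl
    have hmS : ∀ (g : S → ℝ), Measurable g := fun g => measurable_of_countable g
    have hDm : ∀ u T, u + 1 ≤ T → Measurable[F T] (D u) := by
      intro u T hu
      have h1 : Measurable[F T] (st (u+1)) := (hst (u+1)).mono (F.mono hu) le_rfl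
      have h2 : Measurable[F T] (st u) := (hst u).mono (F.mono (by omega)) le_rfl
      have h3 : Measurable[F T] (ac u) := (hac u).mono (F.mono (by omega)) le_rfl
      have h4 : Measurable[F T] fun ω => (st u ω, ac u ω) := h2.prodMk h3
      exact ((hmS h).comp h1).sub
        ((measurable_of_countable (fun p : S × A => m p.1 p.2)).comp h4)
    have hWFm : ∀ T, Measurable[F T] (Wf T) := by
      intro T
      have hform : Wf T = fun ω => ∑ u ∈ Finset.Ico 1 T, (if mo u ω then D u ω else 0) := rfl
      rw [hform]
      refine Finset.measurable_sum _ fun u hu => ?_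
      simp only [Finset.mem_Ico] at hu
      refine Measurable.ite ?_ (hDm u T (by omega)) measurable_const
      exact (hmoTm u T (by omega)) (measurableSet_singleton true)
    have hWm : ∀ T, Measurable (Wf T) := fun T => (hWFm T).mono (F.le T) le_rfl
    have hWb : ∀ (T : ℕ) (ω : Ω), |Wf T ω| ≤ T * sp := by
      intro T ω
      have hform : Wf T ω = ∑ u ∈ Finset.Ico 1 T, (if mo u ω then D u ω else 0) := rfl
      rw [hform]
      calc |∑ u ∈ Finset.Ico 1 T, (if mo u ω then D u ω else 0)|
          ≤ ∑ u ∈ Finset.Ico 1 T, |if mo u ω then D u ω else 0| :=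
            Finset.abs_sum_le_sum_abs _ _
        _ ≤ ∑ u ∈ Finset.Ico 1 T, sp := by
            refine Finset.sum_le_sum fun u _ => ?_
            by_cases hmu : mo u ω
            · simp only [if_pos hmu]; exact hDb u ω
            · simp only [if_neg hmu, abs_zero]; exact hsp0
        _ = ((Finset.Ico 1 T).card : ℝ) * sp := by rw [Finset.sum_const, nsmul_eq_mul]
        _ ≤ T * sp := by
            refine mul_le_mul_of_nonneg_right ?_ hsp0
            rw [Nat.card_Ico]
            exact_mod_cast Nat.sub_le T 1
    have hInt : ∀ (f : Ω → ℝ) (C : ℝ), Measurable f → (∀ ω, |f ω| ≤ C) → Integrable f μ :=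
      fun f C hf hb => (integrable_const C).mono' hf.aestronglyMeasurable
        (Filter.Eventually.of_forall fun ω => by simpa [Real.norm_eq_abs] using hb ω)
    -- the pull-out / Markov-property step
    have hkeyint : ∀ (T : ℕ) (φ : Ω → ℝ) (C : ℝ), Measurable[F T] φ → (∀ ω, |φ ω| ≤ C) →
        ∀ g : S → ℝ, ∫ ω, φ ω * g (st (T+1) ω) ∂μ
          = ∫ ω, φ ω * ∑ s', P (st T ω) (ac T ω) s' * g s' ∂μ := by
      intro T φ C hφm hφb g
      set Bg := Finset.univ.sup' Finset.univ_nonempty (fun s => |g s|) with hBgdef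
      have hBg0 : ∀ s, |g s| ≤ Bg := fun s => by
        rw [hBgdef]; exact Finset.le_sup' (fun s => |g s|) (Finset.mem_univ s)
      set X : Ω → ℝ := fun ω => g (st (T+1) ω) with hXdef
      have hXm : Measurable X := (hmS g).comp ((hst (T+1)).mono (F.le (T+1)) le_rfl)
      have hXint : Integrable X μ := hInt X Bg hXm (fun ω => hBg0 _)
      have hcond := condExp_stronglyMeasurable_mul_of_bound (F.le T)
        hφm.stronglyMeasurable hXint C
        (Filter.Eventually.of_forall fun ω => by simpa [Real.norm_eq_abs] using hφb ω)
      have hmar := hmarkov g T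
      have h2 : (fun ω => φ ω * (μ[X | F T]) ω)
          =ᵐ[μ] (fun ω => φ ω * ∑ s', P (st T ω) (ac T ω) s' * g s') :=
        Filter.EventuallyEq.mul (Filter.EventuallyEq.refl _ φ) hmar
      calc ∫ ω, φ ω * X ω ∂μ
          = ∫ ω, (μ[φ * X | F T]) ω ∂μ := (integral_condExp (F.le T)).symm
        _ = ∫ ω, φ ω * (μ[X | F T]) ω ∂μ := integral_congr_ae hcond
        _ = ∫ ω, φ ω * ∑ s', P (st T ω) (ac T ω) s' * g s' ∂μ := integral_congr_ae h2
    -- the exponential-moment bound (Azuma step)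
    have hmgf : ∀ lam : ℝ, ∀ n : ℕ,
        ∫ ω, Real.exp (lam * Wf (n+1) ω) ∂μ ≤ Real.exp (lam^2*sp^2/2)^n := by
      intro lam n
      induction n with
      | zero =>
        have h0 : ∀ ω, Real.exp (lam * Wf 1 ω) = 1 := by
          intro ω
          have hW1 : Wf 1 ω = 0 := by
            show ∑ u ∈ Finset.Ico 1 1, (if mo u ω then D u ω else 0) = 0
            simp
          rw [hW1, mul_zero, Real.exp_zero]
        have hint1 : ∫ ω, Real.exp (lam * Wf 1 ω) ∂μ = 1 := by
          calc ∫ ω, Real.exp (lam * Wf 1 ω) ∂μ = ∫ _ω, (1:ℝ) ∂μ :=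
                integral_congr_ae (Filter.Eventually.of_forall fun ω => h0 ω)
            _ = 1 := by simp
        simpa using hint1.le
      | succ n ih =>
        set T := n + 1 with hTdef
        have hT1 : 1 ≤ T := by omega
        set c0 := Real.exp (lam^2*sp^2/2) with hc0
        have hc0_1 : 1 ≤ c0 := Real.one_le_exp (by positivity)
        have hc0_0 : 0 ≤ c0 := by linarith
        set CT := Real.exp (|lam| * (T * sp)) with hCT
        set Cg := Real.exp (|lam| * sp) with hCg
        set φp : (Bool × S × A) → Ω → ℝ := fun p ω =>
          if (mo T ω, st T ω, ac T ω) = p then Real.exp (lam * Wf T ω) else 0 with hφp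
        set gp : (Bool × S × A) → S → ℝ := fun p s' =>
          Real.exp (lam * (if p.1 then h s' - m p.2.1 p.2.2 else 0)) with hgp
        have hgpb : ∀ p s', |gp p s'| ≤ Cg := by
          intro p s'
          have : gp p s' = Real.exp (lam * (if p.1 then h s' - m p.2.1 p.2.2 else 0)) := rfl
          rw [this, abs_of_nonneg (Real.exp_nonneg _), hCg]
          apply Real.exp_le_exp.mpr
          calc lam * (if p.1 then h s' - m p.2.1 p.2.2 else 0)
              ≤ |lam * (if p.1 then h s' - m p.2.1 p.2.2 else 0)| := le_abs_self _
            _ = |lam| * |if p.1 then h s' - m p.2.1 p.2.2 else 0| := abs_mul _ _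
            _ ≤ |lam| * sp := by
                refine mul_le_mul_of_nonneg_left ?_ (abs_nonneg _)
                by_cases hb : p.1
                · simp only [if_pos hb]
                  rw [abs_le, hsp]
                  have h1 := (hble s').1
                  have h2 := (hble s').2
                  have h3 := (hmble p.2.1 p.2.2).1
                  have h4 := (hmble p.2.1 p.2.2).2
                  constructor <;> linarith
                · simp only [if_neg hb, abs_zero]; exact hsp0
        have hgpm : ∀ p, Measurable (fun ω => gp p (st (T+1) ω)) :=
          fun p => (hmS (gp p)).comp ((hst (T+1)).mono (F.le (T+1)) le_rfl)
        have hWexp_b : ∀ ω, |Real.exp (lam * Wf T ω)| ≤ CT := by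
          intro ω
          rw [abs_of_nonneg (Real.exp_nonneg _), hCT]
          apply Real.exp_le_exp.mpr
          calc lam * Wf T ω ≤ |lam * Wf T ω| := le_abs_self _
            _ = |lam| * |Wf T ω| := abs_mul _ _
            _ ≤ |lam| * (T * sp) := mul_le_mul_of_nonneg_left (hWb T ω) (abs_nonneg _)
        have hφm : ∀ p, Measurable[F T] (φp p) := by
          intro p
          have hseteq : {ω | (mo T ω, st T ω, ac T ω) = p}
              = {ω | mo T ω = p.1} ∩ ({ω | st T ω = p.2.1} ∩ {ω | ac T ω = p.2.2}) := by
            ext ω; simp [Prod.ext_iff]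
          have hset : MeasurableSet[F T] {ω | (mo T ω, st T ω, ac T ω) = p} := by
            rw [hseteq]
            exact ((hmoTm T T le_rfl) (measurableSet_singleton p.1)).inter
              (((hst T) (measurableSet_singleton p.2.1)).inter
                ((hac T) (measurableSet_singleton p.2.2)))
          exact Measurable.ite hset
            (Real.measurable_exp.comp ((hWFm T).const_mul lam)) measurable_const
        have hφamb : ∀ p, Measurable (φp p) := fun p => (hφm p).mono (F.le T) le_rfl
        have hφb : ∀ p ω, |φp p ω| ≤ CT := by
          intro p ω
          have : φp p ω = if (mo T ω, st T ω, ac T ω) = p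
              then Real.exp (lam * Wf T ω) else 0 := rfl
          rw [this]
          by_cases hcond : (mo T ω, st T ω, ac T ω) = p
          · rw [if_pos hcond]; exact hWexp_b ω
          · rw [if_neg hcond, abs_zero, hCT]; exact Real.exp_nonneg _
        have hφnn : ∀ p ω, 0 ≤ φp p ω := by
          intro p ω
          have : φp p ω = if (mo T ω, st T ω, ac T ω) = p
              then Real.exp (lam * Wf T ω) else 0 := rfl
          rw [this]
          by_cases hcond : (mo T ω, st T ω, ac T ω) = p
          · rw [if_pos hcond]; exact Real.exp_nonneg _
          · rw [if_neg hcond]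
        have hintφ : ∀ p, Integrable (φp p) μ := fun p => hInt (φp p) CT (hφamb p) (hφb p)
        have hintφg : ∀ p, Integrable (fun ω => φp p ω * gp p (st (T+1) ω)) μ := by
          intro p
          refine hInt _ (CT * Cg) ((hφamb p).mul (hgpm p)) fun ω => ?_
          rw [abs_mul]
          exact mul_le_mul (hφb p ω) (hgpb p _) (abs_nonneg _)
            (le_trans (abs_nonneg _) (hφb p ω))
        have hintφS : ∀ p, Integrable
            (fun ω => φp p ω * ∑ s', P (st T ω) (ac T ω) s' * gp p s') μ := by
          intro p
          have hmS2 : Measurable (fun ω => ∑ s', P (st T ω) (ac T ω) s' * gp p s') := by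
            have : (fun ω => ∑ s', P (st T ω) (ac T ω) s' * gp p s')
                = (fun q : S × A => ∑ s', P q.1 q.2 s' * gp p s')
                  ∘ (fun ω => (st T ω, ac T ω)) := rfl
            rw [this]
            exact (measurable_of_countable _).comp
              (((hst T).mono (F.le T) le_rfl).prodMk ((hac T).mono (F.le T) le_rfl))
          have hSb : ∀ ω, |∑ s', P (st T ω) (ac T ω) s' * gp p s'| ≤ Cg := by
            intro ω
            calc |∑ s', P (st T ω) (ac T ω) s' * gp p s'|
                ≤ ∑ s', |P (st T ω) (ac T ω) s' * gp p s'| := Finset.abs_sum_le_sum_abs _ _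
              _ ≤ ∑ s', P (st T ω) (ac T ω) s' * Cg := by
                  refine Finset.sum_le_sum fun s' _ => ?_
                  rw [abs_mul, abs_of_nonneg (hP0 _ _ s')]
                  exact mul_le_mul_of_nonneg_left (hgpb p s') (hP0 _ _ s')
              _ = Cg := by rw [← Finset.sum_mul, hP1, one_mul]
          refine hInt _ (CT * Cg) ((hφamb p).mul hmS2) fun ω => ?_
          rw [abs_mul]
          exact mul_le_mul (hφb p ω) (hSb ω) (abs_nonneg _)
            (le_trans (abs_nonneg _) (hφb p ω))
        have hWsucc : ∀ ω, Wf (T+1) ω = Wf T ω + (if mo T ω then D T ω else 0) := by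
          intro ω
          show ∑ u ∈ Finset.Ico 1 (T+1), (if mo u ω then D u ω else 0)
              = ∑ u ∈ Finset.Ico 1 T, (if mo u ω then D u ω else 0)
                + (if mo T ω then D T ω else 0)
          rw [Finset.sum_Ico_succ_top hT1]
        have hsum1 : ∀ ω, Real.exp (lam * Wf (T+1) ω)
            = ∑ p ∈ Finset.univ, φp p ω * gp p (st (T+1) ω) := by
          intro ω
          have hsingle : ∑ p ∈ Finset.univ, φp p ω * gp p (st (T+1) ω)
              = φp (mo T ω, st T ω, ac T ω) ω
                * gp (mo T ω, st T ω, ac T ω) (st (T+1) ω) := by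
            refine Finset.sum_eq_single _ (fun p _ hne => ?_) (fun hnm => ?_)
            · have : φp p ω = if (mo T ω, st T ω, ac T ω) = p
                  then Real.exp (lam * Wf T ω) else 0 := rfl
              rw [this, if_neg (fun hh => hne hh.symm), zero_mul]
            · exact absurd (Finset.mem_univ _) hnm
          rw [hsingle]
          have h1 : φp (mo T ω, st T ω, ac T ω) ω = Real.exp (lam * Wf T ω) := by
            have : φp (mo T ω, st T ω, ac T ω) ω
                = if (mo T ω, st T ω, ac T ω) = (mo T ω, st T ω, ac T ω)
                  then Real.exp (lam * Wf T ω) else 0 := rfl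
            rw [this, if_pos rfl]
          have h2 : gp (mo T ω, st T ω, ac T ω) (st (T+1) ω)
              = Real.exp (lam * (if mo T ω then D T ω else 0)) := by
            have : gp (mo T ω, st T ω, ac T ω) (st (T+1) ω)
                = Real.exp (lam * (if mo T ω
                    then h (st (T+1) ω) - m (st T ω) (ac T ω) else 0)) := rfl
            rw [this]
          rw [h1, h2, ← Real.exp_add, ← mul_add, ← hWsucc ω]
        have hcoef : ∀ p ω, φp p ω * (∑ s', P (st T ω) (ac T ω) s' * gp p s')
            ≤ φp p ω * c0 := by
          intro p ω
          by_cases hcond : (mo T ω, st T ω, ac T ω) = p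
          · refine mul_le_mul_of_nonneg_left ?_ (hφnn p ω)
            obtain ⟨b, s, a⟩ := p
            have heq : mo T ω = b ∧ st T ω = s ∧ ac T ω = a := by
              simpa [Prod.ext_iff] using hcond
            obtain ⟨hb, hs, ha⟩ := heq
            rw [hs, ha]
            by_cases hbb : b
            · have hgval : ∀ s', gp (b, s, a) s' = Real.exp (lam * (h s' - m s a)) := by
                intro s'
                have : gp (b, s, a) s'
                    = Real.exp (lam * (if b then h s' - m s a else 0)) := rfl
                rw [this, if_pos hbb]
              calc ∑ s', P s a s' * gp (b, s, a) s'
                  = ∑ s', P s a s' * Real.exp (lam * (h s' - ∑ t, P s a t * h t)) := by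
                    refine Finset.sum_congr rfl fun s' _ => ?_
                    rw [hgval s']
                _ ≤ c0 := Stmt19Aux.hoeff_piece (P s a) (hP0 s a) (hP1 s a) h sp hsp
                      hsppos lam
            · have hgval : ∀ s', gp (b, s, a) s' = 1 := by
                intro s'
                have : gp (b, s, a) s'
                    = Real.exp (lam * (if b then h s' - m s a else 0)) := rfl
                rw [this, if_neg hbb, mul_zero, Real.exp_zero]
              calc ∑ s', P s a s' * gp (b, s, a) s'
                  = ∑ s', P s a s' := by
                    refine Finset.sum_congr rfl fun s' _ => ?_
                    rw [hgval s', mul_one]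
                _ = 1 := hP1 s a
                _ ≤ c0 := hc0_1
          · have hz : φp p ω = 0 := by
              have : φp p ω = if (mo T ω, st T ω, ac T ω) = p
                  then Real.exp (lam * Wf T ω) else 0 := rfl
              rw [this, if_neg hcond]
            rw [hz, zero_mul, zero_mul]
        have hsum2 : ∀ ω, ∑ p ∈ Finset.univ, φp p ω = Real.exp (lam * Wf T ω) := by
          intro ω
          refine (Finset.sum_eq_single (mo T ω, st T ω, ac T ω) (fun p _ hne => ?_)
            (fun hnm => absurd (Finset.mem_univ _) hnm)).trans ?_
          · have : φp p ω = if (mo T ω, st T ω, ac T ω) = p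
                then Real.exp (lam * Wf T ω) else 0 := rfl
            rw [this, if_neg (fun hh => hne hh.symm)]
          · have : φp (mo T ω, st T ω, ac T ω) ω
                = if (mo T ω, st T ω, ac T ω) = (mo T ω, st T ω, ac T ω)
                  then Real.exp (lam * Wf T ω) else 0 := rfl
            rw [this, if_pos rfl]
        calc ∫ ω, Real.exp (lam * Wf (T+1) ω) ∂μ
            = ∫ ω, ∑ p ∈ Finset.univ, φp p ω * gp p (st (T+1) ω) ∂μ :=
              integral_congr_ae (Filter.Eventually.of_forall hsum1)
          _ = ∑ p ∈ Finset.univ, ∫ ω, φp p ω * gp p (st (T+1) ω) ∂μ :=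
              integral_finset_sum _ (fun p _ => hintφg p)
          _ = ∑ p ∈ Finset.univ, ∫ ω, φp p ω * ∑ s', P (st T ω) (ac T ω) s' * gp p s' ∂μ :=
              Finset.sum_congr rfl fun p _ => hkeyint T (φp p) CT (hφm p) (hφb p) (gp p)
          _ ≤ ∑ p ∈ Finset.univ, ∫ ω, φp p ω * c0 ∂μ := by
              refine Finset.sum_le_sum fun p _ => ?_
              exact integral_mono (hintφS p) ((hintφ p).mul_const c0) (fun ω => hcoef p ω)
          _ = ∑ p ∈ Finset.univ, (∫ ω, φp p ω ∂μ) * c0 := by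
              refine Finset.sum_congr rfl fun p _ => ?_
              exact integral_mul_const _ _
          _ = (∫ ω, ∑ p ∈ Finset.univ, φp p ω ∂μ) * c0 := by
              rw [integral_finset_sum _ (fun p _ => hintφ p), Finset.sum_mul]
          _ = (∫ ω, Real.exp (lam * Wf T ω) ∂μ) * c0 := by
              rw [integral_congr_ae (Filter.Eventually.of_forall hsum2)]
          _ ≤ c0^n * c0 := by
              refine mul_le_mul_of_nonneg_right ?_ hc0_0
              exact ih
          _ = c0^(n+1) := (pow_succ c0 n).symm
    set aa := Real.sqrt (2*N*γ) * sp with haa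
    have hγpos : 0 < γ := by
      rw [hγ]; apply Real.log_pos; rw [lt_div_iff₀ hδ0]; linarith
    have h2Nγ : (0:ℝ) ≤ 2 * N * γ := by positivity
    have haapos : 0 < aa := mul_pos (Real.sqrt_pos.mpr (by positivity)) hsppos
    have haasq : aa^2 = 2 * N * γ * sp^2 := by
      rw [haa, mul_pow, Real.sq_sqrt h2Nγ]
    -- one-sided Chernoff bound
    have honeside : ∀ T : ℕ, 2 ≤ T → T ≤ N + 1 → ∀ sg : ℝ, sg = 1 ∨ sg = -1 →
        (μ {ω | aa ≤ sg * Wf T ω}).toReal ≤ δ / 2 := by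
      intro T hT2 hTN sg hsg
      have hTn : T = (T - 1) + 1 := by omega
      set n := T - 1 with hn
      have hn1 : 1 ≤ n := by omega
      have hnN : n ≤ N := by omega
      have hnpos : (0:ℝ) < n := by exact_mod_cast hn1
      have hnne : (n:ℝ) ≠ 0 := ne_of_gt hnpos
      have hspne : sp ≠ 0 := ne_of_gt hsppos
      set lam := aa / (n * sp^2) with hlam
      have hlampos : 0 < lam := div_pos haapos (by positivity)
      have habs_sg : |sg| = 1 := by rcases hsg with rfl | rfl <;> norm_num
      have hsg2 : sg^2 = 1 := by rcases hsg with rfl | rfl <;> norm_num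
      set f : Ω → ℝ := fun ω => Real.exp (lam * (sg * Wf T ω)) with hfdef
      have hfm : Measurable f :=
        Real.measurable_exp.comp (((hWm T).const_mul sg).const_mul lam)
      have hfb : ∀ ω, |f ω| ≤ Real.exp (|lam| * (T * sp)) := by
        intro ω
        rw [abs_of_nonneg (Real.exp_nonneg _)]
        apply Real.exp_le_exp.mpr
        calc lam * (sg * Wf T ω) ≤ |lam * (sg * Wf T ω)| := le_abs_self _
          _ = |lam| * (|sg| * |Wf T ω|) := by rw [abs_mul, abs_mul]
          _ ≤ |lam| * (T * sp) := by
              rw [habs_sg, one_mul]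
              exact mul_le_mul_of_nonneg_left (hWb T ω) (abs_nonneg _)
      have hfint : Integrable f μ := hInt f _ hfm hfb
      have hfnn : 0 ≤ᵐ[μ] f := Filter.Eventually.of_forall fun ω => Real.exp_nonneg _
      have hmgfT : ∫ ω, f ω ∂μ ≤ Real.exp (lam^2*sp^2/2)^n := by
        have hfeq : f = fun ω => Real.exp ((sg * lam) * Wf T ω) := by
          funext ω; rw [hfdef]; ring_nf
        have h1 := hmgf (sg * lam) n
        rw [← hTn] at h1
        have h2 : (sg * lam)^2 = lam^2 := by rw [mul_pow, hsg2, one_mul]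
        rw [h2] at h1
        rw [hfeq]
        exact h1
      have hmkv := mul_meas_ge_le_integral_of_nonneg hfnn hfint (Real.exp (lam * aa))
      have hseteq : {ω | Real.exp (lam * aa) ≤ f ω} = {ω | aa ≤ sg * Wf T ω} := by
        ext ω
        simp only [Set.mem_setOf_eq, hfdef, Real.exp_le_exp]
        exact ⟨fun hh => le_of_mul_le_mul_left hh hlampos,
          fun hh => mul_le_mul_of_nonneg_left hh hlampos.le⟩
      rw [hseteq] at hmkv
      have hexp_pos : (0:ℝ) < Real.exp (lam * aa) := Real.exp_pos _
      have hstep1 : (μ {ω | aa ≤ sg * Wf T ω}).toReal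
          ≤ Real.exp (lam^2*sp^2/2)^n / Real.exp (lam * aa) := by
        rw [le_div_iff₀ hexp_pos]
        calc (μ {ω | aa ≤ sg * Wf T ω}).toReal * Real.exp (lam * aa)
            = Real.exp (lam * aa) * (μ {ω | aa ≤ sg * Wf T ω}).toReal := by ring
          _ ≤ ∫ ω, f ω ∂μ := hmkv
          _ ≤ Real.exp (lam^2*sp^2/2)^n := hmgfT
      have hpow : Real.exp (lam^2*sp^2/2)^n = Real.exp (n * (lam^2*sp^2/2)) := by
        rw [Real.exp_nat_mul]
      have hdiv : Real.exp (n * (lam^2*sp^2/2)) / Real.exp (lam * aa)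
          = Real.exp (n * (lam^2*sp^2/2) - lam * aa) := (Real.exp_sub _ _).symm
      have hexpr : (n:ℝ) * (lam^2*sp^2/2) - lam * aa = -(aa^2/(2*n*sp^2)) := by
        rw [hlam]; field_simp; ring
      have hexpr2 : -(aa^2/(2*(n:ℝ)*sp^2)) = -((N:ℝ)*γ/(n:ℝ)) := by
        rw [haasq]; field_simp
      have hle_exp : Real.exp (-((N:ℝ)*γ/(n:ℝ))) ≤ Real.exp (-γ) := by
        apply Real.exp_le_exp.mpr
        rw [neg_le_neg_iff]
        rw [le_div_iff₀ hnpos]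
        have hNn : (n:ℝ) ≤ (N:ℝ) := by exact_mod_cast hnN
        nlinarith
      have hexp_gamma : Real.exp (-γ) = δ / 2 := by
        rw [hγ, Real.exp_neg, Real.exp_log (by positivity)]
        rw [inv_div]
      calc (μ {ω | aa ≤ sg * Wf T ω}).toReal
          ≤ Real.exp (lam^2*sp^2/2)^n / Real.exp (lam * aa) := hstep1
        _ = Real.exp ((n:ℝ) * (lam^2*sp^2/2) - lam * aa) := by rw [hpow, hdiv]
        _ = Real.exp (-((N:ℝ)*γ/(n:ℝ))) := by rw [hexpr, hexpr2]
        _ ≤ Real.exp (-γ) := hle_exp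
        _ = δ / 2 := hexp_gamma
    -- two-sided bound for each time
    have hbadT : ∀ T : ℕ, 2 ≤ T → T ≤ N + 1 →
        μ {ω | aa < |Wf T ω|} ≤ ENNReal.ofReal δ := by
      intro T h2 h3
      have hsub : {ω | aa < |Wf T ω|}
          ⊆ {ω | aa ≤ (1:ℝ) * Wf T ω} ∪ {ω | aa ≤ (-1:ℝ) * Wf T ω} := by
        intro ω hω
        simp only [Set.mem_setOf_eq, Set.mem_union, one_mul, neg_one_mul] at hω ⊢
        rcases le_or_gt 0 (Wf T ω) with hW | hW
        · left; rw [abs_of_nonneg hW] at hω; linarith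
        · right; rw [abs_of_neg hW] at hω; linarith
      have hone : ∀ sg : ℝ, sg = 1 ∨ sg = -1 →
          μ {ω | aa ≤ sg * Wf T ω} ≤ ENNReal.ofReal (δ/2) := by
        intro sg hsg
        have := honeside T h2 h3 sg hsg
        calc μ {ω | aa ≤ sg * Wf T ω}
            = ENNReal.ofReal ((μ {ω | aa ≤ sg * Wf T ω}).toReal) :=
              (ENNReal.ofReal_toReal (measure_ne_top μ _)).symm
          _ ≤ ENNReal.ofReal (δ/2) := ENNReal.ofReal_le_ofReal this
      calc μ {ω | aa < |Wf T ω|}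
          ≤ μ ({ω | aa ≤ (1:ℝ) * Wf T ω} ∪ {ω | aa ≤ (-1:ℝ) * Wf T ω}) := measure_mono hsub
        _ ≤ μ {ω | aa ≤ (1:ℝ) * Wf T ω} + μ {ω | aa ≤ (-1:ℝ) * Wf T ω} := measure_union_le _ _
        _ ≤ ENNReal.ofReal (δ/2) + ENNReal.ofReal (δ/2) :=
            add_le_add (hone 1 (Or.inl rfl)) (hone (-1) (Or.inr rfl))
        _ = ENNReal.ofReal δ := by
            rw [← ENNReal.ofReal_add (by positivity) (by positivity)]
            norm_num
    -- union bound and conclusion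
    set Bad := ⋃ T ∈ Finset.Icc 2 (N+1), {ω | aa < |Wf T ω|} with hBad
    have hBadm : MeasurableSet Bad := by
      refine Finset.measurableSet_biUnion _ fun T _ => ?_
      exact measurableSet_lt measurable_const (hWm T).abs
    have hBadle : μ Bad ≤ ENNReal.ofReal ((N:ℝ) * δ) := by
      calc μ Bad ≤ ∑ T ∈ Finset.Icc 2 (N+1), μ {ω | aa < |Wf T ω|} :=
            measure_biUnion_finset_le _ _
        _ ≤ ∑ _T ∈ Finset.Icc 2 (N+1), ENNReal.ofReal δ := by
            refine Finset.sum_le_sum fun T hT => ?_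
            simp only [Finset.mem_Icc] at hT
            exact hbadT T hT.1 hT.2
        _ = (N : ENNReal) * ENNReal.ofReal δ := by
            rw [Finset.sum_const, Nat.card_Icc]
            have hcard : N + 1 + 1 - 2 = N := by omega
            rw [hcard, nsmul_eq_mul]
        _ = ENNReal.ofReal ((N:ℝ) * δ) := by
            rw [ENNReal.ofReal_mul (by positivity : (0:ℝ) ≤ (N:ℝ)), ENNReal.ofReal_natCast]
    have hsub2 : Badᶜ ⊆ {ω | ∀ cc, 1 ≤ cc → cc ≤ c ω →
        |∑ k ∈ Finset.Icc 1 cc,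
            (h y - h x + ∑ t ∈ Finset.Ico (ts k ω) (te k ω), (r (st t ω) (ac t ω) - ρ))|
          ≤ (Real.sqrt (2 * N * γ) + 1) * sp} := by
      intro ω hω cc hcc1 hcc2
      obtain ⟨⟨hge2, hleN⟩, hident⟩ := hkeyid ω cc hcc1 hcc2
      show |_| ≤ _
      rw [hident]
      have hnotbad : ω ∉ {ω' | aa < |Wf (te cc ω) ω'|} := by
        intro hmem
        refine hω ?_
        rw [hBad]
        exact Set.mem_iUnion₂.mpr ⟨te cc ω, Finset.mem_Icc.mpr ⟨hge2, hleN⟩, hmem⟩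
      have hle : |Wf (te cc ω) ω| ≤ aa := not_lt.mp hnotbad
      calc |Wf (te cc ω) ω| ≤ aa := hle
        _ ≤ (Real.sqrt (2 * N * γ) + 1) * sp := by
            rw [haa]
            exact mul_le_mul_of_nonneg_right (by linarith) hsp0
    calc ENNReal.ofReal (1 - N * δ)
        = 1 - ENNReal.ofReal ((N:ℝ) * δ) := by
          rw [ENNReal.ofReal_sub 1 (by positivity), ENNReal.ofReal_one]
      _ ≤ 1 - μ Bad := tsub_le_tsub le_rfl hBadle
      _ = μ Badᶜ := (prob_compl_eq_one_sub hBadm).symm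
      _ ≤ μ {ω | ∀ cc, 1 ≤ cc → cc ≤ c ω →
            |∑ k ∈ Finset.Icc 1 cc,
                (h y - h x + ∑ t ∈ Finset.Ico (ts k ω) (te k ω), (r (st t ω) (ac t ω) - ρ))|
              ≤ (Real.sqrt (2 * N * γ) + 1) * sp} := measure_mono hsub2
end
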